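/- arXiv:2604.06590 — 8 statements merged into one kernel-verified Lean document; each statement's English description precedes it below -/
import Mathlib

section
/- For all odd n ≥ 3 and all q ∈ (0,1), it holds that 2^{n-2}·(Φ_q(g_n) - Φ_q(Maj_n)) = (1-2q)·Pr[z = z'] + q^n - (1-q)^n, where z and z' are independent Binomial((n-1)/2, q) random variables. -/
open Finset

noncomputable def chi (b : Bool) : ℝ := if b then 1 else -1

noncomputable def maj (n : ℕ) (x : Fin n → Bool) : ℝ :=
  Real.sign (∑ i, chi (x i))

def eVec (n : ℕ) : Fin n → Bool := fun i => decide ((i : ℕ) < (n - 1) / 2 + 1)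

noncomputable def gfun (n : ℕ) (x : Fin n → Bool) : ℝ :=
  if x = eVec n ∨ x = (fun i => !(eVec n i)) then - maj n x else maj n x

noncomputable def stab (n : ℕ) (ρ : ℝ) (f : (Fin n → Bool) → ℝ) : ℝ :=
  (1 / 2 ^ n) * ∑ x : Fin n → Bool, ∑ z : Fin n → Bool,
    (∏ i, if z i then (1 - ρ) / 2 else (1 + ρ) / 2) * (f x * f (fun i => xor (x i) (z i)))

noncomputable def phi (n : ℕ) (p : ℝ) (f : (Fin n → Bool) → ℝ) : ℝ :=
  ∑ s : Fin n → Bool, (∏ i, if s i then p else 1 - p) *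
    ((1 / 2 ^ n) * ∑ x : Fin n → Bool,
      |(1 / 2 ^ n) * ∑ z : Fin n → Bool, f (fun i => if s i then x i else z i)|)

noncomputable def binomPMF (m : ℕ) (q : ℝ) (k : ℕ) : ℝ :=
  (m.choose k : ℝ) * q ^ k * (1 - q) ^ (m - k)

noncomputable def binomCollision (m : ℕ) (q : ℝ) : ℝ :=
  ∑ k ∈ Finset.range (m + 1), (binomPMF m q k) ^ 2

/-!
Write `g = Maj - 2·1_e + 2·1_{-e}` and fix the revealed set `S` and the revealed values `x_S`.
Summing `Maj` over the hidden coordinates gives `2^{|S|}·E` with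
`E = ∑_{z ∈ {±1}^{S̄}} sign(c + ∑ z)` and `c = ∑_{i ∈ S} x_i`. For `∅ ≠ S ≠ [n]`, `E` has the sign
of `c` and is even (`c + |S̄|` is odd), and only `x_S = ±e_S` see the perturbation; for them the
absolute value moves by exactly `2·2^{|S|}·τ(∑_{i ∈ S} e_i)`, where `τ t = 1` if `t ≤ 0` and `-1`
otherwise. For `S = ∅` and `S = [n]` nothing changes, which costs the boundary terms
`q^n - (1-q)^n`. So the main term is `E τ(J - K)` with independent `J = |S ∩ A| ~ Bin(h+1, q)` and
`K = |S ∩ B| ~ Bin(h, q)`. Pascal's rule writes `J = J' + ξ` with `J' ~ Bin(h, q)` and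
`ξ ~ Bernoulli(q)`, and by `τ(t + 1) = -τ(-t)` and `τ t + τ(-t) = 2·[t = 0]` we get
`E τ(J' - K) = Pr[J' = K] = -E τ(J' + 1 - K)`, hence `E τ(J - K) = (1 - 2q) Pr[J' = K]`.
-/

def intChi (b : Bool) : ℤ := if b then 1 else -1

lemma chi_eq_intChi (b : Bool) : chi b = intChi b := by
  cases b <;> simp [chi, intChi]

lemma intChi_not (b : Bool) : intChi (!b) = -intChi b := by
  cases b <;> simp [intChi]

lemma sum_intChi {ι : Type*} [Fintype ι] (y : ι → Bool) :
    ∑ i, intChi (y i) = #{i | y i} - #{i | ¬ y i} := by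
  simp [intChi, sum_ite, sub_eq_add_neg]

lemma even_sum_intChi_add_card {ι : Type*} (t : Finset ι) (x : ι → Bool) :
    Even (∑ i ∈ t, intChi (x i) + #t) := by
  rw [card_eq_sum_ones, Nat.cast_sum, ← sum_add_distrib]
  refine even_sum _ fun i _ => ?_
  cases x i <;> simp [intChi]

lemma maj_eq_sign (n : ℕ) (x : Fin n → Bool) : maj n x = (∑ i, intChi (x i)).sign := by
  simp only [maj, chi_eq_intChi, ← Int.cast_sum, Real.sign_intCast]

def nonposSign (t : ℤ) : ℝ := if t ≤ 0 then 1 else -1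

-- Evenness rules out `E = 1`, the only integer with `|E - 2| - |E| ∉ {2, -2}`.
lemma abs_mul_sub_two_mul_sub_abs_mul {a : ℝ} (ha : 0 < a) {E : ℤ} (hE : Even E) :
    |a * E - 2 * a| - |a * E| = 2 * a * nonposSign E := by
  unfold nonposSign
  split_ifs with h
  · have : (E : ℝ) ≤ 0 := by exact_mod_cast h
    rw [abs_of_nonpos (by nlinarith), abs_of_nonpos (by nlinarith)]
    ring
  · obtain ⟨k, rfl⟩ := hE
    have : (2 : ℝ) ≤ (k + k : ℤ) := by exact_mod_cast (by omega : 2 ≤ k + k)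
    rw [abs_of_nonneg (by nlinarith), abs_of_nonneg (by nlinarith)]
    ring

def sumSign (m : ℕ) (d : ℤ) : ℤ := ∑ z : Fin m → Bool, (d + ∑ i, intChi (z i)).sign

lemma sumSign_zero_left (d : ℤ) : sumSign 0 d = d.sign := by
  simp [sumSign]

lemma sumSign_succ (m : ℕ) (d : ℤ) :
    sumSign (m + 1) d = sumSign m (d + 1) + sumSign m (d - 1) := by
  rw [sumSign, ← (Fin.consEquiv fun _ => Bool).sum_comp, Fintype.sum_prod_type, Fintype.sum_bool]
  simp only [sumSign, Fin.consEquiv, Equiv.coe_fn_mk, Fin.sum_univ_succ, Fin.cons_zero,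
    Fin.cons_succ, intChi, Bool.false_eq_true, ↓reduceIte]
  congr 1 <;> refine sum_congr rfl fun z _ => congrArg Int.sign ?_ <;> ring

lemma sumSign_neg (m : ℕ) (d : ℤ) : sumSign m (-d) = -sumSign m d := by
  rw [sumSign, sumSign, ← sum_neg_distrib]
  refine Fintype.sum_equiv (Equiv.arrowCongr (Equiv.refl _) (Equiv.boolNot)) _ _ fun z => ?_
  simp only [Equiv.arrowCongr_apply, Equiv.refl_symm, Equiv.coe_refl, CompTriple.comp_eq,
    Function.comp_apply, Equiv.boolNot_apply, intChi_not, sum_neg_distrib, ← Int.sign_neg]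
  ring_nf

lemma sumSign_zero_right (m : ℕ) : sumSign m 0 = 0 := by
  have h := sumSign_neg m 0
  rw [neg_zero] at h
  omega

lemma sumSign_pos (m : ℕ) {d : ℤ} (hd : 0 < d) : 0 < sumSign m d := by
  induction m generalizing d with
  | zero => simp [sumSign_zero_left, Int.sign_eq_one_of_pos hd]
  | succ m ih =>
    rw [sumSign_succ]
    rcases (Int.add_one_le_of_lt hd).eq_or_lt with h | h
    · rw [← h, zero_add, sub_self, sumSign_zero_right, add_zero]
      exact ih (by norm_num)
    · linarith [ih (d := d + 1) (by omega), ih (d := d - 1) (by omega)]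

lemma sumSign_nonpos_iff (m : ℕ) (d : ℤ) : sumSign m d ≤ 0 ↔ d ≤ 0 := by
  refine ⟨fun h => not_lt.1 fun hd => (sumSign_pos m hd).not_ge h, fun hd => ?_⟩
  rcases hd.eq_or_lt with rfl | hd
  · rw [sumSign_zero_right]
  · have := sumSign_pos m (neg_pos.2 hd)
    rw [sumSign_neg] at this
    omega

lemma nonposSign_sumSign (m : ℕ) (d : ℤ) : nonposSign (sumSign m d) = nonposSign d := by
  simp only [nonposSign, sumSign_nonpos_iff]

lemma even_sumSign {m : ℕ} (hm : m ≠ 0) {d : ℤ} (hd : Odd (d + m)) : Even (sumSign m d) := by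
  induction m, Nat.one_le_iff_ne_zero.2 hm using Nat.le_induction generalizing d with
  | base =>
    obtain ⟨k, rfl⟩ : Even d := by
      obtain ⟨k, hk⟩ := hd
      exact ⟨k, by push_cast at hk; omega⟩
    rw [sumSign_succ, sumSign_zero_left, sumSign_zero_left]
    rcases lt_trichotomy k 0 with hk | rfl | hk
    · rw [Int.sign_eq_neg_one_of_neg (by omega), Int.sign_eq_neg_one_of_neg (by omega)]; decide
    · decide
    · rw [Int.sign_eq_one_of_pos (by omega), Int.sign_eq_one_of_pos (by omega)]; decide
  | succ m hm1 ih =>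
    have h₁ : d + 1 + m = d + ↑(m + 1) := by push_cast; ring
    have h₂ : d - 1 + m = d + ↑(m + 1) - 2 := by push_cast; ring
    rw [sumSign_succ]
    exact (ih (by omega) (h₁ ▸ hd)).add (ih (by omega) (h₂ ▸ hd.sub_even even_two))

lemma sum_sign_add_sum_intChi {κ : Type*} [Fintype κ] [DecidableEq κ] (d : ℤ) :
    ∑ v : κ → Bool, (d + ∑ i, intChi (v i)).sign = sumSign (Fintype.card κ) d := by
  refine Fintype.sum_equiv ((Fintype.equivFin κ).arrowCongr (Equiv.refl Bool)) _ _ fun v => ?_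
  simp only [Equiv.arrowCongr_apply, Equiv.coe_refl, Function.comp_apply, id_eq]
  rw [(Fintype.equivFin κ).symm.sum_comp (fun i => intChi (v i))]

section Cube

variable {ι : Type*} [Fintype ι] [DecidableEq ι]

def merge (s x z : ι → Bool) : ι → Bool := fun i => if s i then x i else z i

-- The decidability instance is a parameter so that the lemma also rewrites filters over `Fin n`,
-- which are elaborated with `Nat.decidableForallFin`.
lemma card_filter_forall_imp_eq (s y : ι → Bool)
    [DecidablePred fun z : ι → Bool => ∀ i, s i → z i = y i] :
    #{z : ι → Bool | ∀ i, s i → z i = y i} = 2 ^ #{i | ¬ s i} := by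
  have : ({z : ι → Bool | ∀ i, s i → z i = y i} : Finset (ι → Bool)) =
      Fintype.piFinset fun i => if s i then {y i} else univ := by
    ext z
    simp only [mem_filter, mem_univ, true_and, Fintype.mem_piFinset]
    refine forall_congr' fun i => ?_
    split_ifs <;> simp [*]
  rw [this, Fintype.card_piFinset]
  simp [apply_ite card, prod_ite]

lemma card_filter_merge_eq (s x y : ι → Bool) :
    #{z | merge s x z = y} = if ∀ i, s i → x i = y i then 2 ^ #{i | s i} else 0 := by
  split_ifs with hxy
  · convert card_filter_forall_imp_eq (fun i => !s i) y using 2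
    · ext z
      simp only [merge, funext_iff, mem_filter, mem_univ, true_and]
      refine forall_congr' fun i => ?_
      cases h : s i <;> simp [h, hxy i]
    · simp
  · simp only [not_forall] at hxy
    obtain ⟨i, hi, hne⟩ := hxy
    refine card_eq_zero.2 (filter_eq_empty_iff.2 fun z _ h => hne ?_)
    simpa [merge, hi] using congrFun h i

def bernoulliWeight (p : ℝ) (s : ι → Bool) : ℝ := ∏ i, if s i then p else 1 - p

lemma bernoulliWeight_eq (p : ℝ) (s : ι → Bool) :
    bernoulliWeight p s = p ^ #{i | s i} * (1 - p) ^ (Fintype.card ι - #{i | s i}) := by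
  rw [bernoulliWeight, prod_ite, prod_const, prod_const, filter_not,
    card_sdiff_of_subset (filter_subset _ _)]
  rfl

lemma sum_bernoulliWeight_mul (p : ℝ) (G : ℕ → ℝ) :
    ∑ s : ι → Bool, bernoulliWeight p s * G #{i | s i} =
      ∑ k ∈ range (Fintype.card ι + 1), binomPMF (Fintype.card ι) p k * G k := by
  let toFinset : (ι → Bool) ≃ Finset ι :=
    { toFun := fun s => {i | s i}
      invFun := fun u i => i ∈ u
      left_inv := fun s => by ext; simp
      right_inv := fun u => by ext; simp }
  rw [← toFinset.symm.sum_comp, ← powerset_univ]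
  simp only [bernoulliWeight_eq, toFinset, Equiv.coe_fn_symm_mk, decide_eq_true_eq,
    filter_mem_eq_inter, univ_inter]
  rw [sum_powerset_apply_card (fun k => p ^ k * (1 - p) ^ (Fintype.card ι - k) * G k), card_univ]
  refine sum_congr rfl fun k _ => ?_
  rw [nsmul_eq_mul, binomPMF]
  ring

lemma sum_sum_bernoulliWeight_mul {κ : Type*} [Fintype κ] [DecidableEq κ] (p : ℝ)
    (G : ℕ → ℕ → ℝ) :
    ∑ u : ι → Bool, ∑ v : κ → Bool,
        bernoulliWeight p u * bernoulliWeight p v * G #{i | u i} #{i | v i} =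
      ∑ j ∈ range (Fintype.card ι + 1), ∑ k ∈ range (Fintype.card κ + 1),
        binomPMF (Fintype.card ι) p j * binomPMF (Fintype.card κ) p k * G j k := by
  have inner (u : ι → Bool) := sum_bernoulliWeight_mul (ι := κ) p (G #{i | u i})
  simp_rw [mul_assoc, ← mul_sum, inner]
  rw [sum_bernoulliWeight_mul p fun j => ∑ k ∈ range _, binomPMF _ p k * G j k]

lemma sum_bernoulliWeight_mul_sum_intChi (p : ℝ) (y : ι → Bool) (F : ℤ → ℝ) :
    ∑ s : ι → Bool, bernoulliWeight p s * F (∑ i with s i, intChi (y i)) =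
      ∑ j ∈ range (#{i | y i} + 1), ∑ k ∈ range (#{i | ¬ y i} + 1),
        binomPMF #{i | y i} p j * binomPMF #{i | ¬ y i} p k * F (j - k) := by
  set e := Equiv.piEquivPiSubtypeProd (fun i => y i = true) fun _ => Bool
  have hw (s : ι → Bool) :
      bernoulliWeight p s = bernoulliWeight p (e s).1 * bernoulliWeight p (e s).2 :=
    (Fintype.prod_subtype_mul_prod_subtype _ _).symm
  have hc (s : ι → Bool) : ∑ i with s i, intChi (y i) =
      (#{i | (e s).1 i} : ℤ) - #{i | (e s).2 i} := by
    rw [sum_filter, ← Fintype.sum_subtype_add_sum_subtype (fun i => y i = true), sub_eq_add_neg]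
    congr 1
    · rw [card_filter, Nat.cast_sum]
      refine sum_congr rfl fun i _ => ?_
      simp [e, intChi, i.2]
    · rw [card_filter, Nat.cast_sum, ← sum_neg_distrib]
      refine sum_congr rfl fun i _ => ?_
      simp [e, intChi, eq_false_of_ne_true i.2, apply_ite Neg.neg]
  rw [← e.symm.sum_comp, Fintype.sum_prod_type]
  simp only [hw, hc, Equiv.apply_symm_apply]
  rw [sum_sum_bernoulliWeight_mul p fun j k => F (j - k)]
  simp only [Fintype.card_subtype]

end Cube

lemma binomPMF_succ_succ (m j : ℕ) (p : ℝ) :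
    binomPMF (m + 1) p (j + 1) = p * binomPMF m p j + (1 - p) * binomPMF m p (j + 1) := by
  simp only [binomPMF, Nat.choose_succ_succ, Nat.cast_add, Nat.succ_sub_succ]
  rcases lt_or_ge j m with hj | hj
  · obtain ⟨r, rfl⟩ := Nat.exists_eq_add_of_lt hj
    rw [show j + r + 1 - j = r + 1 by omega, show j + r + 1 - (j + 1) = r by omega]
    ring
  · rw [Nat.choose_eq_zero_of_lt (by omega : m < j + 1)]
    ring

lemma binomPMF_of_lt {m k : ℕ} (p : ℝ) (h : m < k) : binomPMF m p k = 0 := by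
  rw [binomPMF, Nat.choose_eq_zero_of_lt h, Nat.cast_zero, zero_mul, zero_mul]

lemma sum_binomPMF_succ_mul (m : ℕ) (p : ℝ) (G : ℕ → ℝ) :
    ∑ j ∈ range (m + 2), binomPMF (m + 1) p j * G j =
      p * ∑ j ∈ range (m + 1), binomPMF m p j * G (j + 1) +
        (1 - p) * ∑ j ∈ range (m + 1), binomPMF m p j * G j := by
  have h₀ : binomPMF (m + 1) p 0 = (1 - p) * binomPMF m p 0 := by simp [binomPMF, pow_succ']
  have hlast : ∑ j ∈ range (m + 1), binomPMF m p j * G j =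
      ∑ j ∈ range (m + 1), binomPMF m p (j + 1) * G (j + 1) + binomPMF m p 0 * G 0 := by
    rw [← sum_range_succ' (fun j => binomPMF m p j * G j), sum_range_succ _ (m + 1),
      binomPMF_of_lt p (Nat.lt_succ_self m), zero_mul, add_zero]
  rw [sum_range_succ', h₀, hlast]
  simp only [binomPMF_succ_succ, add_mul, mul_add, sum_add_distrib, mul_sum, mul_assoc]
  ring

lemma sum_sum_mul_nonposSign (S : Finset ℕ) (a : ℕ → ℝ) :
    ∑ j ∈ S, ∑ k ∈ S, a j * a k * nonposSign (j - k) = ∑ j ∈ S, a j ^ 2 := by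
  have hsymm (j k : ℕ) : nonposSign (j - k) + nonposSign (k - j) = if j = k then 2 else 0 := by
    unfold nonposSign
    split_ifs <;> first | omega | norm_num
  have hswap : ∑ j ∈ S, ∑ k ∈ S, a j * a k * nonposSign (k - j) =
      ∑ j ∈ S, ∑ k ∈ S, a j * a k * nonposSign (j - k) := by
    rw [sum_comm]
    exact sum_congr rfl fun j _ => sum_congr rfl fun k _ => by ring
  have hsum : ∑ j ∈ S, ∑ k ∈ S, a j * a k * (nonposSign (j - k) + nonposSign (k - j)) =
      2 * ∑ j ∈ S, a j ^ 2 := by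
    rw [mul_sum]
    refine sum_congr rfl fun j hj => ?_
    simp only [hsymm, mul_ite, mul_zero, sum_ite_eq, hj, ↓reduceIte]
    ring
  simp only [mul_add, sum_add_distrib, hswap] at hsum
  linarith

lemma sum_sum_mul_nonposSign_add_one (S : Finset ℕ) (a : ℕ → ℝ) :
    ∑ j ∈ S, ∑ k ∈ S, a j * a k * nonposSign (j + 1 - k) = -∑ j ∈ S, a j ^ 2 := by
  have h (j k : ℕ) : nonposSign (j + 1 - k) = -nonposSign (k - j) := by
    unfold nonposSign
    split_ifs <;> first | omega | norm_num
  simp only [h, mul_neg, sum_neg_distrib]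
  rw [sum_comm, ← sum_sum_mul_nonposSign S a]
  exact congrArg _ (sum_congr rfl fun j _ => sum_congr rfl fun k _ => by ring)

lemma sum_sum_binomPMF_mul_nonposSign (m : ℕ) (p : ℝ) :
    ∑ j ∈ range (m + 2), ∑ k ∈ range (m + 1),
      binomPMF (m + 1) p j * binomPMF m p k * nonposSign (j - k) =
        (1 - 2 * p) * binomCollision m p := by
  have h₀ := sum_sum_mul_nonposSign (range (m + 1)) (binomPMF m p)
  have h₁ := sum_sum_mul_nonposSign_add_one (range (m + 1)) (binomPMF m p)
  simp only [mul_assoc, ← mul_sum] at h₀ h₁ ⊢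
  rw [sum_binomPMF_succ_mul]
  push_cast
  rw [h₀, h₁, binomCollision]
  ring

section Majority

variable {n : ℕ}

-- `2 ^ n` times the inner average `E_{x_S̄} f (x_S ∘ x_S̄)` of `phi`, for `S = {i | s i}`.
def restrictSum (f : (Fin n → Bool) → ℝ) (s x : Fin n → Bool) : ℝ :=
  ∑ z, f (merge s x z)

lemma phi_eq_sum_abs_restrictSum (p : ℝ) (f : (Fin n → Bool) → ℝ) :
    phi n p f = (∑ s, bernoulliWeight p s * ∑ x, |restrictSum f s x|) / 4 ^ n := by
  simp only [phi, restrictSum, bernoulliWeight, abs_mul,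
    abs_of_pos (by positivity : (0 : ℝ) < 1 / 2 ^ n), ← mul_sum, sum_div]
  refine sum_congr rfl fun s _ => ?_
  rw [show (4 : ℝ) ^ n = 2 ^ n * 2 ^ n by rw [← mul_pow]; norm_num]
  field_simp
  rfl

lemma restrictSum_maj (s x : Fin n → Bool) :
    restrictSum (maj n) s x =
      2 ^ #{i | s i} * sumSign #{i | ¬ s i} (∑ i with s i, intChi (x i)) := by
  set e := Equiv.piEquivPiSubtypeProd (fun i => s i = true) fun _ => Bool
  have hmaj (z : Fin n → Bool) : maj n (merge s x z) =
      (∑ i with s i, intChi (x i) + ∑ i, intChi ((e z).2 i)).sign := by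
    rw [maj_eq_sign, ← Fintype.sum_subtype_add_sum_subtype (fun i => s i = true),
      sum_subtype (p := fun i => s i = true) _ (by simp) (fun i => intChi (x i))]
    congr 3 <;> refine sum_congr rfl fun i _ => ?_
    · simp [merge, i.2]
    · simp [merge, e, i.2]
  rw [restrictSum, ← e.symm.sum_comp, Fintype.sum_prod_type]
  simp only [hmaj, Equiv.apply_symm_apply, ← Int.cast_sum, sum_sign_add_sum_intChi, sum_const,
    card_univ, Fintype.card_fun, Fintype.card_bool, Fintype.card_subtype]
  push_cast [nsmul_eq_mul]
  rfl

lemma card_eVec (hn : Odd n) : #{i | eVec n i} = (n - 1) / 2 + 1 := by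
  simp only [eVec, decide_eq_true_eq, Fin.card_filter_val_lt]
  obtain ⟨k, rfl⟩ := hn
  omega

lemma card_not_eVec (hn : Odd n) : #{i | ¬ eVec n i} = (n - 1) / 2 := by
  rw [filter_not, card_sdiff_of_subset (filter_subset _ _), card_eVec hn, card_univ,
    Fintype.card_fin]
  obtain ⟨k, rfl⟩ := hn
  omega

lemma sum_intChi_eVec (hn : Odd n) : ∑ i, intChi (eVec n i) = 1 := by
  rw [sum_intChi, card_eVec hn, card_not_eVec hn]
  push_cast
  ring

lemma maj_eVec (hn : Odd n) : maj n (eVec n) = 1 := by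
  simp [maj_eq_sign, sum_intChi_eVec hn]

lemma maj_not_eVec (hn : Odd n) : maj n (fun i => !eVec n i) = -1 := by
  simp [maj_eq_sign, intChi_not, sum_neg_distrib, sum_intChi_eVec hn]

lemma eVec_ne_not (hn : n ≠ 0) : eVec n ≠ fun i => !eVec n i := fun h => by
  simpa using congrFun h ⟨0, Nat.pos_of_ne_zero hn⟩

lemma gfun_eq (hn : Odd n) (y : Fin n → Bool) :
    gfun n y = maj n y - 2 * (if y = eVec n then 1 else 0) +
      2 * (if y = (fun i => !eVec n i) then 1 else 0) := by
  have hne := eVec_ne_not hn.pos.ne'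
  unfold gfun
  by_cases h₁ : y = eVec n
  · subst h₁
    simp only [hne, or_false, ↓reduceIte, maj_eVec hn]
    norm_num
  by_cases h₂ : y = fun i => !eVec n i
  · subst h₂
    simp only [hne.symm, or_true, ↓reduceIte, maj_not_eVec hn]
    norm_num
  simp [h₁, h₂]

lemma restrictSum_gfun (hn : Odd n) (s x : Fin n → Bool) :
    restrictSum (gfun n) s x = restrictSum (maj n) s x - 2 * #{z | merge s x z = eVec n} +
      2 * #{z | merge s x z = fun i => !eVec n i} := by
  simp only [restrictSum, gfun_eq hn, sum_add_distrib, sum_sub_distrib, ← mul_sum, sum_boole]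

lemma sum_abs_restrictSum_gfun_sub_of_top :
    ∑ x, (|restrictSum (gfun n) (fun _ => true) x| -
      |restrictSum (maj n) (fun _ => true) x|) = 0 := by
  have hR (f : (Fin n → Bool) → ℝ) (x : Fin n → Bool) :
      restrictSum f (fun _ => true) x = 2 ^ n * f x := by
    unfold restrictSum merge
    simp
  refine sum_eq_zero fun x _ => ?_
  rw [hR, hR, abs_mul, abs_mul, sub_eq_zero]
  unfold gfun
  split_ifs <;> simp

lemma sum_abs_restrictSum_gfun_sub_of_bot (hn : Odd n) :
    ∑ x, (|restrictSum (gfun n) (fun _ => false) x| -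
      |restrictSum (maj n) (fun _ => false) x|) = 0 := by
  refine sum_eq_zero fun x _ => ?_
  simp [restrictSum_gfun hn, card_filter_merge_eq]

lemma sum_abs_restrictSum_gfun_sub_of_ne (hn : Odd n) {s : Fin n → Bool}
    (hbot : s ≠ fun _ => false) (htop : s ≠ fun _ => true) :
    ∑ x, (|restrictSum (gfun n) s x| - |restrictSum (maj n) s x|) =
      2 ^ (n + 2) * nonposSign (∑ i with s i, intChi (eVec n i)) := by
  set c := ∑ i with s i, intChi (eVec n i)
  obtain ⟨i₀, hi₀⟩ : ∃ i, s i := by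
    by_contra! h
    exact hbot (funext fun i => by simpa using h i)
  have hcard : #{i | s i} + #{i | ¬ s i} = n := by
    rw [card_filter_add_card_filter_not, card_univ, Fintype.card_fin]
  have hE : Even (sumSign #{i | ¬ s i} c) := by
    refine even_sumSign (fun h => htop (funext fun i => ?_)) ?_
    · simpa using filter_eq_empty_iff.1 (card_eq_zero.1 h) (mem_univ i)
    · obtain ⟨k, hk⟩ := even_sum_intChi_add_card {i | s i} (eVec n)
      obtain ⟨j, rfl⟩ := hn
      exact ⟨k + j - #{i | s i}, by omega⟩
  have hterm (x : Fin n → Bool) : |restrictSum (gfun n) s x| - |restrictSum (maj n) s x| =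
      ((if ∀ i, s i → x i = eVec n i then 1 else 0) +
        (if ∀ i, s i → x i = !eVec n i then 1 else 0)) *
        (2 * 2 ^ #{i | s i} * nonposSign c) := by
    have ha : (0 : ℝ) < 2 ^ #{i | s i} := by positivity
    rw [restrictSum_gfun hn, card_filter_merge_eq, card_filter_merge_eq, restrictSum_maj,
      ← nonposSign_sumSign #{i | ¬ s i} c, ← abs_mul_sub_two_mul_sub_abs_mul ha hE]
    by_cases h₁ : ∀ i, s i → x i = eVec n i
    · have h₂ : ¬ ∀ i, s i → x i = !eVec n i := fun h₂ => by
        simpa [h₁ i₀ hi₀] using h₂ i₀ hi₀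
      have hx : ∑ i with s i, intChi (x i) = c :=
        sum_congr rfl fun i hi => by rw [h₁ i (mem_filter.1 hi).2]
      simp only [if_pos h₁, if_neg h₂, hx]
      push_cast
      ring_nf
    by_cases h₂ : ∀ i, s i → x i = !eVec n i
    · have hx : ∑ i with s i, intChi (x i) = -c := by
        rw [← sum_neg_distrib]
        exact sum_congr rfl fun i hi => by rw [h₂ i (mem_filter.1 hi).2, intChi_not]
      simp only [if_neg h₁, if_pos h₂, hx, sumSign_neg]
      push_cast
      rw [← abs_neg, ← abs_neg (_ * -_)]
      ring_nf
    · simp [h₁, h₂]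
  have hpow : (2 : ℝ) ^ (n + 2) = 4 * (2 ^ #{i | s i} * 2 ^ #{i | ¬ s i}) := by
    rw [← pow_add, hcard]
    ring
  simp only [hterm, ← sum_mul, sum_add_distrib, sum_boole, card_filter_forall_imp_eq, hpow]
  push_cast
  ring

lemma sum_abs_restrictSum_gfun_sub (hn : Odd n) (s : Fin n → Bool) :
    ∑ x, (|restrictSum (gfun n) s x| - |restrictSum (maj n) s x|) =
      2 ^ (n + 2) * (nonposSign (∑ i with s i, intChi (eVec n i)) -
        (if s = fun _ => false then 1 else 0) + (if s = fun _ => true then 1 else 0)) := by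
  have hne : (fun _ => false) ≠ fun _ : Fin n => true := fun h => by
    simpa using congrFun h ⟨0, hn.pos⟩
  by_cases hbot : s = fun _ => false
  · subst hbot
    simp [sum_abs_restrictSum_gfun_sub_of_bot hn, hne, nonposSign]
  by_cases htop : s = fun _ => true
  · subst htop
    rw [sum_abs_restrictSum_gfun_sub_of_top]
    simp [hne.symm, nonposSign, sum_intChi_eVec hn]
  simp [sum_abs_restrictSum_gfun_sub_of_ne hn hbot htop, hbot, htop]

lemma sum_bernoulliWeight_mul_nonposSign_eVec (hn : Odd n) (p : ℝ) :
    ∑ s, bernoulliWeight p s * nonposSign (∑ i with s i, intChi (eVec n i)) =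
      (1 - 2 * p) * binomCollision ((n - 1) / 2) p := by
  rw [sum_bernoulliWeight_mul_sum_intChi, card_eVec hn, card_not_eVec hn]
  exact sum_sum_binomPMF_mul_nonposSign _ p

lemma phi_gfun_sub_phi_maj (hn : Odd n) (p : ℝ) :
    phi n p (gfun n) - phi n p (maj n) =
      2 ^ (n + 2) / 4 ^ n *
        ((1 - 2 * p) * binomCollision ((n - 1) / 2) p + p ^ n - (1 - p) ^ n) := by
  have hdiff : (∑ s, bernoulliWeight p s * ∑ x, |restrictSum (gfun n) s x|) -
      ∑ s, bernoulliWeight p s * ∑ x, |restrictSum (maj n) s x| =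
      2 ^ (n + 2) * ∑ s : Fin n → Bool, bernoulliWeight p s *
        (nonposSign (∑ i with s i, intChi (eVec n i)) -
          (if s = fun _ => false then 1 else 0) + (if s = fun _ => true then 1 else 0)) := by
    rw [← sum_sub_distrib, mul_sum]
    refine sum_congr rfl fun s _ => ?_
    rw [← mul_sub, ← sum_sub_distrib, sum_abs_restrictSum_gfun_sub hn]
    ring
  rw [phi_eq_sum_abs_restrictSum, phi_eq_sum_abs_restrictSum, ← sub_div, hdiff]
  simp only [mul_add, mul_sub, sum_add_distrib, sum_sub_distrib, mul_ite, mul_one, mul_zero,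
    sum_ite_eq', mem_univ, if_true, sum_bernoulliWeight_mul_nonposSign_eVec hn]
  simp only [bernoulliWeight, Bool.false_eq_true, if_false, if_true, prod_const, card_univ,
    Fintype.card_fin]
  ring

end Majority

theorem stmt4_general (n : ℕ) (hodd : Odd n) (hn : 3 ≤ n) (q : ℝ) :
    (2 : ℝ) ^ (n - 2) * (phi n q (gfun n) - phi n q (maj n))
      = (1 - 2 * q) * binomCollision ((n - 1) / 2) q + q ^ n - (1 - q) ^ n := by
  have hpow : (2 : ℝ) ^ (n - 2) * (2 ^ (n + 2) / 4 ^ n) = 1 := by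
    rw [mul_div_assoc', ← pow_add, show n - 2 + (n + 2) = 2 * n by omega, pow_mul]
    norm_num
  rw [phi_gfun_sub_phi_maj hodd, ← mul_assoc, hpow, one_mul]

theorem stmt4 (n : ℕ) (hodd : Odd n) (hn : 3 ≤ n) (q : ℝ) (hq0 : 0 < q) (hq1 : q < 1) :
    (2 : ℝ) ^ (n - 2) * (phi n q (gfun n) - phi n q (maj n))
      = (1 - 2 * q) * binomCollision ((n - 1) / 2) q + q ^ n - (1 - q) ^ n :=
  stmt4_general n hodd hn q
end

section
/- For any p ∈ [0,1] and any natural number h, if u ~ Binomial(h+1, p) and u' ~ Binomial(h, p) are independent, then E[(-1)^{1[u > u']}] = (1-2p)·Pr[v = v'], where v, v' are independent Binomial(h, p) random variables; moreover this also equals (1-2p)·Pr[w = w'], where w, w' are independent Binomial(h, 1-p) random variables. -/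
open Finset

lemma pmf_succ (h : ℕ) (p : ℝ) (i : ℕ) :
    binomPMF (h+1) p (i+1) = p * binomPMF h p i + (1-p) * binomPMF h p (i+1) := by
  unfold binomPMF
  rcases lt_or_ge i h with hi | hi
  · have h1 : h + 1 - (i+1) = h - i := by omega
    have h2 : h - i = (h - (i+1)) + 1 := by omega
    rw [Nat.choose_succ_succ, h1, h2]; push_cast; ring
  · have hz : h.choose (i+1) = 0 := Nat.choose_eq_zero_of_lt (by omega)
    have h1 : h + 1 - (i+1) = h - i := by omega
    rw [Nat.choose_succ_succ, hz, h1]; push_cast; ring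

lemma pmf_zero (h : ℕ) (p : ℝ) :
    binomPMF (h+1) p 0 = (1-p) * binomPMF h p 0 := by
  unfold binomPMF; simp; ring

lemma pmf_top (h : ℕ) (p : ℝ) : binomPMF h p (h+1) = 0 := by
  unfold binomPMF
  rw [Nat.choose_eq_zero_of_lt (by omega)]
  simp

lemma split_sum (h : ℕ) (p : ℝ) (F : ℕ → ℝ) :
    ∑ u ∈ Finset.range (h + 2), binomPMF (h+1) p u * F u
      = ∑ v ∈ Finset.range (h + 1),
          binomPMF h p v * ((1-p) * F v + p * F (v+1)) := by
  rw [Finset.sum_range_succ']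
  have e1 : ∀ i ∈ Finset.range (h+1),
      binomPMF (h+1) p (i+1) * F (i+1)
        = p * (binomPMF h p i * F (i+1)) + (1-p) * (binomPMF h p (i+1) * F (i+1)) := by
    intro i _; rw [pmf_succ]; ring
  rw [Finset.sum_congr rfl e1, Finset.sum_add_distrib]
  have e2 : ∑ i ∈ Finset.range (h+1), (1-p) * (binomPMF h p (i+1) * F (i+1))
        + binomPMF (h+1) p 0 * F 0
      = ∑ v ∈ Finset.range (h+2), (1-p) * (binomPMF h p v * F v) := by
    rw [Finset.sum_range_succ' (fun v => (1-p) * (binomPMF h p v * F v)) (h+1),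
      pmf_zero]
    congr 1
    ring
  rw [add_assoc, e2,
    Finset.sum_range_succ (fun v => (1-p) * (binomPMF h p v * F v)) (h+1), pmf_top]
  simp only [mul_zero, zero_mul, add_zero]
  rw [← Finset.sum_add_distrib]
  apply Finset.sum_congr rfl
  intro v _
  ring

lemma antisym_zero (h : ℕ) (p : ℝ) :
    ∑ v ∈ Finset.range (h + 1), ∑ u' ∈ Finset.range (h + 1),
        binomPMF h p v * binomPMF h p u' *
          (if u' < v then (-1:ℝ) else if v < u' then 1 else 0) = 0 := by
  set c : ℕ → ℕ → ℝ := fun v u' => binomPMF h p v * binomPMF h p u' *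
      (if u' < v then (-1:ℝ) else if v < u' then 1 else 0) with hc
  have hskew : ∀ v u', c v u' = - c u' v := by
    intro v u'
    simp only [hc]
    split_ifs <;> first | ring1 | (exfalso; omega)
  have hs : ∑ v ∈ Finset.range (h + 1), ∑ u' ∈ Finset.range (h + 1), c v u'
      = - ∑ v ∈ Finset.range (h + 1), ∑ u' ∈ Finset.range (h + 1), c v u' := by
    conv_lhs => rw [Finset.sum_comm]
    rw [← Finset.sum_neg_distrib]
    apply Finset.sum_congr rfl
    intro u' _
    rw [← Finset.sum_neg_distrib]
    exact Finset.sum_congr rfl (fun v _ => hskew v u')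
  linarith [hs]

lemma coll_symm (h : ℕ) (p : ℝ) : binomCollision h p = binomCollision h (1 - p) := by
  unfold binomCollision
  rw [← Finset.sum_range_reflect (fun k => (binomPMF h (1-p) k)^2) (h+1)]
  apply Finset.sum_congr rfl
  intro k hk
  have hk' : k ≤ h := by simpa using Nat.lt_succ_iff.mp (Finset.mem_range.mp hk)
  have h1 : h + 1 - 1 - k = h - k := by omega
  have h2 : h - (h - k) = k := by omega
  unfold binomPMF
  rw [h1, h2, Nat.choose_symm hk']
  ring

theorem stmt5 (p : ℝ) (hp0 : 0 ≤ p) (hp1 : p ≤ 1) (h : ℕ) :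
    (∑ u ∈ Finset.range (h + 2), ∑ u' ∈ Finset.range (h + 1),
        binomPMF (h + 1) p u * binomPMF h p u' * (if u' < u then (-1 : ℝ) else 1))
      = (1 - 2 * p) * binomCollision h p
    ∧ (1 - 2 * p) * binomCollision h p = (1 - 2 * p) * binomCollision h (1 - p) := by
  constructor
  · have e0 : ∀ u ∈ Finset.range (h+2),
        ∑ u' ∈ Finset.range (h + 1),
          binomPMF (h + 1) p u * binomPMF h p u' * (if u' < u then (-1 : ℝ) else 1)
        = binomPMF (h+1) p u *
          (∑ u' ∈ Finset.range (h + 1), binomPMF h p u' * (if u' < u then (-1 : ℝ) else 1)) := by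
      intro u _
      rw [Finset.mul_sum]
      exact Finset.sum_congr rfl (fun u' _ => by ring)
    rw [Finset.sum_congr rfl e0,
      split_sum h p (fun u => ∑ u' ∈ Finset.range (h + 1),
        binomPMF h p u' * (if u' < u then (-1 : ℝ) else 1))]
    have e1 : ∀ v ∈ Finset.range (h+1),
        binomPMF h p v * ((1-p) * (∑ u' ∈ Finset.range (h + 1),
            binomPMF h p u' * (if u' < v then (-1 : ℝ) else 1))
          + p * (∑ u' ∈ Finset.range (h + 1),
            binomPMF h p u' * (if u' < v+1 then (-1 : ℝ) else 1)))
        = (∑ u' ∈ Finset.range (h + 1),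
            binomPMF h p v * binomPMF h p u' *
              (if u' < v then (-1:ℝ) else if v < u' then 1 else 0))
          + (∑ u' ∈ Finset.range (h + 1),
            binomPMF h p v * binomPMF h p u' *
              (if v = u' then (1 - 2*p : ℝ) else 0)) := by
      intro v _
      rw [Finset.mul_sum, Finset.mul_sum, mul_add, Finset.mul_sum, Finset.mul_sum,
        ← Finset.sum_add_distrib, ← Finset.sum_add_distrib]
      apply Finset.sum_congr rfl
      intro u' _
      split_ifs <;> first | ring1 | (exfalso; omega)
    rw [Finset.sum_congr rfl e1, Finset.sum_add_distrib, antisym_zero, zero_add]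
    have e2 : ∀ v ∈ Finset.range (h+1),
        ∑ u' ∈ Finset.range (h + 1),
          binomPMF h p v * binomPMF h p u' * (if v = u' then (1 - 2*p : ℝ) else 0)
        = (1 - 2*p) * (binomPMF h p v)^2 := by
      intro v hv
      rw [Finset.sum_eq_single v]
      · rw [if_pos rfl]; ring
      · intro b _ hb; rw [if_neg (fun hh => hb hh.symm), mul_zero]
      · intro hv'; exact absurd hv hv'
    rw [Finset.sum_congr rfl e2, ← Finset.mul_sum]
    rfl
  · rw [coll_symm]
end

section
/- For any integer h ≥ 2 and any q with 1/((h-1)^2 + 2) < q < 1/2, it holds that (1-2q)·Pr[w = w'] + q^{2h+1} - (1-q)^{2h+1} > 0, where w and w' are independent Binomial(h, q) random variables. -/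
open Finset

lemma pair_sum (f : ℕ → ℝ) (n : ℕ) :
    ∑ j ∈ Finset.range (2 * n), f j = ∑ k ∈ Finset.range n, (f (2 * k) + f (2 * k + 1)) := by
  induction n with
  | zero => simp
  | succ n ih =>
    rw [Finset.sum_range_succ, ← ih, show 2 * (n + 1) = 2 * n + 1 + 1 by ring,
      Finset.sum_range_succ, Finset.sum_range_succ]
    ring

lemma choose_ge_two (m k : ℕ) (hk : k < m) : 2 ≤ (m + 2).choose (k + 2) :=
  calc 2 ≤ k + 3 := by omega
    _ = (k + 3).choose (k + 2) := (Nat.choose_succ_self_right _).symm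
    _ ≤ (m + 2).choose (k + 2) := Nat.choose_le_choose _ (by omega)

theorem stmt6 (h : ℕ) (hh : 2 ≤ h) (q : ℝ)
    (hq1 : 1 / (((h : ℝ) - 1) ^ 2 + 2) < q) (hq2 : q < 1 / 2) :
    (1 - 2 * q) * binomCollision h q + q ^ (2 * h + 1) - (1 - q) ^ (2 * h + 1) > 0 := by
  obtain ⟨m, rfl⟩ : ∃ m, h = m + 2 := ⟨h - 2, by omega⟩
  have hM : (0:ℝ) ≤ (m:ℝ) := Nat.cast_nonneg m
  push_cast at hq1
  have hd : (0:ℝ) < ((m:ℝ) + 2 - 1) ^ 2 + 2 := by positivity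
  rw [div_lt_iff₀ hd] at hq1
  have hq0 : 0 < q := by nlinarith [sq_nonneg ((m:ℝ) + 1)]
  have h1q : 0 < 1 - q := by linarith
  have h2q : 0 < 1 - 2 * q := by linarith
  -- key scalar inequality : ((m+2)^2+1) q (1-q) > 1
  have hA : 1 < (((m:ℝ) + 2) ^ 2 + 1) * (q * (1 - q)) := by
    nlinarith [mul_pos (sub_pos.mpr hq1) h2q, mul_nonneg (mul_nonneg hM hq0.le) h2q.le,
      mul_nonneg hM (mul_pos (sub_pos.mpr hq1) h2q).le, sq_nonneg ((m:ℝ))]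
  -- geometric sum identity
  have hgeo : (∑ i ∈ Finset.range (2 * (m + 2) + 1), q ^ i * (1 - q) ^ (2 * (m + 2) - i))
      * (q - (1 - q)) = q ^ (2 * (m + 2) + 1) - (1 - q) ^ (2 * (m + 2) + 1) := by
    have := geom_sum₂_mul q (1 - q) (2 * (m + 2) + 1)
    simpa using this
  -- key comparison
  have key : (∑ i ∈ Finset.range (2 * (m + 2) + 1), q ^ i * (1 - q) ^ (2 * (m + 2) - i))
      < binomCollision (m + 2) q := by
    have hC : binomCollision (m + 2) q
        = (∑ k ∈ Finset.range (m + 2), binomPMF (m + 2) q k ^ 2) + q ^ (2 * (m + 2)) := by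
      rw [binomCollision, Finset.sum_range_succ, binomPMF, Nat.choose_self, Nat.sub_self]
      push_cast; ring
    have hS : (∑ i ∈ Finset.range (2 * (m + 2) + 1), q ^ i * (1 - q) ^ (2 * (m + 2) - i))
        = (∑ k ∈ Finset.range (m + 2),
            (q ^ (2 * k) * (1 - q) ^ (2 * (m + 2) - 2 * k)
              + q ^ (2 * k + 1) * (1 - q) ^ (2 * (m + 2) - (2 * k + 1))))
          + q ^ (2 * (m + 2)) := by
      rw [Finset.sum_range_succ, pair_sum (fun j => q ^ j * (1 - q) ^ (2 * (m + 2) - j)) (m + 2)]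
      simp
    rw [hC, hS]
    have hsum : (∑ k ∈ Finset.range (m + 2),
        (q ^ (2 * k) * (1 - q) ^ (2 * (m + 2) - 2 * k)
          + q ^ (2 * k + 1) * (1 - q) ^ (2 * (m + 2) - (2 * k + 1))))
        < ∑ k ∈ Finset.range (m + 2), binomPMF (m + 2) q k ^ 2 := by
      rw [← sub_pos, ← Finset.sum_sub_distrib]
      rw [show m + 2 = m + 1 + 1 by omega, Finset.sum_range_succ', Finset.sum_range_succ']
      have htail : 0 ≤ ∑ k ∈ Finset.range m,
          (binomPMF (m + 2) q (k + 1 + 1) ^ 2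
            - (q ^ (2 * (k + 1 + 1)) * (1 - q) ^ (2 * (m + 2) - 2 * (k + 1 + 1))
              + q ^ (2 * (k + 1 + 1) + 1) * (1 - q) ^ (2 * (m + 2) - (2 * (k + 1 + 1) + 1)))) := by
        apply Finset.sum_nonneg
        intro k hk
        rw [Finset.mem_range] at hk
        obtain ⟨u, hu1, hu2, hu3⟩ : ∃ u, m + 2 - (k + 1 + 1) = u + 1
            ∧ 2 * (m + 2) - 2 * (k + 1 + 1) = 2 * u + 2
            ∧ 2 * (m + 2) - (2 * (k + 1 + 1) + 1) = 2 * u + 1 := ⟨m - k - 1, by omega⟩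
        rw [binomPMF, hu1, hu2, hu3]
        have hc : (2:ℝ) ≤ ((m + 2).choose (k + 1 + 1) : ℝ) := by
          exact_mod_cast choose_ge_two m k hk
        have hc2 : (0:ℝ) ≤ ((m + 2).choose (k + 1 + 1) : ℝ) ^ 2 * (1 - q) - 1 := by
          nlinarith [mul_nonneg (sub_nonneg.mpr hc) (sub_nonneg.mpr hc),
            mul_nonneg (sub_nonneg.mpr hc) h1q.le]
        have hfact : (((m + 2).choose (k + 1 + 1) : ℝ) * q ^ (k + 1 + 1) * (1 - q) ^ (u + 1)) ^ 2
            - (q ^ (2 * (k + 1 + 1)) * (1 - q) ^ (2 * u + 2)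
              + q ^ (2 * (k + 1 + 1) + 1) * (1 - q) ^ (2 * u + 1))
            = q ^ (2 * (k + 1 + 1)) * (1 - q) ^ (2 * u + 1)
              * (((m + 2).choose (k + 1 + 1) : ℝ) ^ 2 * (1 - q) - 1) := by
          ring
        rw [hfact]
        positivity
      have hhead : 0 < (binomPMF (m + 2) q (0 + 1) ^ 2
            - (q ^ (2 * (0 + 1)) * (1 - q) ^ (2 * (m + 2) - 2 * (0 + 1))
              + q ^ (2 * (0 + 1) + 1) * (1 - q) ^ (2 * (m + 2) - (2 * (0 + 1) + 1))))
          + (binomPMF (m + 2) q 0 ^ 2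
            - (q ^ (2 * 0) * (1 - q) ^ (2 * (m + 2) - 2 * 0)
              + q ^ (2 * 0 + 1) * (1 - q) ^ (2 * (m + 2) - (2 * 0 + 1)))) := by
        rw [binomPMF, binomPMF]
        rw [show m + 2 - (0 + 1) = m + 1 by omega, show m + 2 - 0 = m + 2 by omega,
          show 2 * (m + 2) - 2 * (0 + 1) = 2 * m + 2 by omega,
          show 2 * (m + 2) - (2 * (0 + 1) + 1) = 2 * m + 1 by omega,
          show 2 * (m + 2) - 2 * 0 = 2 * m + 4 by omega,
          show 2 * (m + 2) - (2 * 0 + 1) = 2 * m + 3 by omega,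
          Nat.choose_one_right, Nat.choose_zero_right]
        have hfact : (((m + 2 : ℕ) : ℝ) * q ^ (0 + 1) * (1 - q) ^ (m + 1)) ^ 2
            - (q ^ (2 * (0 + 1)) * (1 - q) ^ (2 * m + 2)
              + q ^ (2 * (0 + 1) + 1) * (1 - q) ^ (2 * m + 1))
            + (((1 : ℕ) : ℝ) * q ^ 0 * (1 - q) ^ (m + 2)) ^ 2
            - (q ^ (2 * 0) * (1 - q) ^ (2 * m + 4)
              + q ^ (2 * 0 + 1) * (1 - q) ^ (2 * m + 3))
            = q * (1 - q) ^ (2 * m + 1)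
              * ((((m:ℝ) + 2) ^ 2 + 1) * (q * (1 - q)) - 1) := by
          push_cast; ring
        have := mul_pos (mul_pos hq0 (pow_pos h1q (2 * m + 1))) (by linarith : (0:ℝ) <
          (((m:ℝ) + 2) ^ 2 + 1) * (q * (1 - q)) - 1)
        linarith [hfact, this]
      linarith
    linarith
  have hpos := mul_pos h2q (sub_pos.mpr key)
  have hexp : (1 - 2 * q) * (binomCollision (m + 2) q
      - ∑ i ∈ Finset.range (2 * (m + 2) + 1), q ^ i * (1 - q) ^ (2 * (m + 2) - i))
      = (1 - 2 * q) * binomCollision (m + 2) q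
        + q ^ (2 * (m + 2) + 1) - (1 - q) ^ (2 * (m + 2) + 1) := by
    linear_combination hgeo
  linarith [hexp ▸ hpos]
end

section
/- For every odd integer n ≥ 5, let γ_n := 4/((n+7)(n-1)). For every unate unbiased function f : {-1,1}^n → {-1,1} and every ρ with 1 - 2γ_n < ρ < 1, it holds that Stab_ρ(Maj_n) ≤ Stab_ρ(f). -/
open Finset

namespace S7
variable {n : ℕ}

def wt (x : Fin n → Bool) : ℕ := (Finset.univ.filter (fun i => x i = true)).card

def flip (x z : Fin n → Bool) : Fin n → Bool := fun i => xor (x i) (z i)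

def sng (i : Fin n) : Fin n → Bool := fun j => decide (j = i)

def neg (x : Fin n → Bool) : Fin n → Bool := fun i => ! x i

noncomputable def w (n : ℕ) (δ : ℝ) (z : Fin n → Bool) : ℝ := ∏ i, (if z i then δ else 1 - δ)

lemma sum_prod_bool (g : Fin n → Bool → ℝ) :
    ∑ z : Fin n → Bool, ∏ i, g i (z i) = ∏ i, (g i false + g i true) := by
  have h := Finset.prod_univ_sum (fun _ : Fin n => (univ : Finset Bool)) g
  simp only [Fintype.piFinset_univ] at h
  rw [← h]
  refine Finset.prod_congr rfl (fun i _ => ?_)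
  simp [Fintype.sum_bool, add_comm]

variable {δ : ℝ}

lemma w_nonneg (h0 : 0 ≤ δ) (h1 : δ ≤ 1) (z : Fin n → Bool) : 0 ≤ w n δ z := by
  refine Finset.prod_nonneg (fun i _ => ?_)
  by_cases h : z i <;> simp [h] <;> linarith

lemma sum_w : ∑ z : Fin n → Bool, w n δ z = 1 := by
  have := sum_prod_bool (n := n) (fun _ b => if b then δ else 1 - δ)
  simpa [w] using this

lemma w_false : w n δ (fun _ => false) = (1-δ)^n := by
  simp [w, Finset.prod_const]

lemma w_sng (i : Fin n) : w n δ (sng i) = δ * (1-δ)^(n-1) := by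
  rw [w]
  rw [show (fun j => if (sng i) j then δ else 1 - δ) = fun j => if j = i then δ else 1 - δ by
    funext j; simp [sng]]
  rw [← Finset.mul_prod_erase Finset.univ _ (Finset.mem_univ i)]
  simp only [if_pos rfl]
  congr 1
  rw [Finset.prod_congr rfl (fun j hj => if_neg (Finset.ne_of_mem_erase hj)),
    Finset.prod_const, Finset.card_erase_of_mem (Finset.mem_univ i)]
  simp

lemma sum_w_zeroOn (S : Finset (Fin n)) :
    ∑ z : Fin n → Bool, (if ∀ i ∈ S, z i = false then w n δ z else 0) = (1-δ)^S.card := by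
  have hpt : ∀ z : Fin n → Bool, (if ∀ i ∈ S, z i = false then w n δ z else 0)
      = ∏ i, (if i ∈ S then (if z i then 0 else 1 - δ) else (if z i then δ else 1 - δ)) := by
    intro z
    by_cases h : ∀ i ∈ S, z i = false
    · rw [if_pos h, w]
      refine Finset.prod_congr rfl (fun i _ => ?_)
      by_cases hiS : i ∈ S
      · simp [hiS, h i hiS]
      · simp [hiS]
    · rw [if_neg h]
      push_neg at h
      obtain ⟨i, hiS, hzi⟩ := h
      rw [eq_comm]
      refine Finset.prod_eq_zero (Finset.mem_univ i) ?_
      simp [hiS, Bool.not_eq_false] at hzi ⊢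
      simp [hzi]
  rw [Finset.sum_congr rfl (fun z _ => hpt z),
    sum_prod_bool (fun i b => if i ∈ S then (if b then 0 else 1-δ) else (if b then δ else 1-δ))]
  have : ∀ i : Fin n, ((if i ∈ S then (if false then 0 else 1-δ) else (if false then δ else 1-δ))
      + (if i ∈ S then (if true then 0 else 1-δ) else (if true then δ else 1-δ)))
      = (if i ∈ S then (1-δ) else 1) := by
    intro i; by_cases h : i ∈ S <;> simp [h]
  rw [Finset.prod_congr rfl (fun i _ => this i)]
  rw [Finset.prod_ite_mem]
  simp [Finset.prod_const]

lemma sum_w_touch (h0 : 0 ≤ δ) (h1 : δ ≤ 1) (U : Finset (Fin n)) :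
    ∑ z : Fin n → Bool, (if ∃ i ∈ U, z i = true then w n δ z else 0) = 1 - (1-δ)^U.card := by
  have key : ∀ z : Fin n → Bool, (if ∃ i ∈ U, z i = true then w n δ z else 0)
      + (if ∀ i ∈ U, z i = false then w n δ z else 0) = w n δ z := by
    intro z
    by_cases h : ∃ i ∈ U, z i = true
    · rw [if_pos h, if_neg (by push_neg; obtain ⟨i, hi, hz⟩ := h; exact ⟨i, hi, by simp [hz]⟩)]
      ring
    · push_neg at h
      rw [if_neg (by push_neg; intro i hi; simpa using h i hi), if_pos (fun i hi => by simpa using h i hi)]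
      ring
  have := Finset.sum_congr rfl (fun z (_ : z ∈ (univ : Finset (Fin n → Bool))) => (key z).symm)
  rw [sum_w] at this
  rw [Finset.sum_add_distrib, sum_w_zeroOn] at this
  linarith

lemma sum_w_mem_image (T : Finset (Fin n)) :
    ∑ z : Fin n → Bool, (if z ∈ T.image sng then w n δ z else 0)
      = (T.card : ℝ) * (δ * (1-δ)^(n-1)) := by
  rw [Finset.sum_ite_mem, Finset.univ_inter]
  have hinj : ∀ x ∈ T, ∀ y ∈ T, sng x = sng y → x = y := by
    intro a _ b _ hab
    have : sng a a = sng b a := by rw [hab]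
    simpa [sng] using this.symm
  rw [Finset.sum_image hinj]
  simp [w_sng, Finset.sum_const, mul_assoc]

-- weight of an arbitrary Finset of z's is its sum; helper for subsets
lemma sum_ite_le_sum_ite (h0 : 0 ≤ δ) (h1 : δ ≤ 1) (P Q : (Fin n → Bool) → Prop)
    [DecidablePred P] [DecidablePred Q] (h : ∀ z, P z → Q z) :
    ∑ z : Fin n → Bool, (if P z then w n δ z else 0)
      ≤ ∑ z : Fin n → Bool, (if Q z then w n δ z else 0) := by
  refine Finset.sum_le_sum (fun z _ => ?_)
  by_cases hp : P z
  · rw [if_pos hp, if_pos (h z hp)]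
  · rw [if_neg hp]
    by_cases hq : Q z
    · rw [if_pos hq]; exact w_nonneg h0 h1 z
    · rw [if_neg hq]

/-! wt and flip lemmas -/

lemma wt_le (x : Fin n → Bool) : wt x ≤ n := by
  simpa [wt] using Finset.card_filter_le (univ : Finset (Fin n)) (fun i => x i = true)

lemma zeros_card (x : Fin n → Bool) : (univ.filter (fun i => x i = false)).card = n - wt x := by
  have h := Finset.card_filter_add_card_filter_not
    (s := (univ : Finset (Fin n))) (p := fun i => x i = true)
  simp only [Finset.card_univ, Fintype.card_fin] at h
  have h2 : (univ.filter (fun i => ¬ x i = true)) = (univ.filter (fun i => x i = false)) := by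
    refine Finset.filter_congr (fun i _ => by simp)
  rw [h2] at h
  rw [wt]
  omega
  
lemma flip_flip (x z : Fin n → Bool) : flip (flip x z) z = x := by
  funext i; simp [flip]

lemma flip_sng_apply (x : Fin n → Bool) (i j : Fin n) :
    flip x (sng i) j = if j = i then !(x j) else x j := by
  by_cases h : j = i <;> simp [flip, sng, h]

lemma wt_flip_sng_up (x : Fin n → Bool) (i : Fin n) (hi : x i = false) :
    wt (flip x (sng i)) = wt x + 1 := by
  have : (univ.filter (fun j => (flip x (sng i)) j = true))
      = insert i (univ.filter (fun j => x j = true)) := by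
    ext j
    by_cases h : j = i
    · subst h
      simp [flip_sng_apply, hi]
    · simp [flip_sng_apply, h]
  rw [wt, this, Finset.card_insert_of_notMem (by simp [hi]), wt]

lemma wt_flip_sng_down (y : Fin n → Bool) (i : Fin n) (hi : y i = true) :
    wt (flip y (sng i)) + 1 = wt y := by
  have hx : (flip y (sng i)) i = false := by simp [flip_sng_apply, hi]
  have h2 : flip (flip y (sng i)) (sng i) = y := flip_flip y (sng i)
  have := wt_flip_sng_up (flip y (sng i)) i hx
  rw [h2] at this
  omega
  
lemma wt_neg (x : Fin n → Bool) : wt (neg x) + wt x = n := by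
  have : (univ.filter (fun i => (neg x) i = true)) = (univ.filter (fun i => x i = false)) := by
    refine Finset.filter_congr (fun i _ => by simp [neg])
  rw [wt, this, zeros_card]
  have := wt_le x
  omega

lemma neg_flip (x z : Fin n → Bool) : neg (flip x z) = flip (neg x) z := by
  funext i
  by_cases h : x i <;> by_cases h2 : z i <;> simp [neg, flip, h, h2]

lemma neg_neg' (x : Fin n → Bool) : neg (neg x) = x := by
  funext i; simp [neg]

/-! down-closure -/

section Down
variable (A : (Fin n → Bool) → Prop)

def DownClosed : Prop := ∀ x i, A x → A (Function.update x i false)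

lemma down_many (hA : DownClosed A) (s : Finset (Fin n)) :
    ∀ x, A x → A (fun i => if i ∈ s then false else x i) := by
  classical
  induction s using Finset.induction_on with
  | empty => intro x hx; simpa using hx
  | @insert a s ha ih =>
      intro x hx
      have h2 := hA _ a (ih x hx)
      have : (Function.update (fun i => if i ∈ s then false else x i) a false)
          = (fun i => if i ∈ insert a s then false else x i) := by
        funext i
        by_cases h : i = a
        · subst h; simp [Function.update]
        · simp only [Function.update, Finset.mem_insert]
          split
          · next heq => exact absurd heq h
          · simp [h]
      rwa [this] at h2

lemma down_flip (hA : DownClosed A) (x z : Fin n → Bool)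
    (hsub : ∀ i, z i = true → x i = true) (hx : A x) : A (flip x z) := by
  have : flip x z = (fun i => if i ∈ univ.filter (fun j => z j = true) then false else x i) := by
    funext i
    by_cases h : z i = true
    · simp [flip, h, hsub i h]
    · have : z i = false := by simpa using h
      simp [flip, this, h]
  rw [this]
  exact down_many A hA _ x hx

lemma wt_flip_down (x z : Fin n → Bool) (hsub : ∀ i, z i = true → x i = true) :
    wt (flip x z) + wt z = wt x := by
  have h1 : (univ.filter (fun i => (flip x z) i = true))
      = (univ.filter (fun i => x i = true)) \ (univ.filter (fun i => z i = true)) := by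
    ext i
    simp only [Finset.mem_filter, Finset.mem_univ, true_and, Finset.mem_sdiff]
    constructor
    · intro h
      by_cases hz : z i = true
      · exfalso
        simp [flip, hz, hsub i hz] at h
      · have hz' : z i = false := by simpa using hz
        refine ⟨by simpa [flip, hz'] using h, by simp [hz']⟩
    · rintro ⟨hx, hz⟩
      have : z i = false := by simpa using hz
      simpa [flip, this] using hx
  have hsub' : (univ.filter (fun i => z i = true)) ⊆ (univ.filter (fun i => x i = true)) := by
    intro i hi
    simp only [Finset.mem_filter, Finset.mem_univ, true_and] at hi ⊢
    exact hsub i hi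
  rw [wt, h1, Finset.card_sdiff_of_subset hsub']
  have := Finset.card_le_card hsub'
  rw [wt, wt]
  omega

end Down

/-! level sets and edge counting -/

section Count
variable (A : (Fin n → Bool) → Prop) [DecidablePred A]

noncomputable def Ak (k : ℕ) : Finset (Fin n → Bool) :=
  univ.filter (fun x => A x ∧ wt x = k)

noncomputable def exCnt (x : Fin n → Bool) : ℕ :=
  ((univ.filter (fun i => x i = false)).filter (fun i => ¬ A (flip x (sng i)))).card

noncomputable def inCnt (x : Fin n → Bool) : ℕ :=
  ((univ.filter (fun i => x i = false)).filter (fun i => A (flip x (sng i)))).card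

lemma ex_in_cnt (x : Fin n → Bool) : inCnt A x + exCnt A x = n - wt x := by
  classical
  have h := Finset.card_filter_add_card_filter_not
    (s := (univ.filter (fun i => x i = false))) (p := fun i => A (flip x (sng i)))
  rw [zeros_card] at h
  exact h

lemma flip_sng_of_true (y : Fin n → Bool) (i : Fin n) (hi : y i = true) :
    flip y (sng i) = Function.update y i false := by
  funext j
  rw [flip_sng_apply]
  by_cases h : j = i
  · subst h; simp [hi]
  · simp [Function.update, h]

lemma level_count (hA : DownClosed A) (k : ℕ) :
    (k+1) * (Ak A (k+1)).card ≤ ∑ x ∈ Ak A k, inCnt A x := by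
  classical
  have hS : (k+1) * (Ak A (k+1)).card
      = ((Ak A (k+1)).sigma (fun y => univ.filter (fun i => y i = true))).card := by
    rw [Finset.card_sigma]
    rw [Finset.sum_congr rfl (fun y hy => ?_), Finset.sum_const, smul_eq_mul, mul_comm]
    show (univ.filter (fun i => y i = true)).card = k + 1
    have : wt y = k + 1 := by
      simp only [Ak, Finset.mem_filter] at hy
      exact hy.2.2
    simpa [wt] using this
  have hT : ∑ x ∈ Ak A k, inCnt A x
      = ((Ak A k).sigma (fun x =>
          (univ.filter (fun i => x i = false)).filter (fun i => A (flip x (sng i))))).card := by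
    rw [Finset.card_sigma]
    rfl
  rw [hS, hT]
  refine Finset.card_le_card_of_injOn
    (fun (p : (_ : Fin n → Bool) × Fin n) => Sigma.mk (flip p.1 (sng p.2)) p.2) ?_ ?_
  · rintro ⟨y, i⟩ hp
    dsimp only
    rw [Finset.mem_coe, Finset.mem_sigma] at hp
    obtain ⟨hy, hi⟩ := hp
    simp only [Ak, Finset.mem_filter, Finset.mem_univ, true_and] at hy
    obtain ⟨hAy, hwy⟩ := hy
    simp only [Finset.mem_filter, Finset.mem_univ, true_and] at hi
    have hyi : y i = true := hi
    have hx : flip y (sng i) = Function.update y i false := flip_sng_of_true y i hyi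
    have hAx : A (flip y (sng i)) := by rw [hx]; exact hA y i hAy
    have hwx : wt (flip y (sng i)) + 1 = wt y := wt_flip_sng_down y i hyi
    have hwk : wt (flip y (sng i)) = k := by
      rw [hwy] at hwx
      exact Nat.succ_injective hwx
    refine Finset.mem_sigma.mpr ⟨?_, ?_⟩
    · show flip y (sng i) ∈ Ak A k
      simp only [Ak, Finset.mem_filter, Finset.mem_univ, true_and]
      exact ⟨hAx, hwk⟩
    · show i ∈ (univ.filter (fun j => flip y (sng i) j = false)).filter
        (fun j => A (flip (flip y (sng i)) (sng j)))
      rw [Finset.mem_filter, Finset.mem_filter]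
      refine ⟨⟨Finset.mem_univ i, ?_⟩, ?_⟩
      · rw [flip_sng_apply]; simp [hyi]
      · rw [flip_flip]; exact hAy
  · rintro ⟨y, i⟩ hp ⟨y', i'⟩ hp' heq
    simp only [Sigma.mk.inj_iff, heq_eq_eq] at heq
    obtain ⟨h1, h2⟩ := heq
    subst h2
    have : y = y' := by
      have := congrArg (fun v => flip v (sng i)) h1
      simpa [flip_flip] using this
    simp [this]

end Count

/-! analytic inequalities -/

section Analytic
variable {u k : ℕ} {δ : ℝ}

lemma gamma_small {n : ℕ} (hn5 : 5 ≤ n) (hδ0 : 0 < δ)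
    (hδγ : δ ≤ 4/(((n:ℝ)+7)*((n:ℝ)-1))) : δ ≤ 1/12 := by
  have hn : (5:ℝ) ≤ (n:ℝ) := by exact_mod_cast hn5
  have hP : (48:ℝ) ≤ ((n:ℝ)+7)*((n:ℝ)-1) := by nlinarith
  have : 4/(((n:ℝ)+7)*((n:ℝ)-1)) ≤ 4/48 := by
    apply div_le_div_of_nonneg_left (by norm_num) (by norm_num) hP
  linarith

lemma hPd {n : ℕ} (hn5 : 5 ≤ n) (hδγ : δ ≤ 4/(((n:ℝ)+7)*((n:ℝ)-1))) :
    δ * (((n:ℝ)+7)*((n:ℝ)-1)) ≤ 4 := by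
  have hn : (5:ℝ) ≤ (n:ℝ) := by exact_mod_cast hn5
  have hP : (0:ℝ) < ((n:ℝ)+7)*((n:ℝ)-1) := by nlinarith
  calc δ * (((n:ℝ)+7)*((n:ℝ)-1)) ≤ (4/(((n:ℝ)+7)*((n:ℝ)-1))) * (((n:ℝ)+7)*((n:ℝ)-1)) := by
        exact mul_le_mul_of_nonneg_right hδγ hP.le
    _ = 4 := by exact div_mul_cancel₀ _ hP.ne'

lemma bern (j : ℕ) (hδ1 : δ ≤ 1) : 1 - (j:ℝ)*δ ≤ (1-δ)^j := by
  have := one_add_mul_le_pow (a := -δ) (by linarith) j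
  calc 1 - (j:ℝ)*δ = 1 + (j:ℝ)*(-δ) := by ring
    _ ≤ (1 + -δ)^j := this
    _ = (1-δ)^j := by ring_nf

lemma ineq_I {n : ℕ} (hn : n = 2*u+1) (hu : 2 ≤ u) (hk1 : u+2 ≤ k) (hk2 : k ≤ n)
    (hδ0 : 0 < δ) (hδγ : δ ≤ 4/(((n:ℝ)+7)*((n:ℝ)-1))) :
    1 - (1-δ)^(n-k) ≤ (k:ℝ)*δ*(1-δ)^(n-1) := by
  have hn5 : 5 ≤ n := by omega
  have hδ12 : δ ≤ 1/12 := gamma_small hn5 hδ0 hδγ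
  have hδ1 : δ ≤ 1 := by linarith
  have h4 := hPd hn5 hδγ
  have hnR : (5:ℝ) ≤ (n:ℝ) := by exact_mod_cast hn5
  have hkR : ((n:ℝ)+3) ≤ 2*(k:ℝ) := by
    have : n + 3 ≤ 2*k := by omega
    exact_mod_cast this
  have hknR : (k:ℝ) ≤ (n:ℝ) := by exact_mod_cast hk2
  have hb1 : 1 - ((n:ℝ)-(k:ℝ))*δ ≤ (1-δ)^(n-k) := by
    have := bern (n-k) hδ1
    have hc : ((n-k:ℕ):ℝ) = (n:ℝ)-(k:ℝ) := by
      have : k ≤ n := hk2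
      push_cast [Nat.cast_sub this]
      ring
    rwa [hc] at this
  have hb2 : 1 - ((n:ℝ)-1)*δ ≤ (1-δ)^(n-1) := by
    have := bern (n-1) hδ1
    have hc : ((n-1:ℕ):ℝ) = (n:ℝ)-1 := by
      have : 1 ≤ n := by omega
      push_cast [Nat.cast_sub this]
      ring
    rwa [hc] at this
  have hn7 : (0:ℝ) < (n:ℝ)+7 := by linarith
  have hd : ((n:ℝ)-1)*δ ≤ 4/((n:ℝ)+7) := by
    rw [le_div_iff₀ hn7]
    have e : ((n:ℝ)-1)*δ*((n:ℝ)+7) = δ*(((n:ℝ)+7)*((n:ℝ)-1)) := by ring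
    rw [e]; exact h4
  have h8 : 4*(k:ℝ) ≤ (2*(k:ℝ)-(n:ℝ))*((n:ℝ)+7) := by
    nlinarith [mul_le_mul_of_nonneg_right hkR (by linarith : (0:ℝ) ≤ (n:ℝ))]
  have h10 : (k:ℝ)*(((n:ℝ)-1)*δ) ≤ 2*(k:ℝ)-(n:ℝ) := by
    have hk0 : (0:ℝ) ≤ (k:ℝ) := by positivity
    have e1 : (k:ℝ)*(((n:ℝ)-1)*δ) ≤ (k:ℝ)*(4/((n:ℝ)+7)) := mul_le_mul_of_nonneg_left hd hk0
    have e2 : (k:ℝ)*(4/((n:ℝ)+7)) ≤ 2*(k:ℝ)-(n:ℝ) := by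
      rw [mul_div_assoc', div_le_iff₀ hn7]
      linarith
    linarith
  have hstep : ((n:ℝ)-(k:ℝ))*δ ≤ (k:ℝ)*δ*(1 - ((n:ℝ)-1)*δ) := by
    nlinarith [mul_le_mul_of_nonneg_right h10 hδ0.le]
  have hpos : 0 ≤ (k:ℝ)*δ := by positivity
  calc 1 - (1-δ)^(n-k) ≤ ((n:ℝ)-(k:ℝ))*δ := by linarith
    _ ≤ (k:ℝ)*δ*(1 - ((n:ℝ)-1)*δ) := hstep
    _ ≤ (k:ℝ)*δ*(1-δ)^(n-1) := mul_le_mul_of_nonneg_left hb2 hpos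

set_option maxHeartbeats 1000000 in
lemma ineq_II {n : ℕ} (hn : n = 2*u+1) (hu : 2 ≤ u)
    (hδ0 : 0 < δ) (hδγ : δ ≤ 4/(((n:ℝ)+7)*((n:ℝ)-1))) :
    1 + (1-δ)^n ≤ 2*(1-δ)^u := by
  have hn5 : 5 ≤ n := by omega
  have hδ12 : δ ≤ 1/12 := gamma_small hn5 hδ0 hδγ
  have hδ1 : δ ≤ 1 := by linarith
  have h4 := hPd hn5 hδγ
  have hnR : (5:ℝ) ≤ (n:ℝ) := by exact_mod_cast hn5
  have huR : ((n:ℝ)-1) = 2*(u:ℝ) := by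
    have : (n:ℝ) = 2*(u:ℝ)+1 := by exact_mod_cast hn
    linarith
  have huR2 : (2:ℝ) ≤ (u:ℝ) := by exact_mod_cast hu
  set t := Real.sqrt δ with ht
  have ht2 : t^2 = δ := Real.sq_sqrt hδ0.le
  have ht0 : 0 < t := Real.sqrt_pos.2 hδ0
  have ht1 : t ≤ 1 := by
    rw [ht, show (1:ℝ) = Real.sqrt 1 by simp]
    exact Real.sqrt_le_sqrt (by linarith)
  have hn7 : (0:ℝ) < (n:ℝ)+7 := by linarith
  have hut : (u:ℝ)*t ≤ ((n:ℝ)+5)/((n:ℝ)+7) := by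
    have hsq : ((u:ℝ)*t)^2 ≤ (((n:ℝ)+5)/((n:ℝ)+7))^2 := by
      have h1 : ((u:ℝ)*t)^2 = (u:ℝ)^2*δ := by rw [mul_pow, ht2]
      have h2 : (u:ℝ)^2*δ ≤ ((n:ℝ)-1)/((n:ℝ)+7) := by
        rw [le_div_iff₀ hn7]
        have hu' : (u:ℝ) = ((n:ℝ)-1)/2 := by linarith
        have e : (u:ℝ)^2*δ*((n:ℝ)+7) = (δ * (((n:ℝ)+7)*((n:ℝ)-1))) * (((n:ℝ)-1)/4) := by
          rw [hu']; ring
        rw [e]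
        calc (δ * (((n:ℝ)+7)*((n:ℝ)-1))) * (((n:ℝ)-1)/4) ≤ 4 * (((n:ℝ)-1)/4) :=
              mul_le_mul_of_nonneg_right h4 (by linarith)
          _ = (n:ℝ)-1 := by ring
      have h3 : ((n:ℝ)-1)/((n:ℝ)+7) ≤ (((n:ℝ)+5)/((n:ℝ)+7))^2 := by
        rw [div_pow, div_le_div_iff₀ hn7 (by positivity)]
        nlinarith
      linarith
    have h0 : (0:ℝ) ≤ (u:ℝ)*t := by positivity
    have hb0 : (0:ℝ) ≤ ((n:ℝ)+5)/((n:ℝ)+7) := by positivity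
    nlinarith
  have huδ : (u:ℝ)*δ ≤ 2/((n:ℝ)+7) := by
    rw [le_div_iff₀ hn7]
    nlinarith
  have h3 : (u:ℝ)*t + (u:ℝ)*δ ≤ 1 := by
    have : ((n:ℝ)+5)/((n:ℝ)+7) + 2/((n:ℝ)+7) = 1 := by field_simp; ring
    linarith
  have hb : (1:ℝ) - (u:ℝ)*δ ≤ (1-δ)^u := bern u hδ1
  have h5 : 1 ≤ (1+t)*(1-δ)^u := by
    have e1 : 1 ≤ (1+t)*(1 - (u:ℝ)*δ) := by
      nlinarith [mul_le_mul_of_nonneg_left h3 ht0.le, ht2]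
    have e2 : (1+t)*(1 - (u:ℝ)*δ) ≤ (1+t)*(1-δ)^u :=
      mul_le_mul_of_nonneg_left hb (by linarith)
    linarith
  have h6 : (1-δ)^u ≤ 1 := pow_le_one₀ (by linarith) (by linarith)
  have h7 : (1-t)*(1-δ)^u ≤ 1 := by
    have h60 : 0 ≤ (1-δ)^u := pow_nonneg (by linarith) u
    nlinarith
  have hexp : (1-δ)^n = ((1-δ)^u)^2*(1-δ) := by
    rw [hn, pow_succ, mul_comm 2 u, pow_mul]
  rw [hexp]
  nlinarith [mul_nonneg (sub_nonneg.2 h5) (sub_nonneg.2 h7), ht2]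

end Analytic

/-! per-point bounds -/

section Side
variable (A : (Fin n → Bool) → Prop) [DecidablePred A] {u : ℕ} {δ : ℝ}

lemma bad_bound_x (h0 : 0 ≤ δ) (h1 : δ ≤ 1) (hA : DownClosed A)
    (x : Fin n → Bool) (hAx : A x) (u : ℕ) :
    ∑ z : Fin n → Bool, (if ¬ A (flip x z) ∧ u+1 ≤ wt (flip x z) then w n δ z else 0)
      ≤ (exCnt A x : ℝ) * (δ*(1-δ)^(n-1))
        + ((1 - (1-δ)^(n - wt x)) - ((n - wt x : ℕ):ℝ)*(δ*(1-δ)^(n-1))) := by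
  classical
  set Z := univ.filter (fun i => x i = false) with hZ
  set E := Z.filter (fun i => ¬ A (flip x (sng i))) with hE
  have hme : ∀ i ∈ E, i ∈ Z := fun i hi => (Finset.mem_filter.1 hi).1
  have step1 : ∀ z : Fin n → Bool,
      (if ¬ A (flip x z) ∧ u+1 ≤ wt (flip x z) then w n δ z else 0)
      ≤ (if z ∈ E.image sng then w n δ z else 0)
        + (if (∃ i ∈ Z, z i = true) ∧ z ∉ Z.image sng then w n δ z else 0) := by
    intro z
    have hw := w_nonneg (n := n) h0 h1 z
    by_cases hC : ¬ A (flip x z) ∧ u+1 ≤ wt (flip x z)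
    · rw [if_pos hC]
      have htouch : ∃ i ∈ Z, z i = true := by
        by_contra hq
        push_neg at hq
        have hsub : ∀ i, z i = true → x i = true := by
          intro i hzi
          by_contra hxi
          have hxi' : x i = false := by simpa using hxi
          exact absurd hzi (by simpa using hq i (by simp [hZ, hxi']))
        exact hC.1 (down_flip A hA x z hsub hAx)
      by_cases hm : z ∈ Z.image sng
      · obtain ⟨i, hiZ, rfl⟩ := Finset.mem_image.1 hm
        have : sng i ∈ E.image sng := by
          refine Finset.mem_image.2 ⟨i, ?_, rfl⟩
          rw [hE, Finset.mem_filter]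
          exact ⟨hiZ, hC.1⟩
        rw [if_pos this]
        exact le_add_of_nonneg_right (by split <;> simp [hw])
      · rw [if_pos (show (∃ i ∈ Z, z i = true) ∧ z ∉ Z.image sng from ⟨htouch, hm⟩)]
        exact le_add_of_nonneg_left (by split <;> simp [hw])
    · rw [if_neg hC]
      exact add_nonneg (by split <;> simp [hw]) (by split <;> simp [hw])
  have hsum := Finset.sum_le_sum (fun z (_ : z ∈ (univ : Finset (Fin n → Bool))) => step1 z)
  rw [Finset.sum_add_distrib] at hsum
  have e1 : ∑ z : Fin n → Bool, (if z ∈ E.image sng then w n δ z else 0)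
      = (exCnt A x : ℝ) * (δ*(1-δ)^(n-1)) := by
    rw [sum_w_mem_image]
    congr 1
  have e2 : ∑ z : Fin n → Bool, (if (∃ i ∈ Z, z i = true) ∧ z ∉ Z.image sng then w n δ z else 0)
      = (1 - (1-δ)^(n - wt x)) - ((n - wt x : ℕ):ℝ)*(δ*(1-δ)^(n-1)) := by
    have key : ∀ z : Fin n → Bool,
        (if (∃ i ∈ Z, z i = true) ∧ z ∉ Z.image sng then w n δ z else 0)
        = (if ∃ i ∈ Z, z i = true then w n δ z else 0)
          - (if z ∈ Z.image sng then w n δ z else 0) := by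
      intro z
      by_cases hm : z ∈ Z.image sng
      · have ht : ∃ i ∈ Z, z i = true := by
          obtain ⟨i, hiZ, rfl⟩ := Finset.mem_image.1 hm
          exact ⟨i, hiZ, by simp [sng]⟩
        rw [if_pos ht, if_pos hm, if_neg (fun hc => hc.2 hm)]
        ring
      · by_cases ht : ∃ i ∈ Z, z i = true
        · rw [if_pos (show (∃ i ∈ Z, z i = true) ∧ z ∉ Z.image sng from ⟨ht, hm⟩),
            if_pos ht, if_neg hm]
          ring
        · rw [if_neg (fun hc => ht hc.1), if_neg ht, if_neg hm]; ring
    rw [Finset.sum_congr rfl (fun z _ => key z), Finset.sum_sub_distrib,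
      sum_w_touch h0 h1, sum_w_mem_image]
    have hzc : Z.card = n - wt x := zeros_card x
    rw [hzc]
  rw [e1, e2] at hsum
  exact hsum

lemma good_bound_x (h0 : 0 ≤ δ) (h1 : δ ≤ 1) (hA : DownClosed A)
    {u : ℕ} (hn : n = 2*u+1)
    (x : Fin n → Bool) (hAx : A x) (hwx : wt x = u+1) :
    (1-δ)^u - (1-δ)^n
      ≤ ∑ z : Fin n → Bool, (if A (flip x z) ∧ wt (flip x z) ≤ u then w n δ z else 0) := by
  classical
  set Z := univ.filter (fun i => x i = false) with hZ
  have step1 : ∀ z : Fin n → Bool,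
      (if (∀ i ∈ Z, z i = false) ∧ ¬ (z = fun _ => false) then w n δ z else 0)
      ≤ (if A (flip x z) ∧ wt (flip x z) ≤ u then w n δ z else 0) := by
    intro z
    have hw := w_nonneg (n := n) h0 h1 z
    by_cases hc : (∀ i ∈ Z, z i = false) ∧ ¬ (z = fun _ => false)
    · rw [if_pos hc]
      obtain ⟨hzall, hzne⟩ := hc
      have hsub : ∀ i, z i = true → x i = true := by
        intro i hzi
        by_contra hxi
        have hxi' : x i = false := by simpa using hxi
        have : z i = false := hzall i (by simp [hZ, hxi'])
        simp [this] at hzi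
      have hy : A (flip x z) := down_flip A hA x z hsub hAx
      have hwt : wt (flip x z) + wt z = wt x := wt_flip_down x z hsub
      have hzpos : 1 ≤ wt z := by
        by_contra hq
        push_neg at hq
        interval_cases h : wt z
        · apply hzne
          funext i
          by_cases hzi : z i = true
          · exfalso
            have : i ∈ univ.filter (fun j => z j = true) := by simp [hzi]
            rw [wt] at h
            simp [Finset.card_eq_zero.1 h] at this
          · simpa using hzi
      have : wt (flip x z) ≤ u := by omega
      rw [if_pos ⟨hy, this⟩]
    · rw [if_neg hc]
      split <;> simp [hw]
  have hsum := Finset.sum_le_sum (fun z (_ : z ∈ (univ : Finset (Fin n → Bool))) => step1 z)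
  refine le_trans (le_of_eq ?_) hsum
  have key : ∀ z : Fin n → Bool,
      (if (∀ i ∈ Z, z i = false) ∧ ¬ (z = fun _ => false) then w n δ z else 0)
      = (if (∀ i ∈ Z, z i = false) then w n δ z else 0)
        - (if z = (fun _ => false) then w n δ z else 0) := by
    intro z
    by_cases h0' : z = fun _ => false
    · rw [if_neg (fun hc => hc.2 h0'), if_pos (show (∀ i ∈ Z, z i = false) by
        subst h0'; intro i _; rfl), if_pos h0', h0']
      ring
    · by_cases hall : ∀ i ∈ Z, z i = false
      · rw [if_pos (show (∀ i ∈ Z, z i = false) ∧ ¬(z = fun _ => false) from ⟨hall, h0'⟩),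
          if_pos hall, if_neg h0']
        ring
      · rw [if_neg (fun hc => hall hc.1), if_neg hall, if_neg h0']; ring
  rw [Finset.sum_congr rfl (fun z _ => key z), Finset.sum_sub_distrib, sum_w_zeroOn]
  have e3 : ∑ z : Fin n → Bool, (if z = (fun _ => false) then w n δ z else 0)
      = (1-δ)^n := by
    rw [Finset.sum_ite_eq' Finset.univ (fun _ => false) (w n δ)]
    simp [w_false]
  rw [e3]
  have hzc : Z.card = n - wt x := zeros_card x
  have : n - wt x = u := by omega
  rw [hzc, this]

lemma ak_top : (Ak A (n+1)).card = 0 := by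
  rw [Finset.card_eq_zero, Ak, Finset.filter_eq_empty_iff]
  intro x _
  rintro ⟨-, hw⟩
  have := wt_le x
  omega

lemma exCnt_sum (hA : DownClosed A) (k : ℕ) (hk : k ≤ n) :
    ∑ x ∈ Ak A k, exCnt A x + (k+1) * (Ak A (k+1)).card ≤ (n-k) * (Ak A k).card := by
  have h1 := level_count A hA k
  have h2 : ∑ x ∈ Ak A k, (inCnt A x + exCnt A x) = (n-k) * (Ak A k).card := by
    rw [Finset.sum_congr rfl (fun x hx => ?_), Finset.sum_const, smul_eq_mul, mul_comm]
    rw [ex_in_cnt]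
    congr 1
    simp only [Ak, Finset.mem_filter] at hx
    rw [hx.2.2]
  rw [Finset.sum_add_distrib] at h2
  omega

theorem side (hn : n = 2*u+1) (hu : 2 ≤ u) (hδ0 : 0 < δ)
    (hδγ : δ ≤ 4/(((n:ℝ)+7)*((n:ℝ)-1))) (hA : DownClosed A) :
    ∑ x : Fin n → Bool, (if A x ∧ u+1 ≤ wt x then
        (∑ z : Fin n → Bool, if ¬ A (flip x z) ∧ u+1 ≤ wt (flip x z) then w n δ z else 0) else 0)
    ≤ ∑ x : Fin n → Bool, (if A x ∧ u+1 ≤ wt x then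
        (∑ z : Fin n → Bool, if A (flip x z) ∧ wt (flip x z) ≤ u then w n δ z else 0) else 0) := by
  classical
  have hn5 : 5 ≤ n := by omega
  have hδ12 : δ ≤ 1/12 := gamma_small hn5 hδ0 hδγ
  have hδ1 : δ ≤ 1 := by linarith
  have hδ0' : (0:ℝ) ≤ δ := hδ0.le
  have h1δ : (0:ℝ) ≤ 1 - δ := by linarith
  set δ' : ℝ := δ*(1-δ)^(n-1) with hδ'
  have hδ'0 : 0 ≤ δ' := by positivity
  set GV : ℝ := (1-δ)^u - (1-δ)^n with hGV
  set K : Finset ℕ := Finset.Icc (u+1) n with hK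
  -- lower bound for RHS
  have hRHS : GV * ((Ak A (u+1)).card : ℝ)
      ≤ ∑ x : Fin n → Bool, (if A x ∧ u+1 ≤ wt x then
        (∑ z : Fin n → Bool, if A (flip x z) ∧ wt (flip x z) ≤ u then w n δ z else 0) else 0) := by
    have hpt : ∀ x : Fin n → Bool,
        (if A x ∧ wt x = u+1 then GV else 0)
        ≤ (if A x ∧ u+1 ≤ wt x then
          (∑ z : Fin n → Bool, if A (flip x z) ∧ wt (flip x z) ≤ u then w n δ z else 0) else 0) := by
      intro x
      have hG0 : (0:ℝ) ≤ ∑ z : Fin n → Bool,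
          (if A (flip x z) ∧ wt (flip x z) ≤ u then w n δ z else 0) := by
        refine Finset.sum_nonneg (fun z _ => ?_)
        split <;> simp [w_nonneg hδ0' hδ1 z]
      by_cases hx : A x ∧ wt x = u+1
      · rw [if_pos hx, if_pos (show A x ∧ u+1 ≤ wt x from ⟨hx.1, le_of_eq hx.2.symm⟩)]
        exact good_bound_x A hδ0' hδ1 hA hn x hx.1 hx.2
      · rw [if_neg hx]
        split
        · exact hG0
        · exact le_refl 0
    have := Finset.sum_le_sum (fun x (_ : x ∈ (univ : Finset (Fin n → Bool))) => hpt x)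
    refine le_trans (le_of_eq ?_) this
    rw [← Finset.sum_filter]
    rw [show univ.filter (fun x => A x ∧ wt x = u+1) = Ak A (u+1) from rfl]
    rw [Finset.sum_const, nsmul_eq_mul, mul_comm]
  -- upper bound for LHS
  have hLHS : (∑ x : Fin n → Bool, (if A x ∧ u+1 ≤ wt x then
        (∑ z : Fin n → Bool, if ¬ A (flip x z) ∧ u+1 ≤ wt (flip x z) then w n δ z else 0) else 0))
      ≤ GV * ((Ak A (u+1)).card : ℝ) := by
    rw [← Finset.sum_filter]
    set B : (Fin n → Bool) → ℝ := fun x =>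
      ∑ z : Fin n → Bool, (if ¬ A (flip x z) ∧ u+1 ≤ wt (flip x z) then w n δ z else 0) with hB
    set Dp : Finset (Fin n → Bool) := univ.filter (fun x => A x ∧ u+1 ≤ wt x) with hDp
    have hmaps : ∀ x ∈ Dp, wt x ∈ K := by
      intro x hx
      rw [hDp, Finset.mem_filter] at hx
      rw [hK, Finset.mem_Icc]
      exact ⟨hx.2.2, wt_le x⟩
    rw [← Finset.sum_fiberwise_of_maps_to hmaps]
    have hfib : ∀ k ∈ K, Dp.filter (fun x => wt x = k) = Ak A k := by
      intro k hk
      rw [hK, Finset.mem_Icc] at hk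
      rw [hDp, Ak, Finset.filter_filter]
      refine Finset.filter_congr (fun x _ => ?_)
      constructor
      · rintro ⟨⟨hAx, -⟩, hwk⟩; exact ⟨hAx, hwk⟩
      · rintro ⟨hAx, hwk⟩; exact ⟨⟨hAx, by omega⟩, hwk⟩
    -- per-level bound
    have hlevel : ∀ k ∈ K, ∑ x ∈ Ak A k, B x
        ≤ ((Ak A k).card : ℝ) * (1 - (1-δ)^(n-k)) - δ' * ((k+1) * ((Ak A (k+1)).card : ℝ)) := by
      intro k hk
      rw [hK, Finset.mem_Icc] at hk
      have hstep : ∑ x ∈ Ak A k, B x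
          ≤ ∑ x ∈ Ak A k, ((exCnt A x : ℝ) * δ'
              + ((1 - (1-δ)^(n-k)) - ((n-k : ℕ):ℝ)*δ')) := by
        refine Finset.sum_le_sum (fun x hx => ?_)
        rw [Ak, Finset.mem_filter] at hx
        have hb := bad_bound_x A hδ0' hδ1 hA x hx.2.1 u
        rw [hx.2.2] at hb
        exact hb
      rw [Finset.sum_add_distrib, Finset.sum_const, nsmul_eq_mul] at hstep
      have hcount : (∑ x ∈ Ak A k, (exCnt A x : ℝ))
          ≤ ((n-k : ℕ):ℝ) * ((Ak A k).card : ℝ) - ((k+1):ℝ) * ((Ak A (k+1)).card : ℝ) := by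
        have hN := exCnt_sum A hA k hk.2
        have h' : ((∑ x ∈ Ak A k, exCnt A x) : ℝ) + ((k:ℝ)+1) * ((Ak A (k+1)).card:ℝ)
            ≤ ((n-k : ℕ):ℝ) * ((Ak A k).card:ℝ) := by exact_mod_cast hN
        linarith
      have hsum2 : ∑ x ∈ Ak A k, (exCnt A x : ℝ) * δ' = (∑ x ∈ Ak A k, (exCnt A x:ℝ)) * δ' := by
        rw [Finset.sum_mul]
      rw [hsum2] at hstep
      have : (∑ x ∈ Ak A k, (exCnt A x:ℝ)) * δ'
          ≤ (((n-k:ℕ):ℝ) * ((Ak A k).card:ℝ) - ((k+1):ℝ) * ((Ak A (k+1)).card:ℝ)) * δ' :=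
        mul_le_mul_of_nonneg_right hcount hδ'0
      calc ∑ x ∈ Ak A k, B x
          ≤ (∑ x ∈ Ak A k, (exCnt A x:ℝ)) * δ'
            + ((Ak A k).card:ℝ) * ((1 - (1-δ)^(n-k)) - ((n-k:ℕ):ℝ)*δ') := hstep
        _ ≤ (((n-k:ℕ):ℝ) * ((Ak A k).card:ℝ) - ((k+1):ℝ) * ((Ak A (k+1)).card:ℝ)) * δ'
            + ((Ak A k).card:ℝ) * ((1 - (1-δ)^(n-k)) - ((n-k:ℕ):ℝ)*δ') := by linarith
        _ = ((Ak A k).card : ℝ) * (1 - (1-δ)^(n-k)) - δ' * ((k+1) * ((Ak A (k+1)).card : ℝ)) := by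
            ring
    have htot : ∑ k ∈ K, ∑ x ∈ Dp.filter (fun x => wt x = k), B x
        ≤ ∑ k ∈ K, (((Ak A k).card : ℝ) * (1 - (1-δ)^(n-k))
            - δ' * ((k+1) * ((Ak A (k+1)).card : ℝ))) := by
      refine Finset.sum_le_sum (fun k hk => ?_)
      rw [hfib k hk]
      exact hlevel k hk
    refine le_trans htot ?_
    rw [Finset.sum_sub_distrib]
    -- reindex the subtracted sum
    have hre : ∑ k ∈ K, δ' * ((k+1) * ((Ak A (k+1)).card : ℝ))
        = ∑ j ∈ Finset.Icc (u+2) (n+1), δ' * (j * ((Ak A j).card : ℝ)) := by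
      rw [hK]
      rw [show Finset.Icc (u+2) (n+1) = (Finset.Icc (u+1) n).image (· + 1) by
        rw [Finset.image_add_right_Icc]]
      rw [Finset.sum_image (by intro a _ b _ h; simp only at h; omega)]
      refine Finset.sum_congr rfl (fun k _ => ?_)
      push_cast
      ring
    have hsplit : ∑ j ∈ Finset.Icc (u+2) (n+1), δ' * (j * ((Ak A j).card : ℝ))
        = ∑ j ∈ Finset.Icc (u+2) n, δ' * (j * ((Ak A j).card : ℝ)) := by
      rw [Finset.sum_Icc_succ_top (by omega)]
      rw [ak_top]
      simp
    rw [hre, hsplit]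
    -- split the head of K
    have hKsplit : K = Finset.cons (u+1) (Finset.Icc (u+2) n) (by simp) := by
      rw [hK, Finset.Icc_eq_cons_Ioc (by omega)]
      congr 1
      rw [← Finset.Icc_add_one_left_eq_Ioc]; rfl
    rw [hKsplit, Finset.sum_cons]
    have hhead : ((Ak A (u+1)).card : ℝ) * (1 - (1-δ)^(n-(u+1)))
        ≤ GV * ((Ak A (u+1)).card : ℝ) := by
      have hnu : n - (u+1) = u := by omega
      rw [hnu]
      have hII := ineq_II hn hu hδ0 hδγ
      have hgv : 1 - (1-δ)^u ≤ GV := by rw [hGV]; linarith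
      calc ((Ak A (u+1)).card : ℝ) * (1 - (1-δ)^u)
          ≤ ((Ak A (u+1)).card : ℝ) * GV :=
            mul_le_mul_of_nonneg_left hgv (by positivity)
        _ = GV * ((Ak A (u+1)).card : ℝ) := mul_comm _ _
    have htail : ∑ k ∈ Finset.Icc (u+2) n, ((Ak A k).card:ℝ) * (1 - (1-δ)^(n-k))
        ≤ ∑ k ∈ Finset.Icc (u+2) n, δ' * ((k:ℝ) * ((Ak A k).card:ℝ)) := by
      refine Finset.sum_le_sum (fun k hk => ?_)
      rw [Finset.mem_Icc] at hk
      have hI := ineq_I hn hu hk.1 hk.2 hδ0 hδγ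
      have : ((Ak A k).card:ℝ) * (1 - (1-δ)^(n-k))
          ≤ ((Ak A k).card:ℝ) * ((k:ℝ)*δ*(1-δ)^(n-1)) :=
        mul_le_mul_of_nonneg_left hI (by positivity)
      calc ((Ak A k).card:ℝ) * (1 - (1-δ)^(n-k))
          ≤ ((Ak A k).card:ℝ) * ((k:ℝ)*δ*(1-δ)^(n-1)) := this
        _ = δ' * ((k:ℝ) * ((Ak A k).card:ℝ)) := by rw [hδ']; ring
    linarith
  exact le_trans hLHS hRHS

end Side

/-! majority lemmas -/

lemma sum_chi (x : Fin n → Bool) : ∑ i, chi (x i) = 2*(wt x:ℝ) - n := by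
  have hpt : ∀ i, chi (x i) = 2*(if x i = true then (1:ℝ) else 0) - 1 := by
    intro i; by_cases h : x i <;> simp [chi, h] <;> norm_num
  rw [Finset.sum_congr rfl (fun i _ => hpt i), Finset.sum_sub_distrib, ← Finset.mul_sum,
    Finset.sum_boole, Finset.sum_const, Finset.card_univ]
  simp [wt]

lemma maj_pos {u : ℕ} (hn : n = 2*u+1) (x : Fin n → Bool) (h : u+1 ≤ wt x) : maj n x = 1 := by
  rw [maj, sum_chi]
  apply Real.sign_of_pos
  have : ((u:ℝ)+1) ≤ (wt x : ℝ) := by exact_mod_cast h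
  have hnr : (n:ℝ) = 2*(u:ℝ)+1 := by exact_mod_cast hn
  linarith

lemma maj_neg {u : ℕ} (hn : n = 2*u+1) (x : Fin n → Bool) (h : wt x ≤ u) : maj n x = -1 := by
  rw [maj, sum_chi]
  apply Real.sign_of_neg
  have : (wt x : ℝ) ≤ (u:ℝ) := by exact_mod_cast h
  have hnr : (n:ℝ) = 2*(u:ℝ)+1 := by exact_mod_cast hn
  linarith

/-! sum reindexing -/

lemma flip_involutive (z : Fin n → Bool) : Function.Involutive (fun x => flip x z) :=
  fun x => flip_flip x z

lemma neg_involutive : Function.Involutive (neg : (Fin n → Bool) → (Fin n → Bool)) := neg_neg'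

lemma swap_sum {δ : ℝ} (F : (Fin n → Bool) → (Fin n → Bool) → ℝ) :
    ∑ x : Fin n → Bool, ∑ z : Fin n → Bool, w n δ z * F (flip x z) x
      = ∑ x : Fin n → Bool, ∑ z : Fin n → Bool, w n δ z * F x (flip x z) := by
  have h1 : ∀ z : Fin n → Bool, ∑ x : Fin n → Bool, w n δ z * F (flip x z) x
      = ∑ x : Fin n → Bool, w n δ z * F x (flip x z) := by
    intro z
    refine Fintype.sum_bijective (fun x => flip x z) (flip_involutive z).bijective _ _
      (fun x => ?_)
    show w n δ z * F (flip x z) x = w n δ z * F (flip x z) (flip (flip x z) z)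
    rw [flip_flip]
  rw [Finset.sum_comm]
  rw [Finset.sum_congr rfl (fun z _ => h1 z)]
  rw [Finset.sum_comm]

lemma neg_sum (F : (Fin n → Bool) → ℝ) :
    ∑ x : Fin n → Bool, F x = ∑ x : Fin n → Bool, F (neg x) :=
  (Fintype.sum_bijective neg neg_involutive.bijective _ _ (fun x => rfl)).symm

lemma neg_update (x : Fin n → Bool) (i : Fin n) :
    neg (Function.update x i false) = Function.update (neg x) i true := by
  funext j
  by_cases h : j = i
  · subst h; simp [neg]
  · simp [neg, Function.update, h]

lemma down_neg (A : (Fin n → Bool) → Prop) (hA : DownClosed A) :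
    DownClosed (fun v => ¬ A (neg v)) := by
  intro x i hx
  rw [neg_update]
  intro hcon
  by_cases h : (neg x) i = true
  · rw [show Function.update (neg x) i true = neg x by
      funext j; by_cases hj : j = i
      · subst hj; simp [h]
      · simp [Function.update, hj]] at hcon
    exact hx hcon
  · have h2 := hA _ i hcon
    rw [Function.update_idem] at h2
    rw [show Function.update (neg x) i false = neg x by
      funext j; by_cases hj : j = i
      · subst hj; simpa using h
      · simp [Function.update, hj]] at h2
    exact hx h2

lemma collapse {δ : ℝ} (P : (Fin n → Bool) → Prop) (Q : (Fin n → Bool) → (Fin n → Bool) → Prop)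
    [∀ x, Decidable (P x)] [∀ x z, Decidable (Q x z)] :
    ∑ x : Fin n → Bool, ∑ z : Fin n → Bool, (if P x ∧ Q x z then w n δ z else 0)
      = ∑ x : Fin n → Bool, (if P x then ∑ z : Fin n → Bool,
          (if Q x z then w n δ z else 0) else 0) := by
  refine Finset.sum_congr rfl (fun x _ => ?_)
  by_cases hP : P x
  · simp [hP]
  · simp [hP]

theorem core {u : ℕ} (hn : n = 2*u+1) (hu : 2 ≤ u) {δ : ℝ} (hδ0 : 0 < δ)
    (hδγ : δ ≤ 4/(((n:ℝ)+7)*((n:ℝ)-1)))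
    (g : (Fin n → Bool) → ℝ) (hg1 : ∀ x, g x = 1 ∨ g x = -1)
    (hmono : ∀ x i, g (Function.update x i false) ≤ g (Function.update x i true)) :
    ∑ x : Fin n → Bool, ∑ z : Fin n → Bool, w n δ z * (maj n x * maj n (flip x z))
      ≤ ∑ x : Fin n → Bool, ∑ z : Fin n → Bool, w n δ z * (g x * g (flip x z)) := by
  classical
  have hn5 : 5 ≤ n := by omega
  -- the down-set A = {g = -1}
  have hA : DownClosed (fun v => g v = -1) := by
    intro x i hx
    rcases hg1 (Function.update x i false) with h1 | h1
    · exfalso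
      by_cases hxi : x i = true
      · have hle := hmono x i
        have hxx : Function.update x i true = x := by
          funext j
          by_cases hj : j = i
          · subst hj; simp [hxi]
          · simp [Function.update, hj]
        rw [hxx, hx, h1] at hle
        linarith
      · have hxx : Function.update x i false = x := by
          funext j
          by_cases hj : j = i
          · subst hj; simpa using hxi
          · simp [Function.update, hj]
        rw [hxx, hx] at h1
        linarith
    · exact h1
  have hA' : DownClosed (fun v => ¬ (g (neg v) = -1)) := down_neg _ hA
  have hMv : ∀ x : Fin n → Bool, maj n x = 1 ∨ maj n x = -1 := by
    intro x
    rcases le_or_gt (wt x) u with h | h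
    · exact Or.inr (maj_neg hn x h)
    · exact Or.inl (maj_pos hn x h)
  -- the disagreement kernel
  set e : (Fin n → Bool) → (Fin n → Bool) → ℝ := fun a b =>
    if ¬ (g a = maj n a) ∧ g b = maj n b then -2*(maj n a * maj n b) else 0 with he
  have P1 : ∀ a b : Fin n → Bool, g a * g b - maj n a * maj n b = e a b + e b a := by
    intro a b
    rcases hg1 a with ha | ha <;> rcases hg1 b with hb | hb <;>
      rcases hMv a with hMa | hMa <;> rcases hMv b with hMb | hMb <;>
      · simp only [he]
        rw [ha, hb, hMa, hMb]
        norm_num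
  have P2 : ∀ x z : Fin n → Bool, w n δ z * e x (flip x z)
      = 2*((if (g x = -1 ∧ u+1 ≤ wt x) ∧ (g (flip x z) = -1 ∧ wt (flip x z) ≤ u)
              then w n δ z else 0)
          + (if (¬ g x = -1 ∧ wt x ≤ u) ∧ (¬ g (flip x z) = -1 ∧ u+1 ≤ wt (flip x z))
              then w n δ z else 0))
        - 2*((if (g x = -1 ∧ u+1 ≤ wt x) ∧ (¬ g (flip x z) = -1 ∧ u+1 ≤ wt (flip x z))
              then w n δ z else 0)
          + (if (¬ g x = -1 ∧ wt x ≤ u) ∧ (g (flip x z) = -1 ∧ wt (flip x z) ≤ u)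
              then w n δ z else 0)) := by
    intro x z
    by_cases hx : u+1 ≤ wt x
    · have hMx : maj n x = 1 := maj_pos hn x hx
      have hx' : ¬ (wt x ≤ u) := by omega
      by_cases hy : u+1 ≤ wt (flip x z)
      · have hMy : maj n (flip x z) = 1 := maj_pos hn _ hy
        have hy' : ¬ (wt (flip x z) ≤ u) := by omega
        rcases hg1 x with hgx | hgx <;> rcases hg1 (flip x z) with hgy | hgy <;>
          · simp only [he]
            rw [hMx, hMy]
            norm_num [hgx, hgy, hx, hy, hx', hy'] <;> ring
      · have hy1 : wt (flip x z) ≤ u := by omega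
        have hMy : maj n (flip x z) = -1 := maj_neg hn _ hy1
        rcases hg1 x with hgx | hgx <;> rcases hg1 (flip x z) with hgy | hgy <;>
          · simp only [he]
            rw [hMx, hMy]
            norm_num [hgx, hgy, hx, hy, hx', hy1] <;> ring
    · have hx1 : wt x ≤ u := by omega
      have hMx : maj n x = -1 := maj_neg hn x hx1
      by_cases hy : u+1 ≤ wt (flip x z)
      · have hMy : maj n (flip x z) = 1 := maj_pos hn _ hy
        have hy' : ¬ (wt (flip x z) ≤ u) := by omega
        rcases hg1 x with hgx | hgx <;> rcases hg1 (flip x z) with hgy | hgy <;>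
          · simp only [he]
            rw [hMx, hMy]
            norm_num [hgx, hgy, hx, hy, hx1, hy'] <;> ring
      · have hy1 : wt (flip x z) ≤ u := by omega
        have hMy : maj n (flip x z) = -1 := maj_neg hn _ hy1
        rcases hg1 x with hgx | hgx <;> rcases hg1 (flip x z) with hgy | hgy <;>
          · simp only [he]
            rw [hMx, hMy]
            norm_num [hgx, hgy, hx, hy, hx1, hy1] <;> ring
  -- assemble
  have hdiff : ∑ x : Fin n → Bool, ∑ z : Fin n → Bool, w n δ z * (g x * g (flip x z))
      - ∑ x : Fin n → Bool, ∑ z : Fin n → Bool, w n δ z * (maj n x * maj n (flip x z))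
      = 2 * ∑ x : Fin n → Bool, ∑ z : Fin n → Bool, w n δ z * e x (flip x z) := by
    rw [← Finset.sum_sub_distrib]
    rw [Finset.sum_congr rfl (fun x _ => (Finset.sum_sub_distrib _ _).symm)]
    have hpt : ∀ x z : Fin n → Bool,
        w n δ z * (g x * g (flip x z)) - w n δ z * (maj n x * maj n (flip x z))
        = w n δ z * e x (flip x z) + w n δ z * e (flip x z) x := by
      intro x z
      rw [← mul_sub, P1 x (flip x z), mul_add]
    rw [Finset.sum_congr rfl (fun x _ => Finset.sum_congr rfl (fun z _ => hpt x z))]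
    rw [Finset.sum_congr rfl (fun x _ => Finset.sum_add_distrib), Finset.sum_add_distrib]
    rw [swap_sum e]
    ring
  set SG1 : ℝ := ∑ x : Fin n → Bool, ∑ z : Fin n → Bool,
      (if (g x = -1 ∧ u+1 ≤ wt x) ∧ (g (flip x z) = -1 ∧ wt (flip x z) ≤ u)
        then w n δ z else 0) with hSG1
  set SG2 : ℝ := ∑ x : Fin n → Bool, ∑ z : Fin n → Bool,
      (if (¬ g x = -1 ∧ wt x ≤ u) ∧ (¬ g (flip x z) = -1 ∧ u+1 ≤ wt (flip x z))
        then w n δ z else 0) with hSG2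
  set SB1 : ℝ := ∑ x : Fin n → Bool, ∑ z : Fin n → Bool,
      (if (g x = -1 ∧ u+1 ≤ wt x) ∧ (¬ g (flip x z) = -1 ∧ u+1 ≤ wt (flip x z))
        then w n δ z else 0) with hSB1
  set SB2 : ℝ := ∑ x : Fin n → Bool, ∑ z : Fin n → Bool,
      (if (¬ g x = -1 ∧ wt x ≤ u) ∧ (g (flip x z) = -1 ∧ wt (flip x z) ≤ u)
        then w n δ z else 0) with hSB2
  have hsum_e : ∑ x : Fin n → Bool, ∑ z : Fin n → Bool, w n δ z * e x (flip x z)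
      = 2*(SG1 + SG2) - 2*(SB1 + SB2) := by
    have h1 : ∀ x : Fin n → Bool, ∑ z : Fin n → Bool, w n δ z * e x (flip x z)
        = 2*((∑ z : Fin n → Bool, (if (g x = -1 ∧ u+1 ≤ wt x) ∧ (g (flip x z) = -1 ∧ wt (flip x z) ≤ u) then w n δ z else 0))
            + (∑ z : Fin n → Bool, (if (¬ g x = -1 ∧ wt x ≤ u) ∧ (¬ g (flip x z) = -1 ∧ u+1 ≤ wt (flip x z)) then w n δ z else 0)))
          - 2*((∑ z : Fin n → Bool, (if (g x = -1 ∧ u+1 ≤ wt x) ∧ (¬ g (flip x z) = -1 ∧ u+1 ≤ wt (flip x z)) then w n δ z else 0))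
            + (∑ z : Fin n → Bool, (if (¬ g x = -1 ∧ wt x ≤ u) ∧ (g (flip x z) = -1 ∧ wt (flip x z) ≤ u) then w n δ z else 0))) := by
      intro x
      rw [Finset.sum_congr rfl (fun z _ => P2 x z)]
      rw [Finset.sum_sub_distrib, ← Finset.mul_sum, ← Finset.mul_sum,
        Finset.sum_add_distrib, Finset.sum_add_distrib]
    rw [Finset.sum_congr rfl (fun x _ => h1 x)]
    rw [Finset.sum_sub_distrib, ← Finset.mul_sum, ← Finset.mul_sum,
      Finset.sum_add_distrib, Finset.sum_add_distrib]
  have hs1 : SB1 ≤ SG1 := by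
    rw [hSB1, hSG1]
    rw [collapse (δ := δ) (fun x => g x = -1 ∧ u+1 ≤ wt x)
      (fun x z => ¬ g (flip x z) = -1 ∧ u+1 ≤ wt (flip x z))]
    rw [collapse (δ := δ) (fun x => g x = -1 ∧ u+1 ≤ wt x)
      (fun x z => g (flip x z) = -1 ∧ wt (flip x z) ≤ u)]
    exact side (fun v => g v = -1) hn hu hδ0 hδγ hA
  have hs2 : SB2 ≤ SG2 := by
    rw [hSB2, hSG2]
    have eB : ∑ x : Fin n → Bool, ∑ z : Fin n → Bool,
        (if (¬ g x = -1 ∧ wt x ≤ u) ∧ (g (flip x z) = -1 ∧ wt (flip x z) ≤ u) then w n δ z else 0)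
        = ∑ x : Fin n → Bool, ∑ z : Fin n → Bool,
        (if ((¬ g (neg x) = -1) ∧ u+1 ≤ wt x) ∧ (¬ (¬ g (neg (flip x z)) = -1) ∧ u+1 ≤ wt (flip x z)) then w n δ z else 0) := by
      rw [neg_sum (fun x => ∑ z : Fin n → Bool,
        (if (¬ g x = -1 ∧ wt x ≤ u) ∧ (g (flip x z) = -1 ∧ wt (flip x z) ≤ u) then w n δ z else 0))]
      refine Finset.sum_congr rfl (fun x _ => Finset.sum_congr rfl (fun z _ => ?_))
      refine if_congr ?_ rfl rfl
      have hwx := wt_neg x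
      have hwy := wt_neg (flip x z)
      have hfe : flip (neg x) z = neg (flip x z) := (neg_flip x z).symm
      rw [hfe]
      constructor
      · rintro ⟨⟨h1, h2⟩, h3, h4⟩
        have hx2 : wt (neg x) ≤ u := by omega
        have hy2 : wt (neg (flip x z)) ≤ u := by omega
        exact ⟨⟨h1, by omega⟩, not_not.2 h3, by omega⟩
      · rintro ⟨⟨h1, h2⟩, h3, h4⟩
        exact ⟨⟨h1, by omega⟩, not_not.1 h3, by omega⟩
    have eG : ∑ x : Fin n → Bool, ∑ z : Fin n → Bool,
        (if (¬ g x = -1 ∧ wt x ≤ u) ∧ (¬ g (flip x z) = -1 ∧ u+1 ≤ wt (flip x z)) then w n δ z else 0)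
        = ∑ x : Fin n → Bool, ∑ z : Fin n → Bool,
        (if ((¬ g (neg x) = -1) ∧ u+1 ≤ wt x) ∧ ((¬ g (neg (flip x z)) = -1) ∧ wt (flip x z) ≤ u) then w n δ z else 0) := by
      rw [neg_sum (fun x => ∑ z : Fin n → Bool,
        (if (¬ g x = -1 ∧ wt x ≤ u) ∧ (¬ g (flip x z) = -1 ∧ u+1 ≤ wt (flip x z)) then w n δ z else 0))]
      refine Finset.sum_congr rfl (fun x _ => Finset.sum_congr rfl (fun z _ => ?_))
      refine if_congr ?_ rfl rfl
      have hwx := wt_neg x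
      have hwy := wt_neg (flip x z)
      have hfe : flip (neg x) z = neg (flip x z) := (neg_flip x z).symm
      rw [hfe]
      constructor
      · rintro ⟨⟨h1, h2⟩, h3, h4⟩
        exact ⟨⟨h1, by omega⟩, h3, by omega⟩
      · rintro ⟨⟨h1, h2⟩, h3, h4⟩
        exact ⟨⟨h1, by omega⟩, h3, by omega⟩
    rw [eB, eG]
    rw [collapse (δ := δ) (fun x => (¬ g (neg x) = -1) ∧ u+1 ≤ wt x)
      (fun x z => ¬ (¬ g (neg (flip x z)) = -1) ∧ u+1 ≤ wt (flip x z))]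
    rw [collapse (δ := δ) (fun x => (¬ g (neg x) = -1) ∧ u+1 ≤ wt x)
      (fun x z => (¬ g (neg (flip x z)) = -1) ∧ wt (flip x z) ≤ u)]
    exact side (fun v => ¬ g (neg v) = -1) hn hu hδ0 hδγ hA'
  linarith

lemma flip_comm3 (x z m : Fin n → Bool) : flip (flip x z) m = flip (flip x m) z := by
  funext i
  simp only [flip]
  by_cases h1 : x i <;> by_cases h2 : z i <;> by_cases h3 : m i <;> simp [h1, h2, h3]

lemma stab_eq (ρ : ℝ) (f : (Fin n → Bool) → ℝ) :
    stab n ρ f = (1 / 2 ^ n) * ∑ x : Fin n → Bool, ∑ z : Fin n → Bool,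
      w n ((1-ρ)/2) z * (f x * f (flip x z)) := by
  rw [stab]
  congr 1
  refine Finset.sum_congr rfl (fun x _ => Finset.sum_congr rfl (fun z _ => ?_))
  congr 1
  refine Finset.prod_congr rfl (fun i _ => ?_)
  by_cases h : z i <;> simp [h] <;> ring

end S7

theorem stmt7 (n : ℕ) (hodd : Odd n) (hn : 5 ≤ n)
    (f : (Fin n → Bool) → ℝ) (hf : ∀ x, f x = 1 ∨ f x = -1)
    (hunate : ∀ i : Fin n,
      (∀ x : Fin n → Bool, f (Function.update x i false) ≤ f (Function.update x i true)) ∨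
      (∀ x : Fin n → Bool, f (Function.update x i true) ≤ f (Function.update x i false)))
    (hbias : ∑ x : Fin n → Bool, f x = 0)
    (ρ : ℝ) (hρ0 : 1 - 2 * (4 / (((n : ℝ) + 7) * ((n : ℝ) - 1))) < ρ) (hρ1 : ρ < 1) :
    stab n ρ (maj n) ≤ stab n ρ f := by
  classical
  obtain ⟨u, hu⟩ : ∃ u, n = 2*u + 1 := by
    obtain ⟨m, hm⟩ := hodd
    exact ⟨m, by omega⟩
  have hu2 : 2 ≤ u := by omega
  set δ : ℝ := (1-ρ)/2 with hδ
  have hδ0 : 0 < δ := by rw [hδ]; linarith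
  have hδγ : δ ≤ 4/(((n:ℝ)+7)*((n:ℝ)-1)) := by rw [hδ]; linarith
  -- monotone rearrangement of f
  set msk : Fin n → Bool := fun i =>
    if (∀ x : Fin n → Bool, f (Function.update x i false) ≤ f (Function.update x i true))
      then false else true with hmsk
  set g : (Fin n → Bool) → ℝ := fun x => f (S7.flip x msk) with hg
  have hg1 : ∀ x, g x = 1 ∨ g x = -1 := fun x => hf _
  have hflipupd : ∀ (x : Fin n → Bool) (i : Fin n) (b : Bool),
      S7.flip (Function.update x i b) msk
        = Function.update (S7.flip x msk) i (xor b (msk i)) := by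
    intro x i b
    funext j
    by_cases hj : j = i
    · subst hj; simp [S7.flip]
    · simp [S7.flip, Function.update, hj]
  have hmono : ∀ (x : Fin n → Bool) (i : Fin n),
      g (Function.update x i false) ≤ g (Function.update x i true) := by
    intro x i
    rw [hg]
    simp only
    rw [hflipupd, hflipupd]
    by_cases hci : ∀ x : Fin n → Bool, f (Function.update x i false) ≤ f (Function.update x i true)
    · have hmi : msk i = false := by rw [hmsk]; simp [hci]
      rw [hmi]
      exact hci _
    · have hmi : msk i = true := by rw [hmsk]; simp [hci]
      rw [hmi]
      have hdec : ∀ x : Fin n → Bool, f (Function.update x i true) ≤ f (Function.update x i false) := by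
        rcases hunate i with h | h
        · exact absurd h hci
        · exact h
      simpa using hdec _
  have hcore := S7.core hu hu2 hδ0 hδγ g hg1 hmono
  have hre : ∑ x : Fin n → Bool, ∑ z : Fin n → Bool, S7.w n δ z * (g x * g (S7.flip x z))
      = ∑ x : Fin n → Bool, ∑ z : Fin n → Bool, S7.w n δ z * (f x * f (S7.flip x z)) := by
    rw [hg]
    simp only
    refine (Fintype.sum_bijective (fun x => S7.flip x msk)
      (S7.flip_involutive msk).bijective _ _ (fun x => ?_)).symm
    refine Finset.sum_congr rfl (fun z _ => ?_)
    have e1 : S7.flip (S7.flip x msk) msk = x := S7.flip_flip x msk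
    have e2 : S7.flip (S7.flip (S7.flip x msk) z) msk = S7.flip x z := by
      rw [S7.flip_comm3 (S7.flip x msk) z msk, S7.flip_flip]
    rw [e1, e2]
  rw [S7.stab_eq, S7.stab_eq]
  have h2n : (0:ℝ) ≤ 1/2^n := by positivity
  apply mul_le_mul_of_nonneg_left _ h2n
  rw [show (1-ρ)/2 = δ from rfl]
  calc ∑ x : Fin n → Bool, ∑ z : Fin n → Bool, S7.w n δ z * (maj n x * maj n (S7.flip x z))
      ≤ ∑ x : Fin n → Bool, ∑ z : Fin n → Bool, S7.w n δ z * (g x * g (S7.flip x z)) := hcore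
    _ = _ := hre
end

section
/- For every odd integer n ≥ 5, let γ'_n := 2/((n+2)(n-1)). For every unbiased function f : {-1,1}^n → {-1,1} (not necessarily unate or monotone) and every p with 0 < p < γ'_n, it holds that Φ_p(Maj_n) ≥ Φ_p(f). -/
open Finset

namespace Stmt9

/-! ### basic chi / sign lemmas -/

lemma chi_not (b : Bool) : chi (!b) = - chi b := by cases b <;> simp [chi]

lemma chi_xor (a b : Bool) : chi (xor a b) = if b then - chi a else chi a := by
  cases a <;> cases b <;> simp [chi]

lemma abs_chi (b : Bool) : |chi b| = 1 := by cases b <;> simp [chi]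

lemma sign_le_one (r : ℝ) : Real.sign r ≤ 1 := by
  rcases lt_trichotomy r 0 with h | h | h <;>
    simp [Real.sign_of_neg, Real.sign_of_pos, h] <;> norm_num

lemma neg_one_le_sign (r : ℝ) : -1 ≤ Real.sign r := by
  rcases lt_trichotomy r 0 with h | h | h <;>
    simp [Real.sign_of_neg, Real.sign_of_pos, h] <;> norm_num

lemma sign_mono {a b : ℝ} (h : a ≤ b) : Real.sign a ≤ Real.sign b := by
  rcases lt_trichotomy a 0 with ha | ha | ha
  · calc Real.sign a = -1 := Real.sign_of_neg ha
      _ ≤ Real.sign b := neg_one_le_sign b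
  · subst ha
    rcases lt_trichotomy b 0 with hb | hb | hb
    · linarith
    · subst hb; exact le_rfl
    · simp [Real.sign_of_pos hb, Real.sign_zero]
  · have hb : 0 < b := lt_of_lt_of_le ha h
    rw [Real.sign_of_pos hb, Real.sign_of_pos ha]

variable {n : ℕ}

/-- total weight `L y = ∑ chi (y i)` -/
noncomputable def Lw (n : ℕ) (y : Fin n → Bool) : ℝ := ∑ i, chi (y i)

lemma maj_eq_sign (y : Fin n → Bool) : maj n y = Real.sign (Lw n y) := rfl

lemma Lw_eq (y : Fin n → Bool) :
    Lw n y = 2 * (#(univ.filter (fun i => y i = true)) : ℝ) - n := by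
  have : ∀ i, chi (y i) = 2 * (if y i = true then (1:ℝ) else 0) - 1 := by
    intro i; cases h : y i <;> simp [chi] <;> norm_num
  rw [Lw]
  rw [Finset.sum_congr rfl fun i _ => this i]
  rw [Finset.sum_sub_distrib, ← Finset.mul_sum, Finset.sum_boole, Finset.sum_const]
  simp [mul_comm]

lemma one_le_abs_Lw (hodd : Odd n) (y : Fin n → Bool) : 1 ≤ |Lw n y| := by
  obtain ⟨k, hk⟩ := hodd
  set t := #(univ.filter (fun i => y i = true))
  have h : Lw n y = ((2 * (t:ℤ) - n : ℤ) : ℝ) := by rw [Lw_eq]; push_cast; ring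
  rw [h, ← Int.cast_abs]
  have hn : (n:ℤ) = 2 * k + 1 := by exact_mod_cast hk
  have : (1:ℤ) ≤ |2 * (t:ℤ) - n| := by
    rcases abs_cases (2 * (t:ℤ) - n) with ⟨h1, h2⟩ | ⟨h1, h2⟩ <;> omega
  exact_mod_cast this

lemma maj_mul_Lw (hodd : Odd n) (y : Fin n → Bool) : maj n y * Lw n y = |Lw n y| := by
  have h := one_le_abs_Lw hodd y
  rcases lt_trichotomy (Lw n y) 0 with h' | h' | h'
  · rw [maj_eq_sign, Real.sign_of_neg h', abs_of_neg h']; ring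
  · rw [h'] at h; simp at h; linarith
  · rw [maj_eq_sign, Real.sign_of_pos h', abs_of_pos h']; ring

lemma maj_pm (hodd : Odd n) (y : Fin n → Bool) : maj n y = 1 ∨ maj n y = -1 := by
  have h := one_le_abs_Lw hodd y
  rcases lt_trichotomy (Lw n y) 0 with h' | h' | h'
  · right; rw [maj_eq_sign, Real.sign_of_neg h']
  · rw [h'] at h; simp at h; linarith
  · left; rw [maj_eq_sign, Real.sign_of_pos h']

/-! ### selection, weights, terms -/

def sel (s x z : Fin n → Bool) : Fin n → Bool := fun i => if s i then x i else z i

noncomputable def wgt (n : ℕ) (p : ℝ) (s : Fin n → Bool) : ℝ :=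
  ∏ i, if s i then p else 1 - p

noncomputable def term (n : ℕ) (f : (Fin n → Bool) → ℝ) (s : Fin n → Bool) : ℝ :=
  (1 / 2 ^ n) * ∑ x : Fin n → Bool, |(1 / 2 ^ n) * ∑ z : Fin n → Bool, f (sel s x z)|

lemma phi_eq (p : ℝ) (f : (Fin n → Bool) → ℝ) :
    phi n p f = ∑ s : Fin n → Bool, wgt n p s * term n f s := rfl

/-- xor-translation as an equivalence -/
def xorEquiv (σ : Fin n → Bool) : (Fin n → Bool) ≃ (Fin n → Bool) where
  toFun x := fun i => xor (x i) (σ i)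
  invFun x := fun i => xor (x i) (σ i)
  left_inv x := by funext i; simp [Bool.xor_assoc]
  right_inv x := by funext i; simp [Bool.xor_assoc]

/-- the (x,z) ↦ (sel s x z, sel s z x) involution -/
def selEquiv (s : Fin n → Bool) :
    ((Fin n → Bool) × (Fin n → Bool)) ≃ ((Fin n → Bool) × (Fin n → Bool)) where
  toFun q := (sel s q.1 q.2, sel s q.2 q.1)
  invFun q := (sel s q.1 q.2, sel s q.2 q.1)
  left_inv q := by
    refine Prod.ext ?_ ?_ <;> funext i <;> by_cases h : s i <;> simp [sel, h]
  right_inv q := by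
    refine Prod.ext ?_ ?_ <;> funext i <;> by_cases h : s i <;> simp [sel, h]

lemma card_cube : (Fintype.card (Fin n → Bool) : ℝ) = 2 ^ n := by
  simp [Fintype.card_fun]

/-- counting lemma -/
lemma sum_sel (s : Fin n → Bool) (F : (Fin n → Bool) → ℝ) :
    ∑ x : Fin n → Bool, ∑ z : Fin n → Bool, F (sel s x z) = 2 ^ n * ∑ y : Fin n → Bool, F y := by
  have h1 : ∑ q : (Fin n → Bool) × (Fin n → Bool), F ((selEquiv s q).1)
      = ∑ q : (Fin n → Bool) × (Fin n → Bool), F q.1 :=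
    Equiv.sum_comp (selEquiv s) (fun q => F q.1)
  have h2 : ∑ q : (Fin n → Bool) × (Fin n → Bool), F ((selEquiv s q).1)
      = ∑ x : Fin n → Bool, ∑ z : Fin n → Bool, F (sel s x z) := by
    rw [Fintype.sum_prod_type]; rfl
  have h3 : ∑ q : (Fin n → Bool) × (Fin n → Bool), F q.1
      = 2 ^ n * ∑ y : Fin n → Bool, F y := by
    rw [Fintype.sum_prod_type]
    calc ∑ x : Fin n → Bool, ∑ _z : Fin n → Bool, F x
        = ∑ x : Fin n → Bool, (2 ^ n : ℝ) * F x := by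
          apply Finset.sum_congr rfl; intro x _
          rw [Finset.sum_const, card_univ, nsmul_eq_mul, Fintype.card_fun]
          norm_num
      _ = 2 ^ n * ∑ y, F y := by rw [Finset.mul_sum]
  rw [← h2, h1, h3]

/-! ### term comparison and invariance -/

lemma term_sub_le (f g : (Fin n → Bool) → ℝ) (s : Fin n → Bool) :
    term n f s - term n g s ≤ (1 / 2 ^ n) * ∑ y : Fin n → Bool, |f y - g y| := by
  have hpos : (0:ℝ) < 1 / 2 ^ n := by positivity
  have key : ∀ x : Fin n → Bool,
      |(1 / 2 ^ n) * ∑ z : Fin n → Bool, f (sel s x z)|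
        - |(1 / 2 ^ n) * ∑ z : Fin n → Bool, g (sel s x z)|
      ≤ (1 / 2 ^ n) * ∑ z : Fin n → Bool, |f (sel s x z) - g (sel s x z)| := by
    intro x
    refine le_trans (abs_sub_abs_le_abs_sub _ _) ?_
    rw [← mul_sub, ← Finset.sum_sub_distrib, abs_mul, abs_of_pos hpos]
    exact mul_le_mul_of_nonneg_left (Finset.abs_sum_le_sum_abs _ _) (le_of_lt hpos)
  have h1 : term n f s - term n g s
      ≤ (1 / 2 ^ n) * ∑ x : Fin n → Bool,
          ((1 / 2 ^ n) * ∑ z : Fin n → Bool, |f (sel s x z) - g (sel s x z)|) := by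
    rw [term, term, ← mul_sub, ← Finset.sum_sub_distrib]
    exact mul_le_mul_of_nonneg_left (Finset.sum_le_sum fun x _ => key x) (le_of_lt hpos)
  refine le_trans h1 ?_
  apply le_of_eq
  rw [← Finset.mul_sum, sum_sel s (fun y => |f y - g y|)]
  have h2n : (2:ℝ) ^ n ≠ 0 := by positivity
  field_simp

lemma term_xor (f : (Fin n → Bool) → ℝ) (σ : Fin n → Bool) (s : Fin n → Bool) :
    term n (fun x => f (fun i => xor (x i) (σ i))) s = term n f s := by
  have hsel : ∀ x z : Fin n → Bool,
      (fun i => xor (sel s x z i) (σ i)) = sel s (xorEquiv σ x) (xorEquiv σ z) := by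
    intro x z; funext i; by_cases h : s i <;> simp [sel, xorEquiv, h]
  rw [term, term]
  congr 1
  have inner : ∀ x : Fin n → Bool,
      ∑ z : Fin n → Bool, f (fun i => xor (sel s x z i) (σ i))
        = ∑ z : Fin n → Bool, f (sel s (xorEquiv σ x) z) := by
    intro x
    rw [Finset.sum_congr rfl fun z _ => by rw [hsel x z]]
    exact Equiv.sum_comp (xorEquiv σ) (fun z => f (sel s (xorEquiv σ x) z))
  calc ∑ x : Fin n → Bool, |(1 / 2 ^ n) * ∑ z : Fin n → Bool,
          (fun x => f (fun i => xor (x i) (σ i))) (sel s x z)|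
      = ∑ x : Fin n → Bool, |(1 / 2 ^ n) * ∑ z : Fin n → Bool, f (sel s (xorEquiv σ x) z)| := by
        apply Finset.sum_congr rfl; intro x _
        rw [show (∑ z : Fin n → Bool, (fun x => f (fun i => xor (x i) (σ i))) (sel s x z))
            = ∑ z : Fin n → Bool, f (fun i => xor (sel s x z i) (σ i)) from rfl, inner x]
    _ = ∑ x : Fin n → Bool, |(1 / 2 ^ n) * ∑ z : Fin n → Bool, f (sel s x z)| :=
        Equiv.sum_comp (xorEquiv σ) (fun x => |(1 / 2 ^ n) * ∑ z : Fin n → Bool, f (sel s x z)|)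

/-! ### single-coordinate computations -/

def indC (i : Fin n) : Fin n → Bool := fun j => decide (j = i)

noncomputable def flipC (i : Fin n) : (Fin n → Bool) ≃ (Fin n → Bool) := xorEquiv (indC i)

lemma flipC_apply (i : Fin n) (z : Fin n → Bool) (j : Fin n) :
    flipC i z j = if j = i then !(z j) else z j := by
  by_cases h : j = i <;> simp [flipC, xorEquiv, indC, h]

lemma flipC_at (i : Fin n) (z : Fin n → Bool) : flipC i z i = !(z i) := by
  simp [flipC_apply]

lemma upd_true (i : Fin n) (z : Fin n → Bool) (hzi : z i = true) :
    Function.update z i true = z ∧ Function.update z i false = flipC i z := by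
  constructor <;> funext j <;> by_cases h : j = i <;>
    simp [Function.update, flipC_apply, h, hzi]

lemma upd_false (i : Fin n) (z : Fin n → Bool) (hzi : z i = false) :
    Function.update z i false = z ∧ Function.update z i true = flipC i z := by
  constructor <;> funext j <;> by_cases h : j = i <;>
    simp [Function.update, flipC_apply, h, hzi]

lemma sum_update (h : (Fin n → Bool) → ℝ) (i : Fin n) (b : Bool) :
    ∑ z : Fin n → Bool, h (Function.update z i b)
      = (∑ z : Fin n → Bool, h z) + chi b * ∑ z : Fin n → Bool, chi (z i) * h z := by
  set S := ∑ z : Fin n → Bool, h z with hS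
  set C := ∑ z : Fin n → Bool, chi (z i) * h z with hC
  have hflip : ∑ z : Fin n → Bool, h (flipC i z) = S :=
    Equiv.sum_comp (flipC i) h
  have hneg : ∑ z : Fin n → Bool, chi (z i) * h (flipC i z) = -C := by
    have h0 := Equiv.sum_comp (flipC i) (fun z => chi (z i) * h z)
    have h1 : ∀ z : Fin n → Bool,
        chi ((flipC i z) i) * h (flipC i z) = -(chi (z i) * h (flipC i z)) := by
      intro z; rw [flipC_at, chi_not]; ring
    rw [Finset.sum_congr rfl fun z _ => h1 z, Finset.sum_neg_distrib] at h0
    rw [hC]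
    linarith
  have haux1 : (∑ z : Fin n → Bool, h (Function.update z i true))
      + (∑ z : Fin n → Bool, h (Function.update z i false)) = 2 * S := by
    rw [← Finset.sum_add_distrib]
    have key : ∀ z : Fin n → Bool,
        h (Function.update z i true) + h (Function.update z i false) = h z + h (flipC i z) := by
      intro z
      cases hzi : z i
      · obtain ⟨h1, h2⟩ := upd_false i z hzi; rw [h1, h2]; ring
      · obtain ⟨h1, h2⟩ := upd_true i z hzi; rw [h1, h2]
    rw [Finset.sum_congr rfl fun z _ => key z, Finset.sum_add_distrib, hflip]
    ring
  have haux2 : (∑ z : Fin n → Bool, h (Function.update z i true))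
      - (∑ z : Fin n → Bool, h (Function.update z i false)) = 2 * C := by
    rw [← Finset.sum_sub_distrib]
    have key : ∀ z : Fin n → Bool,
        h (Function.update z i true) - h (Function.update z i false)
          = chi (z i) * h z - chi (z i) * h (flipC i z) := by
      intro z
      cases hzi : z i
      · obtain ⟨h1, h2⟩ := upd_false i z hzi; rw [h1, h2]; simp [chi]; ring
      · obtain ⟨h1, h2⟩ := upd_true i z hzi; rw [h1, h2]; simp [chi]
    rw [Finset.sum_congr rfl fun z _ => key z, Finset.sum_sub_distrib, hneg]
    ring
  cases b
  · simp only [chi, Bool.false_eq_true, if_false]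
    linarith
  · simp only [chi, if_true]
    linarith

/-- unnormalized degree-1 Fourier coefficient -/
noncomputable def Fh (n : ℕ) (h : (Fin n → Bool) → ℝ) (i : Fin n) : ℝ :=
  ∑ z : Fin n → Bool, chi (z i) * h z

lemma sel_indC (i : Fin n) (x z : Fin n → Bool) :
    sel (indC i) x z = Function.update z i (x i) := by
  funext j; by_cases h : j = i <;> simp [sel, indC, Function.update, h]

lemma term_zero (h : (Fin n → Bool) → ℝ) (hbal : ∑ y : Fin n → Bool, h y = 0) :
    term n h (fun _ => false) = 0 := by
  have hsel : ∀ x z : Fin n → Bool, sel (fun _ => false) x z = z := by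
    intro x z; funext j; simp [sel]
  rw [term]
  have : ∀ x : Fin n → Bool,
      |(1 / 2 ^ n : ℝ) * ∑ z : Fin n → Bool, h (sel (fun _ => false) x z)| = 0 := by
    intro x
    rw [Finset.sum_congr rfl fun z _ => by rw [hsel x z], hbal]
    simp
  rw [Finset.sum_congr rfl fun x _ => this x]
  simp

lemma term_indC (h : (Fin n → Bool) → ℝ) (hbal : ∑ y : Fin n → Bool, h y = 0) (i : Fin n) :
    term n h (indC i) = (1 / 2 ^ n) * |Fh n h i| := by
  rw [term]
  have inner : ∀ x : Fin n → Bool,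
      ∑ z : Fin n → Bool, h (sel (indC i) x z) = chi (x i) * Fh n h i := by
    intro x
    rw [Finset.sum_congr rfl fun z _ => by rw [sel_indC i x z], sum_update h i (x i), hbal]
    rw [Fh]; ring
  have habs : ∀ x : Fin n → Bool,
      |(1 / 2 ^ n : ℝ) * ∑ z : Fin n → Bool, h (sel (indC i) x z)|
        = (1 / 2 ^ n) * |Fh n h i| := by
    intro x
    rw [inner x, abs_mul, abs_mul, abs_chi, abs_of_pos (by positivity : (0:ℝ) < 1 / 2 ^ n)]
    ring
  rw [Finset.sum_congr rfl fun x _ => habs x, Finset.sum_const, card_univ, nsmul_eq_mul,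
    Fintype.card_fun]
  have h2n : (2:ℝ) ^ n ≠ 0 := by positivity
  simp only [Fintype.card_bool, Fintype.card_fin]
  push_cast
  field_simp

/-! ### weight lemmas -/

lemma wgt_nonneg {p : ℝ} (hp0 : 0 ≤ p) (hp1 : p ≤ 1) (s : Fin n → Bool) : 0 ≤ wgt n p s := by
  apply Finset.prod_nonneg
  intro i _
  by_cases h : s i <;> simp [h] <;> linarith

lemma sum_wgt (p : ℝ) : ∑ s : Fin n → Bool, wgt n p s = 1 := by
  have := Finset.prod_univ_sum (fun _ : Fin n => (univ : Finset Bool))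
    (fun _ b => if b then p else 1 - p)
  rw [Fintype.piFinset_univ] at this
  rw [show (∑ s : Fin n → Bool, wgt n p s) = ∑ s : Fin n → Bool, ∏ i, if s i then p else 1 - p from rfl]
  rw [← this]
  have : ∀ i : Fin n, (∑ b : Bool, if b then p else 1 - p) = 1 := by
    intro i; rw [Fintype.sum_bool]; simp
  rw [Finset.prod_congr rfl fun i _ => this i]
  simp

lemma wgt_zero (p : ℝ) : wgt n p (fun _ => false) = (1 - p) ^ n := by
  rw [wgt]
  simp

lemma wgt_indC (p : ℝ) (i : Fin n) : wgt n p (indC i) = p * (1 - p) ^ (n - 1) := by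
  rw [wgt, ← Finset.mul_prod_erase univ _ (mem_univ i)]
  have h1 : ((if indC i i then p else 1 - p) : ℝ) = p := by simp [indC]
  have h2 : ∀ j ∈ univ.erase i, ((if indC i j then p else 1 - p) : ℝ) = 1 - p := by
    intro j hj
    have : j ≠ i := (Finset.mem_erase.mp hj).1
    simp [indC, this]
  rw [h1, Finset.prod_congr rfl h2, Finset.prod_const, Finset.card_erase_of_mem (mem_univ i),
    card_univ, Fintype.card_fin]

/-! ### majority facts -/

lemma Lw_flip (i : Fin n) (y : Fin n → Bool) :
    Lw n (flipC i y) = Lw n y - 2 * chi (y i) := by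
  have key : ∀ j : Fin n, chi (flipC i y j)
      = chi (y j) + (if j = i then -2 * chi (y i) else 0) := by
    intro j
    by_cases h : j = i
    · subst h; rw [flipC_apply]; simp only [if_true, chi_not]; ring
    · rw [flipC_apply]; simp [h]
  rw [Lw, Finset.sum_congr rfl fun j _ => key j, Finset.sum_add_distrib, Finset.sum_ite_eq' univ i]
  simp [Lw]
  ring

lemma maj_unbiased (hodd : Odd n) : ∑ y : Fin n → Bool, maj n y = 0 := by
  have hrev := Equiv.sum_comp (xorEquiv (fun _ => true)) (maj n)
  have hneg : ∀ y : Fin n → Bool, maj n ((xorEquiv (fun _ => true)) y) = - maj n y := by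
    intro y
    have hL : Lw n ((xorEquiv (fun _ => true)) y) = - Lw n y := by
      rw [Lw, Lw, ← Finset.sum_neg_distrib]
      apply Finset.sum_congr rfl
      intro j _
      show chi (xor (y j) true) = - chi (y j)
      rw [Bool.xor_true, chi_not]
    rw [maj_eq_sign, maj_eq_sign, hL, Real.sign_neg]
  rw [Finset.sum_congr rfl fun y _ => hneg y, Finset.sum_neg_distrib] at hrev
  linarith

lemma Fh_maj_nonneg (i : Fin n) : 0 ≤ Fh n (maj n) i := by
  have hrev := Equiv.sum_comp (flipC i) (fun y => chi (y i) * maj n y)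
  have hstep : ∀ y : Fin n → Bool,
      chi ((flipC i y) i) * maj n (flipC i y) = - (chi (y i) * maj n (flipC i y)) := by
    intro y; rw [flipC_at, chi_not]; ring
  rw [Finset.sum_congr rfl fun y _ => hstep y, Finset.sum_neg_distrib] at hrev
  -- hrev : - ∑ y, chi (y i) * maj n (flipC i y) = Fh n (maj n) i
  have htwo : 2 * Fh n (maj n) i
      = ∑ y : Fin n → Bool, chi (y i) * (maj n y - maj n (flipC i y)) := by
    rw [show (∑ y : Fin n → Bool, chi (y i) * (maj n y - maj n (flipC i y)))
        = (∑ y : Fin n → Bool, chi (y i) * maj n y)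
          - ∑ y : Fin n → Bool, chi (y i) * maj n (flipC i y) by
      rw [← Finset.sum_sub_distrib]; apply Finset.sum_congr rfl; intro y _; ring]
    rw [show (∑ y : Fin n → Bool, chi (y i) * maj n (flipC i y)) = - Fh n (maj n) i by
      rw [Fh]; linarith [hrev]]
    rw [Fh]; ring
  have hterm : ∀ y : Fin n → Bool, 0 ≤ chi (y i) * (maj n y - maj n (flipC i y)) := by
    intro y
    rw [maj_eq_sign, maj_eq_sign, Lw_flip]
    cases hyi : y i
    · have h1 : Real.sign (Lw n y) ≤ Real.sign (Lw n y - 2 * chi false) := by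
        apply sign_mono; simp [chi]
      simp only [chi, Bool.false_eq_true, if_false] at *
      nlinarith [h1]
    · have h1 : Real.sign (Lw n y - 2 * chi true) ≤ Real.sign (Lw n y) := by
        apply sign_mono; simp [chi]
      simp only [chi, if_true] at *
      nlinarith [h1]
  nlinarith [htwo, Finset.sum_nonneg fun y (_ : y ∈ univ) => hterm y]

/-! ### the analytic inequality -/

noncomputable def B2 (m : ℕ) (p : ℝ) : ℝ := 1 - m * p + m * ((m:ℝ) - 1) / 2 * p ^ 2

noncomputable def B3 (m : ℕ) (p : ℝ) : ℝ :=
  1 - m * p + m * ((m:ℝ) - 1) / 2 * p ^ 2 - m * ((m:ℝ) - 1) * ((m:ℝ) - 2) / 6 * p ^ 3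

lemma mm1_nonneg (m : ℕ) : (0:ℝ) ≤ (m:ℝ) * ((m:ℝ) - 1) := by
  rcases Nat.eq_zero_or_pos m with h | h
  · subst h; norm_num
  · have : (1:ℝ) ≤ (m:ℝ) := by exact_mod_cast h
    nlinarith

lemma pow_le_B2 (m : ℕ) {p : ℝ} (h0 : 0 ≤ p) (h1 : p ≤ 1) : (1 - p) ^ m ≤ B2 m p := by
  induction m with
  | zero => simp [B2]
  | succ m ih =>
    have hq : (0:ℝ) ≤ 1 - p := by linarith
    have step1 : (1 - p) ^ (m + 1) ≤ B2 m p * (1 - p) := by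
      rw [pow_succ]
      exact mul_le_mul_of_nonneg_right ih hq
    refine le_trans step1 ?_
    have hmm := mm1_nonneg m
    have hp3 : 0 ≤ p ^ 3 := by positivity
    rw [B2, B2]
    push_cast
    nlinarith [mul_nonneg hmm hp3]

lemma B3_le_pow (m : ℕ) {p : ℝ} (h0 : 0 ≤ p) (h1 : p ≤ 1) : B3 m p ≤ (1 - p) ^ m := by
  induction m with
  | zero => simp [B3]
  | succ m ih =>
    have hu2 := pow_le_B2 m h0 h1
    have step1 : B3 m p - p * B2 m p ≤ (1 - p) ^ (m + 1) := by
      have : (1 - p) ^ (m + 1) = (1 - p) ^ m - p * (1 - p) ^ m := by ring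
      rw [this]
      have h2 : p * (1 - p) ^ m ≤ p * B2 m p := mul_le_mul_of_nonneg_left hu2 h0
      linarith
    refine le_trans ?_ step1
    apply le_of_eq
    rw [B3, B3, B2]
    push_cast
    ring

lemma key_poly (m : ℕ) (hm : 4 ≤ m) {p : ℝ} (h0 : 0 < p)
    (hp : p * (((m:ℝ) + 3) * (m:ℝ)) ≤ 2) :
    1 ≤ (1 + ((m:ℝ) + 1) * p) * (1 - p) ^ m := by
  have hm4 : (4:ℝ) ≤ (m:ℝ) := by exact_mod_cast hm
  have hple : p ≤ 1 := by
    have h28 : (0:ℝ) ≤ ((m:ℝ) + 3) * (m:ℝ) - 28 := by nlinarith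
    nlinarith [mul_nonneg h0.le h28]
  have hB3 := B3_le_pow m h0.le hple
  have hposf : (0:ℝ) ≤ 1 + ((m:ℝ) + 1) * p := by nlinarith
  have step1 : (1 + ((m:ℝ) + 1) * p) * B3 m p ≤ (1 + ((m:ℝ) + 1) * p) * (1 - p) ^ m :=
    mul_le_mul_of_nonneg_left hB3 hposf
  refine le_trans ?_ step1
  have t1 : (0:ℝ) ≤ p * (2 - p * (((m:ℝ) + 3) * (m:ℝ))) := mul_nonneg h0.le (by linarith)
  have hbr : ((m:ℝ) + 1) * ((m:ℝ) - 2) * p ≤ 2 := by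
    have h1 : ((m:ℝ) + 1) * ((m:ℝ) - 2) * p ≤ ((m:ℝ) + 3) * (m:ℝ) * p := by nlinarith
    nlinarith
  have t3 : (0:ℝ) ≤ p ^ 3 * ((m:ℝ) * ((m:ℝ) - 1)) * (2 * (m:ℝ) + 5 - ((m:ℝ) + 1) * ((m:ℝ) - 2) * p) := by
    apply mul_nonneg (mul_nonneg (by positivity) (mm1_nonneg m))
    nlinarith
  have expand : (1 + ((m:ℝ) + 1) * p) * B3 m p
      = 1 + (1/2) * (p * (2 - p * (((m:ℝ) + 3) * (m:ℝ))))
        + (1/6) * (p ^ 3 * ((m:ℝ) * ((m:ℝ) - 1)) * (2 * (m:ℝ) + 5 - ((m:ℝ) + 1) * ((m:ℝ) - 2) * p)) := by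
    rw [B3]; ring
  rw [expand]
  linarith

/-! ### surplus at level one -/

lemma pointwise_surplus (hodd : Odd n) {g : (Fin n → Bool) → ℝ}
    (hgpm : ∀ x, g x = 1 ∨ g x = -1) (y : Fin n → Bool) :
    |maj n y - g y| ≤ (maj n y - g y) * Lw n y := by
  have h1 := maj_mul_Lw hodd y
  have h2 := one_le_abs_Lw hodd y
  rcases maj_pm hodd y with hM | hM <;> rcases hgpm y with hG | hG <;> rw [hM, hG] <;>
    rw [hM] at h1
  · simp
  · have hL : Lw n y = |Lw n y| := by linarith
    rw [show (1:ℝ) - -1 = 2 by norm_num, abs_two]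
    nlinarith
  · have hL : Lw n y = -|Lw n y| := by linarith
    rw [show (-1:ℝ) - 1 = -2 by norm_num, abs_neg, abs_two]
    nlinarith
  · simp

lemma sum_surplus (hodd : Odd n) {g : (Fin n → Bool) → ℝ}
    (hgpm : ∀ x, g x = 1 ∨ g x = -1) :
    ∑ y : Fin n → Bool, |maj n y - g y|
      ≤ ∑ i : Fin n, (Fh n (maj n) i - Fh n g i) := by
  have hswap : ∑ i : Fin n, (Fh n (maj n) i - Fh n g i)
      = ∑ y : Fin n → Bool, (maj n y - g y) * Lw n y := by
    have h1 : ∀ i : Fin n, Fh n (maj n) i - Fh n g i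
        = ∑ y : Fin n → Bool, chi (y i) * (maj n y - g y) := by
      intro i
      rw [Fh, Fh, ← Finset.sum_sub_distrib]
      apply Finset.sum_congr rfl; intro y _; ring
    rw [Finset.sum_congr rfl fun i _ => h1 i, Finset.sum_comm]
    apply Finset.sum_congr rfl; intro y _
    rw [Lw, Finset.mul_sum]
    apply Finset.sum_congr rfl; intro i _; ring
  rw [hswap]
  exact Finset.sum_le_sum fun y _ => pointwise_surplus hodd hgpm y

/-! ### xor transfer lemmas -/

lemma sum_xor (f : (Fin n → Bool) → ℝ) (σ : Fin n → Bool) :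
    ∑ x : Fin n → Bool, f (fun j => xor (x j) (σ j)) = ∑ x : Fin n → Bool, f x :=
  Equiv.sum_comp (xorEquiv σ) f

lemma Fh_xor (f : (Fin n → Bool) → ℝ) (σ : Fin n → Bool) (i : Fin n) :
    Fh n (fun x => f (fun j => xor (x j) (σ j))) i
      = if σ i then - Fh n f i else Fh n f i := by
  have hre := Equiv.sum_comp (xorEquiv σ)
    (fun z => chi (z i) * (fun x => f (fun j => xor (x j) (σ j))) z)
  have hsimp : ∀ z : Fin n → Bool,
      chi ((xorEquiv σ z) i) * (fun x => f (fun j => xor (x j) (σ j))) (xorEquiv σ z)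
        = chi (xor (z i) (σ i)) * f z := by
    intro z
    have : (fun j => xor ((xorEquiv σ z) j) (σ j)) = z := by
      funext j; simp [xorEquiv, Bool.xor_assoc]
    show chi (xor (z i) (σ i)) * f (fun j => xor ((xorEquiv σ z) j) (σ j)) = _
    rw [this]
  rw [Finset.sum_congr rfl fun z _ => hsimp z] at hre
  rw [Fh, ← hre]
  cases hσ : σ i
  · simp only [if_false, Bool.false_eq_true]
    apply Finset.sum_congr rfl; intro z _
    rw [chi_xor]
    simp
  · simp only [if_true]
    rw [Fh, ← Finset.sum_neg_distrib]
    apply Finset.sum_congr rfl; intro z _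
    rw [chi_xor]
    simp

lemma indC_inj : Function.Injective (indC : Fin n → (Fin n → Bool)) := by
  intro i j h
  have := congrFun h i
  simp [indC] at this
  first | exact this | exact this.symm

lemma s0_notin_image (hn : 1 ≤ n) :
    (fun _ => false) ∉ Finset.image (indC : Fin n → (Fin n → Bool)) univ := by
  intro h
  obtain ⟨i, _, hi⟩ := Finset.mem_image.mp h
  have := congrFun hi i
  simp [indC] at this

end Stmt9

open Stmt9 in
theorem stmt9 (n : ℕ) (hodd : Odd n) (hn : 5 ≤ n)
    (f : (Fin n → Bool) → ℝ) (hf : ∀ x, f x = 1 ∨ f x = -1)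
    (hbias : ∑ x : Fin n → Bool, f x = 0)
    (p : ℝ) (hp0 : 0 < p) (hp1 : p < 2 / (((n : ℝ) + 2) * ((n : ℝ) - 1))) :
    phi n p f ≤ phi n p (maj n) := by
  -- basic numeric facts
  obtain ⟨m, hm⟩ : ∃ m, n = m + 1 := ⟨n - 1, by omega⟩
  have hm4 : 4 ≤ m := by omega
  have hnR : (n : ℝ) = (m : ℝ) + 1 := by rw [hm]; push_cast; ring
  have hmR : (4:ℝ) ≤ (m:ℝ) := by exact_mod_cast hm4
  have hD : (0:ℝ) < ((n : ℝ) + 2) * ((n : ℝ) - 1) := by nlinarith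
  have hpD : p * (((n : ℝ) + 2) * ((n : ℝ) - 1)) < 2 := by
    rw [lt_div_iff₀ hD] at hp1; exact hp1
  have hpDm : p * (((m : ℝ) + 3) * (m : ℝ)) ≤ 2 := by
    rw [hnR] at hpD; nlinarith
  have hp_le1 : p ≤ 1 := by
    have h28 : (0:ℝ) ≤ ((m:ℝ) + 3) * (m:ℝ) - 28 := by nlinarith
    nlinarith [mul_nonneg hp0.le h28]
  have hkey := key_poly m hm4 hp0 hpDm
  have h2n : (0:ℝ) < 1 / 2 ^ n := by positivity
  -- the aligned function g
  set σ : Fin n → Bool := fun i => decide (Fh n f i < 0) with hσdef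
  set g : (Fin n → Bool) → ℝ := fun x => f (fun j => xor (x j) (σ j)) with hgdef
  have hgterm : ∀ s, term n g s = term n f s := fun s => term_xor f σ s
  have hphig : phi n p f = phi n p g := by
    rw [phi_eq, phi_eq]
    exact (Finset.sum_congr rfl fun s _ => by rw [hgterm s]).symm
  have hgpm : ∀ x, g x = 1 ∨ g x = -1 := fun x => hf _
  have hgbal : ∑ x : Fin n → Bool, g x = 0 := by
    rw [hgdef, sum_xor f σ]; exact hbias
  have hFg : ∀ i, 0 ≤ Fh n g i := by
    intro i
    rw [hgdef, Fh_xor f σ i]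
    by_cases h : Fh n f i < 0
    · simp [hσdef, h]; linarith
    · simp [hσdef, h]; linarith
  have hmajbal := maj_unbiased (n := n) hodd
  -- the deficiency budget
  set Δ : ℝ := (1 / 2 ^ n) * ∑ y : Fin n → Bool, |maj n y - g y| with hΔdef
  have hΔ0 : 0 ≤ Δ := by
    apply mul_nonneg h2n.le
    exact Finset.sum_nonneg fun y _ => abs_nonneg _
  -- pointwise lower bound on all terms
  have hDge : ∀ s, -Δ ≤ term n (maj n) s - term n g s := by
    intro s
    have h1 := term_sub_le g (maj n) s
    have h2 : ∑ y : Fin n → Bool, |g y - maj n y| = ∑ y : Fin n → Bool, |maj n y - g y| :=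
      Finset.sum_congr rfl fun y _ => abs_sub_comm _ _
    rw [h2] at h1
    rw [hΔdef]
    linarith
  -- exact values at the bottom levels
  have hDzero : term n (maj n) (fun _ => false) - term n g (fun _ => false) = 0 := by
    rw [term_zero (maj n) hmajbal, term_zero g hgbal]; ring
  have hDind : ∀ i, term n (maj n) (indC i) - term n g (indC i)
      = (1 / 2 ^ n) * (Fh n (maj n) i - Fh n g i) := by
    intro i
    rw [term_indC (maj n) hmajbal i, term_indC g hgbal i,
      abs_of_nonneg (Fh_maj_nonneg i), abs_of_nonneg (hFg i)]
    ring
  -- the partition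
  set s0 : Fin n → Bool := fun _ => false with hs0def
  set B : Finset (Fin n → Bool) := insert s0 (Finset.image indC univ) with hBdef
  have hs0nm : s0 ∉ Finset.image (indC : Fin n → (Fin n → Bool)) univ :=
    s0_notin_image (by omega)
  have hBsub : B ⊆ univ := Finset.subset_univ B
  set X : (Fin n → Bool) → ℝ := fun s => wgt n p s * (term n (maj n) s - term n g s) with hXdef
  have hsplit : ∑ s ∈ univ \ B, X s + ∑ s ∈ B, X s = ∑ s : Fin n → Bool, X s :=
    Finset.sum_sdiff hBsub
  have himage : ∀ (Y : (Fin n → Bool) → ℝ),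
      ∑ s ∈ Finset.image indC univ, Y s = ∑ i : Fin n, Y (indC i) := by
    intro Y
    exact Finset.sum_image fun i _ j _ h => indC_inj h
  -- sum over B
  have hwind : ∀ i : Fin n, wgt n p (indC i) = p * (1 - p) ^ m := by
    intro i; rw [wgt_indC p i, hm]; norm_num
  have hsumB : ∑ s ∈ B, X s = p * (1 - p) ^ m *
      ((1 / 2 ^ n) * ∑ i : Fin n, (Fh n (maj n) i - Fh n g i)) := by
    rw [hBdef, Finset.sum_insert hs0nm, himage X]
    have hX0 : X s0 = 0 := by
      rw [show X s0 = wgt n p s0 * (term n (maj n) s0 - term n g s0) from rfl, hDzero, mul_zero]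
    rw [hX0, zero_add, Finset.mul_sum, Finset.mul_sum]
    apply Finset.sum_congr rfl; intro i _
    rw [show X (indC i)
        = wgt n p (indC i) * (term n (maj n) (indC i) - term n g (indC i)) from rfl,
      hwind i, hDind i]
  have hsurp := sum_surplus (n := n) hodd hgpm
  have hsumB_ge : p * (1 - p) ^ m * Δ ≤ ∑ s ∈ B, X s := by
    rw [hsumB, hΔdef]
    have hpw : (0:ℝ) ≤ p * (1 - p) ^ m := by
      apply mul_nonneg hp0.le; apply pow_nonneg; linarith
    apply mul_le_mul_of_nonneg_left _ hpw
    exact mul_le_mul_of_nonneg_left hsurp h2n.le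
  -- sum over the rest
  have hwB : ∑ s ∈ B, wgt n p s = (1 - p) ^ n + n * (p * (1 - p) ^ m) := by
    rw [hBdef, Finset.sum_insert hs0nm, himage (wgt n p), hs0def, wgt_zero]
    rw [Finset.sum_congr rfl fun i (_ : i ∈ univ) => hwind i, Finset.sum_const, card_univ,
      Fintype.card_fin, nsmul_eq_mul]
  have hwrest : ∑ s ∈ univ \ B, wgt n p s = 1 - ((1 - p) ^ n + n * (p * (1 - p) ^ m)) := by
    have := Finset.sum_sdiff (f := wgt n p) hBsub
    rw [sum_wgt p] at this
    linarith [hwB]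
  have hrest_ge : -Δ * (1 - ((1 - p) ^ n + n * (p * (1 - p) ^ m)))
      ≤ ∑ s ∈ univ \ B, X s := by
    rw [← hwrest, Finset.mul_sum]
    apply Finset.sum_le_sum
    intro s _
    rw [show X s = wgt n p s * (term n (maj n) s - term n g s) from rfl,
      mul_comm (-Δ) (wgt n p s)]
    exact mul_le_mul_of_nonneg_left (hDge s) (wgt_nonneg hp0.le hp_le1 s)
  -- assemble
  have htotal : Δ * ((1 + ((m:ℝ) + 1) * p) * (1 - p) ^ m - 1) ≤ ∑ s : Fin n → Bool, X s := by
    rw [← hsplit]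
    have hpow : (1 - p) ^ n = (1 - p) ^ m * (1 - p) := by rw [hm, pow_succ]
    have : Δ * ((1 + ((m:ℝ) + 1) * p) * (1 - p) ^ m - 1)
        = p * (1 - p) ^ m * Δ + (-Δ * (1 - ((1 - p) ^ n + n * (p * (1 - p) ^ m)))) := by
      rw [hpow, hnR]; ring
    rw [this]
    linarith [hsumB_ge, hrest_ge]
  have hfinal : 0 ≤ ∑ s : Fin n → Bool, X s := by
    refine le_trans ?_ htotal
    apply mul_nonneg hΔ0
    linarith [hkey]
  -- conclude
  rw [hphig, phi_eq, phi_eq]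
  have : ∑ s : Fin n → Bool, wgt n p s * term n (maj n) s
      - ∑ s : Fin n → Bool, wgt n p s * term n g s = ∑ s : Fin n → Bool, X s := by
    rw [← Finset.sum_sub_distrib]
    apply Finset.sum_congr rfl; intro s _
    rw [show X s = wgt n p s * (term n (maj n) s - term n g s) from rfl]; ring
  linarith [hfinal, this]
end

section
/- For every unbiased function f : {-1,1}^3 → {-1,1} and every p ∈ (0, 1/2), it holds that Φ_p(Maj_3) ≥ Φ_p(f). -/
open Finset

/-!
Write `Φ_p(f) = ∑_S p^|S| (1-p)^(3-|S|) B_S(f)` with `B_S(f) = E_{x_S} |E_{x_{S̄}} f|`.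
For unbiased `f` with values `±1` we have `B_∅ = 0`, `B_{[3]} = 1` and `B_{i} = |f̂(i)|`.
Pairing each `x` with its flip in coordinate `i`, the identity `|u - v| + |u + v| = 2` for
`u, v = ±1` gives `B_{i} + B_{[3]∖i} ≤ 1` (this is `|f̂(i)| ≤ Inf_i f`), and choosing signs
`ε_i = sign f̂(i)` gives `∑ |f̂(i)| ≤ E |ε₁x₁ + ε₂x₂ + ε₃x₃| = 3/2`. Since `p < 1/2`, singletons
weigh more than pairs, so these bounds give `Φ_p(f) ≤ p³ + 3/2 p(1-p) = Φ_p(Maj₃)`.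
-/

open Function

section Cube

variable {ι : Type*} [Fintype ι] [DecidableEq ι]

lemma two_mul_sum_eq_sum_update (i : ι) (g : (ι → Bool) → ℝ) :
    2 * ∑ x, g x = ∑ x, (g (update x i true) + g (update x i false)) := by
  have hinv : Involutive fun x : ι → Bool => update x i (!x i) := fun x => by simp
  have hflip : ∑ x, g (update x i (!x i)) = ∑ x, g x := Equiv.sum_comp hinv.toPerm g
  calc 2 * ∑ x, g x = ∑ x, (g x + g (update x i (!x i))) := by rw [sum_add_distrib, hflip]; ring
    _ = _ := sum_congr rfl fun x _ => by
      conv_lhs => rw [← update_eq_self i x]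
      cases x i <;> simp [add_comm]

lemma sum_comp_eval (i : ι) (G : Bool → ℝ) :
    ∑ x : ι → Bool, G (x i) = 2 ^ Fintype.card ι * ((G true + G false) / 2) := by
  have h := two_mul_sum_eq_sum_update i (fun x => G (x i))
  simp only [update_self, sum_const, card_univ, Fintype.card_fun, Fintype.card_bool,
    nsmul_eq_mul, Nat.cast_pow, Nat.cast_ofNat] at h
  linarith

lemma sum_mul_chi_eq (i : ι) (f : (ι → Bool) → ℝ) :
    ∑ z, f z * chi (z i) = ∑ z, (f (update z i true) - f (update z i false)) / 2 := by
  have := two_mul_sum_eq_sum_update i fun z => f z * chi (z i)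
  simp only [update_self, chi, if_true, Bool.false_eq_true, if_false, mul_one, mul_neg_one,
    ← sub_eq_add_neg] at this
  rw [← sum_div]; simp only [chi]; linarith

lemma chi_mul_chi (a b : Bool) : chi a * chi b = chi (a == b) := by
  cases a <;> cases b <;> norm_num [chi]

lemma chi_decide_nonneg_mul (c : ℝ) : chi (decide (0 ≤ c)) * c = |c| := by
  by_cases hc : 0 ≤ c <;> simp [chi, hc, abs_of_nonneg, abs_of_neg, not_le.mp]

lemma sum_comp_beq (e : ι → Bool) (g : (ι → Bool) → ℝ) :
    ∑ z : ι → Bool, g (fun i => e i == z i) = ∑ z, g z :=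
  Equiv.sum_comp (Involutive.toPerm (fun (z : ι → Bool) i => e i == z i) fun z => by
    funext i; simp) g

lemma sum_abs_sum_mul_chi_le {f : (ι → Bool) → ℝ} (hf : ∀ x, |f x| ≤ 1) :
    ∑ i, |∑ z, f z * chi (z i)| ≤ ∑ z : ι → Bool, |∑ i, chi (z i)| := by
  let e i := decide (0 ≤ ∑ z, f z * chi (z i))
  calc ∑ i, |∑ z, f z * chi (z i)| = ∑ z, f z * ∑ i, chi (e i) * chi (z i) := by
        simp_rw [mul_sum]
        rw [sum_comm]
        refine sum_congr rfl fun i _ => ?_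
        rw [← chi_decide_nonneg_mul, mul_sum]
        exact sum_congr rfl fun z _ => by ring
    _ ≤ ∑ z, |∑ i, chi (e i) * chi (z i)| := sum_le_sum fun z _ => by
        calc _ ≤ |f z| * |∑ i, chi (e i) * chi (z i)| := by
              rw [← abs_mul]; exact le_abs_self _
          _ ≤ _ := mul_le_of_le_one_left (abs_nonneg _) (hf z)
    _ = _ := by simp_rw [chi_mul_chi]; exact sum_comp_beq e fun z => |∑ i, chi (z i)|

end Cube

/-- `E_{x_S} |E_{x_{S̄}} f|` with `S = {i | s i}`. -/
noncomputable def restrictionBias (n : ℕ) (f : (Fin n → Bool) → ℝ) (s : Fin n → Bool) : ℝ :=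
  (1 / 2 ^ n) * ∑ x : Fin n → Bool,
    |(1 / 2 ^ n) * ∑ z : Fin n → Bool, f (fun i => if s i then x i else z i)|

section RestrictionBias

variable {n : ℕ} {f : (Fin n → Bool) → ℝ}

lemma phi_eq_sum_restrictionBias (p : ℝ) :
    phi n p f = ∑ s, (∏ i, if s i then p else 1 - p) * restrictionBias n f s := rfl

lemma restrictionBias_false :
    restrictionBias n f (fun _ => false) = |(1 / 2 ^ n) * ∑ z, f z| := by
  simp [restrictionBias]

lemma restrictionBias_true (hf : ∀ x, f x = 1 ∨ f x = -1) :
    restrictionBias n f (fun _ => true) = 1 := by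
  have habs : ∀ x, |f x| = 1 := fun x => by rcases hf x with h | h <;> simp [h]
  simp [restrictionBias, habs]

lemma restrictionBias_single (hbias : ∑ x, f x = 0) (i : Fin n) :
    restrictionBias n f (fun j => decide (j = i)) = |(1 / 2 ^ n) * ∑ z, f z * chi (z i)| := by
  have hpair : ∑ z, f (update z i false) = - ∑ z, f (update z i true) := by
    have := two_mul_sum_eq_sum_update i f
    rw [hbias, sum_add_distrib] at this
    linarith
  have hcorr : ∑ z, f z * chi (z i) = ∑ z, f (update z i true) := by
    rw [sum_mul_chi_eq, ← sum_div, sum_sub_distrib, hpair]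
    ring
  have hmix : ∀ x z : Fin n → Bool,
      (fun j => if decide (j = i) then x j else z j) = update z i (x i) := fun x z => by
    funext j; by_cases hj : j = i <;> simp [hj]
  simp only [restrictionBias, hmix]
  rw [sum_comp_eval i (fun b => |(1 / 2 ^ n) * ∑ z, f (update z i b)|), Fintype.card_fin,
    hpair, hcorr, mul_neg, abs_neg]
  field_simp
  ring

lemma restrictionBias_compl_single (i : Fin n) :
    restrictionBias n f (fun j => decide (j ≠ i)) =
      (1 / 2 ^ n) * ∑ x, |f (update x i true) + f (update x i false)| / 2 := by
  have hmix : ∀ x z : Fin n → Bool,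
      (fun j => if decide (j ≠ i) then x j else z j) = update x i (z i) := fun x z => by
    funext j; by_cases hj : j = i <;> simp [hj]
  simp only [restrictionBias, hmix]
  congr 1
  refine sum_congr rfl fun x _ => ?_
  rw [sum_comp_eval i (fun b => f (update x i b)), Fintype.card_fin, one_div,
    inv_mul_cancel_left₀ (by positivity), abs_div, abs_two]

lemma abs_sub_add_abs_add_eq_two {u v : ℝ} (hu : u = 1 ∨ u = -1) (hv : v = 1 ∨ v = -1) :
    |u - v| + |u + v| = 2 := by
  rcases hu with rfl | rfl <;> rcases hv with rfl | rfl <;> norm_num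

lemma restrictionBias_single_add_compl_le_one (hf : ∀ x, f x = 1 ∨ f x = -1)
    (hbias : ∑ x, f x = 0) (i : Fin n) :
    restrictionBias n f (fun j => decide (j = i)) + restrictionBias n f (fun j => decide (j ≠ i))
      ≤ 1 := by
  rw [restrictionBias_single hbias, restrictionBias_compl_single, sum_mul_chi_eq, abs_mul,
    abs_of_pos (by positivity : (0 : ℝ) < 1 / 2 ^ n)]
  calc 1 / 2 ^ n * |∑ z, (f (update z i true) - f (update z i false)) / 2|
        + 1 / 2 ^ n * ∑ x, |f (update x i true) + f (update x i false)| / 2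
      ≤ 1 / 2 ^ n * (∑ x, |f (update x i true) - f (update x i false)| / 2
          + ∑ x, |f (update x i true) + f (update x i false)| / 2) := by
        rw [← mul_add]
        gcongr
        refine (abs_sum_le_sum_abs _ _).trans_eq (sum_congr rfl fun x _ => ?_)
        rw [abs_div, abs_two]
    _ = 1 := by
        simp only [← sum_add_distrib, ← add_div, abs_sub_add_abs_add_eq_two (hf _) (hf _)]
        simp

end RestrictionBias

lemma sum_fin_three_bool (g : (Fin 3 → Bool) → ℝ) :
    ∑ x, g x = ∑ a, ∑ b, ∑ c, g ![a, b, c] := by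
  simp only [← (Fin.consEquiv fun _ => Bool).sum_comp, Fintype.sum_prod_type, Fintype.sum_unique]
  rfl

lemma eq_vec_three (s : Fin 3 → Bool) : s = ![s 0, s 1, s 2] := by
  funext j; fin_cases j <;> rfl

lemma phi_three_eq (p : ℝ) (f : (Fin 3 → Bool) → ℝ) :
    phi 3 p f = (1 - p) ^ 3 * restrictionBias 3 f (fun _ => false)
      + p * (1 - p) ^ 2 * ∑ i, restrictionBias 3 f (fun j => decide (j = i))
      + p ^ 2 * (1 - p) * ∑ i, restrictionBias 3 f (fun j => decide (j ≠ i))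
      + p ^ 3 * restrictionBias 3 f (fun _ => true) := by
  rw [phi_eq_sum_restrictionBias, sum_fin_three_bool, Fin.sum_univ_three, Fin.sum_univ_three,
    eq_vec_three (fun _ => false), eq_vec_three (fun _ => true),
    eq_vec_three (fun j => decide (j = 0)), eq_vec_three (fun j => decide (j = 1)),
    eq_vec_three (fun j => decide (j = 2)), eq_vec_three (fun j => decide (j ≠ 0)),
    eq_vec_three (fun j => decide (j ≠ 1)), eq_vec_three (fun j => decide (j ≠ 2))]
  simp only [Fintype.sum_bool, Fin.prod_univ_three, Fin.isValue, Matrix.cons_val_zero,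
    Matrix.cons_val_one, Matrix.cons_val, Nat.succ_eq_add_one, Nat.reduceAdd, Bool.false_eq_true,
    ↓reduceIte, decide_true, decide_false, one_ne_zero, zero_ne_one, Fin.reduceEq, ne_eq,
    not_true_eq_false, not_false_eq_true]
  ring

lemma maj_three_apply (x : Fin 3 → Bool) :
    maj 3 x = if x 0 && x 1 || x 0 && x 2 || x 1 && x 2 then 1 else -1 := by
  simp only [maj, Fin.sum_univ_three]
  cases x 0 <;> cases x 1 <;> cases x 2 <;>
    norm_num [chi, Real.sign_of_pos, Real.sign_of_neg]

lemma phi_maj_three (p : ℝ) :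
    phi 3 p (maj 3) = p ^ 3 + 3 / 2 * p * (1 - p) := by
  simp only [phi, maj_three_apply, sum_fin_three_bool, Fintype.sum_bool, Fin.prod_univ_three,
    Matrix.cons_val_zero, Matrix.cons_val_one, Matrix.cons_val_two, Matrix.head_cons,
    Matrix.tail_cons]
  norm_num [abs_div]
  ring

lemma sum_abs_sum_chi_fin_three : ∑ z : Fin 3 → Bool, |∑ i, chi (z i)| = 12 := by
  norm_num [sum_fin_three_bool, Fin.sum_univ_three, chi, Matrix.cons_val_two, Matrix.tail_cons]

theorem stmt11 (f : (Fin 3 → Bool) → ℝ) (hf : ∀ x, f x = 1 ∨ f x = -1)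
    (hbias : ∑ x : Fin 3 → Bool, f x = 0)
    (p : ℝ) (hp0 : 0 < p) (hp1 : p < 1 / 2) :
    phi 3 p f ≤ phi 3 p (maj 3) := by
  have hempty : restrictionBias 3 f (fun _ => false) = 0 := by
    rw [restrictionBias_false, hbias, mul_zero, abs_zero]
  have hsingle : ∑ i, restrictionBias 3 f (fun j => decide (j = i)) ≤ 3 / 2 := by
    have := sum_abs_sum_mul_chi_le fun x => ((abs_eq zero_le_one).mpr (hf x)).le
    rw [sum_abs_sum_chi_fin_three] at this
    simp only [restrictionBias_single hbias, abs_mul, ← mul_sum]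
    rw [abs_of_pos (by norm_num)]
    linarith
  have hcompl : ∑ i, restrictionBias 3 f (fun j => decide (j ≠ i))
      ≤ 3 - ∑ i, restrictionBias 3 f (fun j => decide (j = i)) := by
    have := sum_le_sum fun i (_ : i ∈ univ) => restrictionBias_single_add_compl_le_one hf hbias i
    simp only [sum_add_distrib, sum_const, card_univ, Fintype.card_fin, nsmul_eq_mul,
      Nat.cast_ofNat] at this
    linarith
  rw [phi_three_eq, phi_maj_three, hempty, restrictionBias_true hf]
  have hq : 0 ≤ 1 - p := by linarith
  have hr : 0 ≤ 1 - 2 * p := by linarith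
  linarith [mul_le_mul_of_nonneg_left hcompl (by positivity : 0 ≤ p ^ 2 * (1 - p)),
    mul_le_mul_of_nonneg_left hsingle (by positivity : 0 ≤ p * (1 - p) * (1 - 2 * p))]
end

section
/- For every integer n ≥ 5 and every real q with 0 < q < 4/((n+7)(n-1)), it holds that 2(1-q)^{n-1} - q(1-q)^{n-2}·(n-1)^2/2 - q^2·2·C(n,3) > 0, where C(n,3) = n(n-1)(n-2)/6 is the binomial coefficient. -/
/-!
Bernoulli's inequality `(1 - q)^(n-1) ≥ 1 - (n-1) q` and `(1 - q)^(n-2) ≤ 1` reduce the claim to a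
polynomial inequality in `q` and `N = n`, whose left side equals
`(4 - q (N+7)(N-1)) / 2 + q (N-1)/3 · (6 - q N(N-2))`; both terms are positive because
`q N(N-2) ≤ q (N+7)(N-1) < 4`.
-/

open Finset

theorem one_sub_mul_le_pow {R : Type*} [Ring R] [LinearOrder R] [IsStrictOrderedRing R]
    {q : R} (hq : q ≤ 2) (m : ℕ) : 1 - m * q ≤ (1 - q) ^ m := by
  simpa [sub_eq_add_neg] using one_add_mul_le_pow (a := -q) (neg_le_neg hq) m

open Polynomial in
theorem Nat.cast_choose_three {K : Type*} [Field K] [CharZero K] (a : ℕ) :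
    (a.choose 3 : K) = a * (a - 1) * (a - 2) / 6 := by
  rw [Nat.cast_choose_eq_descPochhammer_div]
  simp [descPochhammer_succ_right, Nat.factorial]

theorem bernoulli_lower_bound_pos {N q : ℝ} (hN : 1 ≤ N) (hq : 0 ≤ q)
    (hqN : q * ((N + 7) * (N - 1)) < 4) :
    0 < 2 * (1 - (N - 1) * q) - q * (N - 1) ^ 2 / 2 - q ^ 2 * 2 * (N * (N - 1) * (N - 2) / 6) := by
  have hsmall : q * (N * (N - 2)) < 6 := by nlinarith
  have hsplit : 2 * (1 - (N - 1) * q) - q * (N - 1) ^ 2 / 2 - q ^ 2 * 2 * (N * (N - 1) * (N - 2) / 6)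
      = (4 - q * ((N + 7) * (N - 1))) / 2 + q * (N - 1) / 3 * (6 - q * (N * (N - 2))) := by ring
  rw [hsplit]
  have hfactor : 0 ≤ q * (N - 1) / 3 := by have := sub_nonneg.2 hN; positivity
  nlinarith

theorem stmt13_general (n : ℕ) (q : ℝ) (hq0 : 0 < q)
    (hq1 : q < 4 / (((n : ℝ) + 7) * ((n : ℝ) - 1))) :
    2 * (1 - q) ^ (n - 1) - q * (1 - q) ^ (n - 2) * ((n : ℝ) - 1) ^ 2 / 2
      - q ^ 2 * 2 * (n.choose 3 : ℝ) > 0 := by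
  have hD : 0 < ((n : ℝ) + 7) * ((n : ℝ) - 1) := by
    by_contra! hD
    exact (hq0.trans hq1).not_ge (div_nonpos_of_nonneg_of_nonpos zero_le_four hD)
  have hqD := (lt_div_iff₀ hD).1 hq1
  have hn : 2 ≤ n := by
    have : (1 : ℝ) < n := by nlinarith
    exact_mod_cast this
  have hN : (2 : ℝ) ≤ n := by exact_mod_cast hn
  have hq : q ≤ 1 := by nlinarith
  have hpow₁ := one_sub_mul_le_pow (q := q) (by linarith) (n - 1)
  rw [Nat.cast_sub (by omega : 1 ≤ n), Nat.cast_one] at hpow₁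
  have hpow₂ : q * (1 - q) ^ (n - 2) * ((n : ℝ) - 1) ^ 2 ≤ q * 1 * ((n : ℝ) - 1) ^ 2 := by
    gcongr
    exact pow_le_one₀ (by linarith) (by linarith)
  rw [Nat.cast_choose_three]
  linarith [bernoulli_lower_bound_pos (by linarith) hq0.le hqD]

theorem stmt13 (n : ℕ) (hn : 5 ≤ n) (q : ℝ) (hq0 : 0 < q)
    (hq1 : q < 4 / (((n : ℝ) + 7) * ((n : ℝ) - 1))) :
    2 * (1 - q) ^ (n - 1) - q * (1 - q) ^ (n - 2) * ((n : ℝ) - 1) ^ 2 / 2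
      - q ^ 2 * 2 * (n.choose 3 : ℝ) > 0 :=
  stmt13_general n q hq0 hq1
end

section
/- Let n ≥ 5 be odd, let f : {-1,1}^n → {-1,1} satisfy f ≠ Maj_n (so that μ_f > 0), let c > 0 be a real constant, and let (G_S)_{S ⊆ [n], S ≠ ∅} be real numbers satisfying: (i) G_{{i}} = c·E_x[x_i·(Maj_n(x) - f(x))] for each i ∈ [n]; (ii) G_{{i,j}} ≥ c·( (1/4)·E_x[(x_i + x_j)(Maj_n(x) - f(x)) | x_i = x_j] - Pr_x[x ∈ E_f | x_i ≠ x_j] ) for each pair i ≠ j; (iii) G_S ≥ -2c·Pr_x[x ∈ E_f] for each S with |S| ≥ 3. Then for every q with 0 < q < 4/((n+7)(n-1)), the quantity ∑_{k=1}^{n} q^k (1-q)^{n-k} · ∑_{S ⊆ [n], |S| = k} G_S is strictly positive. -/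
open Finset

/-! ### Auxiliary lemmas -/

lemma aux_sum_chi_eq {n : ℕ} (x : Fin n → Bool) :
    ∑ i, chi (x i) = 2 * ((univ.filter fun i => x i = true).card : ℝ) - n := by
  have h : ∀ i : Fin n, chi (x i) = (if x i = true then (2:ℝ) else 0) - 1 := by
    intro i; cases hx : x i <;> simp [chi, hx] <;> norm_num
  rw [Finset.sum_congr rfl fun i _ => h i, Finset.sum_sub_distrib, ← Finset.sum_filter]
  simp [mul_comm]

lemma aux_abs_sum_chi {n : ℕ} (hodd : Odd n) (x : Fin n → Bool) :
    1 ≤ |∑ i, chi (x i)| := by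
  set k := (univ.filter fun i => x i = true).card with hk
  have hz : ((2 * (k:ℤ) - n : ℤ) : ℝ) = ∑ i, chi (x i) := by
    rw [aux_sum_chi_eq]; push_cast; ring
  have hne : (2 * (k:ℤ) - n) ≠ 0 := by
    intro h
    have h1 : (n:ℤ) = 2 * k := by omega
    have h2 : n = 2 * k := by exact_mod_cast h1
    have := Nat.odd_iff.mp hodd
    omega
  have h1 : (1:ℤ) ≤ |2 * (k:ℤ) - n| := Int.one_le_abs hne
  calc (1:ℝ) = ((1:ℤ):ℝ) := by norm_num
    _ ≤ ((|2 * (k:ℤ) - n| : ℤ) : ℝ) := by exact_mod_cast h1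
    _ = |((2 * (k:ℤ) - n : ℤ) : ℝ)| := by rw [Int.cast_abs]
    _ = _ := by rw [hz]

lemma aux_maj_mul_sum {n : ℕ} (hodd : Odd n) (x : Fin n → Bool) :
    maj n x * (∑ i, chi (x i)) = |∑ i, chi (x i)| := by
  have hs : (∑ i, chi (x i)) ≠ 0 := by
    intro h; have := aux_abs_sum_chi hodd x; rw [h, abs_zero] at this; linarith
  rcases hs.lt_or_gt with h | h
  · rw [maj, Real.sign_of_neg h, abs_of_neg h]; ring
  · rw [maj, Real.sign_of_pos h, abs_of_pos h]; ring

lemma aux_maj_pm {n : ℕ} (hodd : Odd n) (x : Fin n → Bool) :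
    maj n x = 1 ∨ maj n x = -1 := by
  have hs : (∑ i, chi (x i)) ≠ 0 := by
    intro h; have := aux_abs_sum_chi hodd x; rw [h, abs_zero] at this; linarith
  rcases hs.lt_or_gt with h | h
  · right; rw [maj, Real.sign_of_neg h]
  · left; rw [maj, Real.sign_of_pos h]

lemma aux_sum_offDiag_eq {n : ℕ} (F : Fin n → Fin n → ℝ) :
    ∑ p ∈ (univ : Finset (Fin n)).offDiag, F p.1 p.2
      = (∑ i, ∑ j, F i j) - ∑ i, F i i := by
  have hset : (univ : Finset (Fin n)).offDiag
      = (univ ×ˢ univ).filter (fun p => p.1 ≠ p.2) := by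
    ext p; simp [Finset.mem_offDiag]
  have hsplit := Finset.sum_filter_add_sum_filter_not (univ ×ˢ univ)
    (fun p : Fin n × Fin n => p.1 = p.2) (fun p => F p.1 p.2)
  have h1 : ∑ p ∈ (univ ×ˢ univ).filter (fun p : Fin n × Fin n => p.1 = p.2),
      F p.1 p.2 = ∑ i, F i i := by
    rw [Finset.sum_filter, Finset.sum_product]
    simp
  have h2 : ∑ p ∈ (univ ×ˢ univ : Finset (Fin n × Fin n)), F p.1 p.2
      = ∑ i, ∑ j, F i j := by rw [Finset.sum_product]
  rw [hset]
  simp only [ne_eq]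
  linarith [hsplit, h1, h2]

lemma aux_sum_offDiag_pair {n : ℕ} (G : Finset (Fin n) → ℝ) :
    ∑ p ∈ (univ : Finset (Fin n)).offDiag, G {p.1, p.2}
      = 2 * ∑ S ∈ univ.filter (fun S : Finset (Fin n) => S.card = 2), G S := by
  have hmaps : ∀ p ∈ (univ : Finset (Fin n)).offDiag,
      ({p.1, p.2} : Finset (Fin n)) ∈ univ.filter (fun S : Finset (Fin n) => S.card = 2) := by
    intro p hp
    rw [Finset.mem_offDiag] at hp
    simp [Finset.card_pair hp.2.2]
  rw [← Finset.sum_fiberwise_of_maps_to hmaps (fun p => G {p.1, p.2}), Finset.mul_sum]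
  refine Finset.sum_congr rfl ?_
  intro S hS
  simp only [mem_filter] at hS
  obtain ⟨a, b, hab, rfl⟩ := Finset.card_eq_two.mp hS.2
  have hfib : ((univ : Finset (Fin n)).offDiag.filter
      fun p : Fin n × Fin n => ({p.1, p.2} : Finset (Fin n)) = {a, b})
      = {(a,b), (b,a)} := by
    ext ⟨p1, p2⟩
    simp only [Finset.mem_filter, Finset.mem_offDiag, Finset.mem_insert,
      Finset.mem_singleton, Finset.mem_univ, true_and, Prod.mk.injEq]
    constructor
    · rintro ⟨hne, hEq⟩
      have h1 : p1 ∈ ({a, b} : Finset (Fin n)) := by rw [← hEq]; simp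
      have h2 : p2 ∈ ({a, b} : Finset (Fin n)) := by rw [← hEq]; simp
      simp only [Finset.mem_insert, Finset.mem_singleton] at h1 h2
      rcases h1 with rfl|rfl <;> rcases h2 with rfl|rfl <;> tauto
    · rintro (⟨rfl, rfl⟩ | ⟨rfl, rfl⟩)
      · exact ⟨hab, rfl⟩
      · exact ⟨hab.symm, by rw [Finset.pair_comm]⟩
  rw [hfib, Finset.sum_pair (by simp [Prod.ext_iff]; tauto)]
  have hba : ({b, a} : Finset (Fin n)) = {a, b} := Finset.pair_comm b a
  rw [hba]; ring

lemma aux_sum_offDiag_chi {n : ℕ} (x : Fin n → Bool) :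
    ∑ p ∈ (univ : Finset (Fin n)).offDiag, (chi (x p.1) + chi (x p.2))
      = (2*(n:ℝ) - 2) * ∑ i, chi (x i) := by
  rw [aux_sum_offDiag_eq (F := fun i j => chi (x i) + chi (x j))]
  have h1 : ∑ i : Fin n, ∑ j : Fin n, (chi (x i) + chi (x j))
      = (n:ℝ) * ∑ i, chi (x i) + (n:ℝ) * ∑ i, chi (x i) := by
    simp only [Finset.sum_add_distrib, Finset.sum_const, Finset.card_univ,
      Fintype.card_fin, nsmul_eq_mul]
    rw [← Finset.mul_sum]
  have h2 : ∑ i : Fin n, (chi (x i) + chi (x i)) = 2 * ∑ i, chi (x i) := by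
    rw [Finset.mul_sum]
    refine Finset.sum_congr rfl ?_
    intro i _; ring
  rw [h1, h2]; ring

lemma aux_cnt_le {n : ℕ} (x : Fin n → Bool) (hs : 1 ≤ |∑ i, chi (x i)|) :
    ∑ p ∈ (univ : Finset (Fin n)).offDiag, (if x p.1 ≠ x p.2 then (1:ℝ) else 0)
      ≤ ((n:ℝ)^2 - 1)/2 := by
  have hpt : ∀ p : Fin n × Fin n,
      (if x p.1 ≠ x p.2 then (1:ℝ) else 0) = (1 - chi (x p.1) * chi (x p.2))/2 := by
    intro p; cases h1 : x p.1 <;> cases h2 : x p.2 <;> simp [chi, h1, h2] <;> norm_num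
  rw [Finset.sum_congr rfl fun p _ => hpt p,
    aux_sum_offDiag_eq (F := fun i j => (1 - chi (x i) * chi (x j))/2)]
  have h1 : ∑ i : Fin n, ∑ j : Fin n, (1 - chi (x i) * chi (x j))/2
      = ((n:ℝ)^2 - (∑ i, chi (x i))^2)/2 := by
    simp only [sub_div, Finset.sum_sub_distrib]
    congr 1
    · simp [Finset.card_univ]; ring
    · have hinner : ∀ i : Fin n, ∑ j, chi (x i) * chi (x j) / 2
          = chi (x i) * (∑ j, chi (x j)) / 2 := by
        intro i; rw [← Finset.sum_div, ← Finset.mul_sum]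
      rw [Finset.sum_congr rfl fun i _ => hinner i, ← Finset.sum_div, ← Finset.sum_mul]
      ring
  have h2 : ∑ i : Fin n, (1 - chi (x i) * chi (x i))/2 = 0 := by
    have hpt2 : ∀ i : Fin n, (1 - chi (x i) * chi (x i))/2 = 0 := by
      intro i; cases h : x i <;> simp [chi, h]
    simp [hpt2]
  have h3 : 1 ≤ (∑ i, chi (x i))^2 := by
    nlinarith [abs_nonneg (∑ i, chi (x i)), sq_abs (∑ i, chi (x i))]
  rw [h1, h2]
  linarith

lemma aux_binom_tail (n : ℕ) (q : ℝ) (h0 : 0 ≤ q) (h1 : q ≤ 1) (hn : 3 ≤ n) :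
    ∑ k ∈ Finset.Icc 3 n, (n.choose k : ℝ) * (q^k * (1-q)^(n-k))
      ≤ (n.choose 3 : ℝ) * q^3 := by
  have key : ∀ k ∈ Finset.Icc 3 n, (n.choose k : ℝ) * (q^k * (1-q)^(n-k))
      ≤ (n.choose 3 : ℝ) * q^3 *
        (((n-3).choose (k-3) : ℝ) * (q^(k-3) * (1-q)^((n-3)-(k-3)))) := by
    intro k hk
    rw [Finset.mem_Icc] at hk
    have hc : (n.choose k : ℝ) ≤ (n.choose 3 : ℝ) * ((n-3).choose (k-3) : ℝ) := by
      have h1' : (1:ℕ) ≤ k.choose 3 := Nat.choose_pos hk.1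
      have hle : n.choose k ≤ n.choose 3 * (n-3).choose (k-3) := by
        calc n.choose k = n.choose k * 1 := (mul_one _).symm
          _ ≤ n.choose k * k.choose 3 := by exact Nat.mul_le_mul_left _ h1'
          _ = n.choose 3 * (n-3).choose (k-3) := by
              have hcm : n.choose k * k.choose 3 = n.choose 3 * (n - 3).choose (k - 3) :=
                Nat.choose_mul (n := n) hk.1
              exact hcm
      exact_mod_cast hle
    have hqk : q^k = q^3 * q^(k-3) := by
      rw [← pow_add]; congr 1; omega
    have hnk : n - k = (n-3) - (k-3) := by omega
    rw [hqk, hnk]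
    have h1q : (0:ℝ) ≤ 1 - q := by linarith
    have hnn : (0:ℝ) ≤ q^3 * q^(k-3) * (1-q)^((n-3)-(k-3)) :=
      mul_nonneg (mul_nonneg (pow_nonneg h0 3) (pow_nonneg h0 _)) (pow_nonneg h1q _)
    calc (n.choose k : ℝ) * (q^3*q^(k-3)*(1-q)^((n-3)-(k-3)))
        ≤ ((n.choose 3 : ℝ) * (((n-3).choose (k-3) : ℝ))) * (q^3*q^(k-3)*(1-q)^((n-3)-(k-3))) :=
          mul_le_mul_of_nonneg_right hc hnn
      _ = (n.choose 3 : ℝ) * q^3 * ((((n-3).choose (k-3)) : ℝ) * (q^(k-3) * (1-q)^((n-3)-(k-3)))) := by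
          ring
  calc ∑ k ∈ Finset.Icc 3 n, (n.choose k : ℝ) * (q^k * (1-q)^(n-k))
      ≤ ∑ k ∈ Finset.Icc 3 n, (n.choose 3 : ℝ) * q^3 *
          (((n-3).choose (k-3) : ℝ) * (q^(k-3) * (1-q)^((n-3)-(k-3)))) :=
        Finset.sum_le_sum key
    _ = (n.choose 3 : ℝ) * q^3 * ∑ k ∈ Finset.Icc 3 n,
          (((n-3).choose (k-3) : ℝ) * (q^(k-3) * (1-q)^((n-3)-(k-3)))) := by
        rw [Finset.mul_sum]
    _ ≤ (n.choose 3 : ℝ) * q^3 := by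
        have hsum : ∑ k ∈ Finset.Icc 3 n,
            (((n-3).choose (k-3) : ℝ) * (q^(k-3) * (1-q)^((n-3)-(k-3)))) = 1 := by
          rw [← Finset.Ico_add_one_right_eq_Icc, Finset.sum_Ico_eq_sum_range]
          have hre : ∀ j ∈ Finset.range (n + 1 - 3),
              (((n-3).choose (3+j-3) : ℝ) * (q^(3+j-3) * (1-q)^((n-3)-(3+j-3))))
              = (((n-3).choose j : ℝ) * (q^j * (1-q)^((n-3)-j))) := by
            intro j _
            have e1 : 3 + j - 3 = j := by omega
            rw [e1]
          rw [Finset.sum_congr rfl hre]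
          have hrange : n + 1 - 3 = (n - 3) + 1 := by omega
          rw [hrange]
          have hbin := add_pow q (1-q) (n-3)
          have hq1' : (q + (1-q)) = 1 := by ring
          rw [hq1', one_pow] at hbin
          calc ∑ x ∈ Finset.range (n-3+1), (((n-3).choose x : ℝ)) * (q^x * (1-q)^((n-3)-x))
              = ∑ j ∈ Finset.range (n-3+1), q^j * (1-q)^((n-3)-j) * (((n-3).choose j : ℝ)) :=
                Finset.sum_congr rfl (fun j _ => by ring)
            _ = 1 := hbin.symm
        rw [hsum, mul_one]

lemma aux_final_poly (m q : ℝ) (hm : 5 ≤ m) (hq0 : 0 < q) (hqD : q * ((m+7)*(m-1)) < 4) :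
    0 < 2 - 2*(m-1)*q - q*(m-1)^2/2 - m^3*q^2/3 := by
  have h4u : (0:ℝ) ≤ 4 - q * ((m+7)*(m-1)) := by linarith
  have hu0 : (0:ℝ) ≤ q * ((m+7)*(m-1)) := mul_nonneg hq0.le (by nlinarith)
  have hpoly : (0:ℝ) < m^3 + 15*m^2 - 39*m + 21 := by nlinarith
  have hR : 0 < 12*(m+7)^2*(m-1)^2 - 12*(m+7)*(m-1)^2*(q*((m+7)*(m-1)))
      - 3*(m+7)*(m-1)^3*(q*((m+7)*(m-1))) - 2*m^3*(q*((m+7)*(m-1)))^2 := by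
    nlinarith [mul_nonneg (mul_nonneg (show (0:ℝ) ≤ 12*(m+7) by nlinarith) (sq_nonneg (m-1))) h4u,
      mul_nonneg (mul_nonneg (show (0:ℝ) ≤ 3*(m+7)*(m-1) by nlinarith) (sq_nonneg (m-1))) h4u,
      mul_nonneg (mul_nonneg (show (0:ℝ) ≤ 2*m^3 by nlinarith) h4u)
        (by linarith : (0:ℝ) ≤ 4 + q*((m+7)*(m-1)))]
  have hG : (0:ℝ) < 6*(m+7)^2*(m-1)^2 := by nlinarith
  nlinarith [hR, hG, mul_pos hG hq0]

lemma aux_core_ineq (m q A M W1 W2 : ℝ) (hm : 5 ≤ m) (hq0 : 0 < q) (hM1 : 1 ≤ M) (hMA : M ≤ A)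
    (hW1 : 1 - (m-1)*q ≤ W1) (hW10 : 0 ≤ W1) (hW20 : 0 ≤ W2) (hW21 : W2 ≤ 1) :
    M * (q * (2 - 2*(m-1)*q - q*(m-1)^2/2 - m^3*q^2/3))
      ≤ 2*q*W1*A + q^2*W2*((m-1)*A - M*(m^2-1)/2) - M*m^3*q^3/3 := by
  nlinarith [mul_nonneg (mul_nonneg hq0.le hW10) (sub_nonneg.mpr hMA),
    mul_nonneg (mul_nonneg (mul_nonneg (sq_nonneg q) hW20) (by linarith : (0:ℝ) ≤ m-1))
      (sub_nonneg.mpr hMA),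
    mul_nonneg (mul_nonneg (mul_nonneg (sq_nonneg q) (by linarith : (0:ℝ) ≤ 1 - W2))
      (sq_nonneg (m-1))) (by linarith : (0:ℝ) ≤ M),
    mul_nonneg (mul_nonneg hq0.le (by linarith : (0:ℝ) ≤ W1 - (1 - (m-1)*q)))
      (by linarith : (0:ℝ) ≤ M)]
set_option maxHeartbeats 1000000 in
theorem stmt14 (n : ℕ) (hodd : Odd n) (hn : 5 ≤ n)
    (f : (Fin n → Bool) → ℝ) (hf : ∀ x, f x = 1 ∨ f x = -1)
    (hfmaj : f ≠ maj n)
    (c : ℝ) (hc : 0 < c)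
    (G : Finset (Fin n) → ℝ)
    (hG1 : ∀ i : Fin n,
      G {i} = c * ((1 / 2 ^ n) * ∑ x : Fin n → Bool, chi (x i) * (maj n x - f x)))
    (hG2 : ∀ i j : Fin n, i ≠ j →
      G {i, j} ≥ c * ((1 / 4) *
          ((∑ x ∈ univ.filter (fun x : Fin n → Bool => x i = x j),
              (chi (x i) + chi (x j)) * (maj n x - f x))
            / ((univ.filter (fun x : Fin n → Bool => x i = x j)).card : ℝ))
        - (((univ.filter (fun x : Fin n → Bool => x i ≠ x j ∧ f x ≠ maj n x)).card : ℝ)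
            / ((univ.filter (fun x : Fin n → Bool => x i ≠ x j)).card : ℝ))))
    (hG3 : ∀ S : Finset (Fin n), 3 ≤ S.card →
      G S ≥ -2 * c * (((univ.filter (fun x : Fin n → Bool => f x ≠ maj n x)).card : ℝ) / 2 ^ n))
    (q : ℝ) (hq0 : 0 < q) (hq1 : q < 4 / (((n : ℝ) + 7) * ((n : ℝ) - 1))) :
    0 < ∑ k ∈ Finset.Icc 1 n, q ^ k * (1 - q) ^ (n - k) *
          ∑ S ∈ univ.filter (fun S : Finset (Fin n) => S.card = k), G S := by
  classical
  have hn1 : 1 ≤ n := by omega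
  have hmR : (5:ℝ) ≤ (n:ℝ) := by exact_mod_cast hn
  set m : ℝ := (n:ℝ) with hmdef
  have hD : (0:ℝ) < (m+7)*(m-1) := by nlinarith
  have hqD : q * ((m+7)*(m-1)) < 4 := (lt_div_iff₀ hD).mp hq1
  have hql : q < 1 := by nlinarith
  have h1q : (0:ℝ) < 1 - q := by linarith
  have hP : (0:ℝ) < 2^n := by positivity
  set E : Finset (Fin n → Bool) := univ.filter (fun x : Fin n → Bool => f x ≠ maj n x) with hE
  set M : ℝ := (E.card : ℝ) with hMdef
  have hM1 : 1 ≤ M := by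
    obtain ⟨x, hx⟩ := Function.ne_iff.mp hfmaj
    have hxE : x ∈ E := by simp [hE, hx]
    have hcard : 0 < E.card := Finset.card_pos.mpr ⟨x, hxE⟩
    rw [hMdef]; exact_mod_cast hcard
  have habs : ∀ x : Fin n → Bool, 1 ≤ |∑ i, chi (x i)| := aux_abs_sum_chi hodd
  have hmemE : ∀ x : Fin n → Bool, x ∈ E ↔ f x ≠ maj n x := by
    intro x; rw [hE]; simp
  have hw : ∀ x ∈ E, maj n x - f x = 2 * maj n x := by
    intro x hx
    rw [hmemE] at hx
    rcases aux_maj_pm hodd x with h | h <;> rcases hf x with h' | h'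
    · exact absurd (h'.trans h.symm) hx
    · rw [h, h']; norm_num
    · rw [h, h']; norm_num
    · exact absurd (h'.trans h.symm) hx
  set A : ℝ := ∑ x ∈ E, |∑ i, chi (x i)| with hAdef
  have hMA : M ≤ A := by
    rw [hMdef, hAdef]
    calc ((E.card : ℝ)) = ∑ _x ∈ E, (1:ℝ) := by rw [Finset.sum_const]; simp
      _ ≤ _ := Finset.sum_le_sum (fun x _ => habs x)
  -- T1 identity
  have hT1 : ∑ x : Fin n → Bool, (∑ i, chi (x i)) * (maj n x - f x) = 2 * A := by
    rw [← Finset.sum_filter_add_sum_filter_not univ (fun x : Fin n → Bool => f x ≠ maj n x)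
      (fun x => (∑ i, chi (x i)) * (maj n x - f x))]
    have hz : ∑ x ∈ univ.filter (fun x : Fin n → Bool => ¬ f x ≠ maj n x),
        (∑ i, chi (x i)) * (maj n x - f x) = 0 := by
      apply Finset.sum_eq_zero
      intro x hx
      simp only [Finset.mem_filter, not_not] at hx
      rw [hx.2, sub_self, mul_zero]
    have hone : ∑ x ∈ E, (∑ i, chi (x i)) * (maj n x - f x)
        = ∑ x ∈ E, 2 * |∑ i, chi (x i)| := by
      apply Finset.sum_congr rfl
      intro x hx
      rw [hw x hx, ← aux_maj_mul_sum hodd x]; ring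
    rw [← hE, hone, hz, add_zero, ← Finset.mul_sum, ← hAdef]
  -- degree 1
  have hsing : univ.filter (fun S : Finset (Fin n) => S.card = 1)
      = univ.image (fun i : Fin n => ({i} : Finset (Fin n))) := by
    ext S; simp [Finset.card_eq_one, eq_comm]
  have hS1 : ∑ S ∈ univ.filter (fun S : Finset (Fin n) => S.card = 1), G S
      = (c/2^n) * (2*A) := by
    rw [hsing, Finset.sum_image (fun a _ b _ h => Finset.singleton_injective h),
      Finset.sum_congr rfl (fun i _ => hG1 i), ← Finset.mul_sum]
    have hswap : ∑ i : Fin n, ((1:ℝ) / 2 ^ n) * ∑ x : Fin n → Bool, chi (x i) * (maj n x - f x)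
        = (1/2^n) * ∑ x : Fin n → Bool, (∑ i, chi (x i)) * (maj n x - f x) := by
      rw [← Finset.mul_sum, Finset.sum_comm]
      congr 1
      refine Finset.sum_congr rfl ?_
      intro x _
      rw [Finset.sum_mul]
    rw [hswap, hT1]; ring
  -- cards of pair filters
  have hcard_ne : ∀ i j : Fin n, i ≠ j →
      (univ.filter (fun x : Fin n → Bool => x i ≠ x j)).card = 2^(n-1) := by
    intro i j hij
    have hbij : (univ.filter (fun x : Fin n → Bool => x i = x j)).card
        = (univ.filter (fun x : Fin n → Bool => x i ≠ x j)).card := by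
      apply Finset.card_bij' (fun x _ => Function.update x j (!x j))
        (fun x _ => Function.update x j (!x j))
      case hi =>
        intro x hx
        simp only [Finset.mem_filter, Finset.mem_univ, true_and] at hx ⊢
        rw [Function.update_of_ne hij, Function.update_self, hx]
        cases x j <;> simp
      case hj =>
        intro x hx
        simp only [Finset.mem_filter, Finset.mem_univ, true_and] at hx ⊢
        rw [Function.update_of_ne hij, Function.update_self]
        revert hx; cases x i <;> cases x j <;> simp
      case left_inv =>
        intro x _
        funext a
        rcases eq_or_ne a j with rfl | ha
        · simp
        · simp [Function.update_of_ne ha]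
      case right_inv =>
        intro x _
        funext a
        rcases eq_or_ne a j with rfl | ha
        · simp
        · simp [Function.update_of_ne ha]
    have hsum : (univ.filter (fun x : Fin n → Bool => x i = x j)).card
        + (univ.filter (fun x : Fin n → Bool => ¬ x i = x j)).card
        = (univ : Finset (Fin n → Bool)).card :=
      Finset.card_filter_add_card_filter_not _
    have huniv : (univ : Finset (Fin n → Bool)).card = 2^n := by
      rw [Finset.card_univ]; simp [Fintype.card_fun]
    have hpow : (2:ℕ)^n = 2^(n-1) * 2 := by
      rw [← pow_succ, Nat.sub_add_cancel hn1]
    have hh : (univ.filter (fun x : Fin n → Bool => x i ≠ x j)).card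
        = (univ.filter (fun x : Fin n → Bool => ¬ x i = x j)).card := rfl
    rw [huniv] at hsum
    rw [hh] at hbij ⊢
    set a := (univ.filter (fun x : Fin n → Bool => x i = x j)).card with ha
    set b := (univ.filter (fun x : Fin n → Bool => ¬ x i = x j)).card with hb
    clear_value a b
    clear * - hsum hpow hbij a b
    omega
  have hcard_eq : ∀ i j : Fin n, i ≠ j →
      (univ.filter (fun x : Fin n → Bool => x i = x j)).card = 2^(n-1) := by
    intro i j hij
    have hsum : (univ.filter (fun x : Fin n → Bool => x i = x j)).card
        + (univ.filter (fun x : Fin n → Bool => ¬ x i = x j)).card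
        = (univ : Finset (Fin n → Bool)).card :=
      Finset.card_filter_add_card_filter_not _
    have huniv : (univ : Finset (Fin n → Bool)).card = 2^n := by
      rw [Finset.card_univ]; simp [Fintype.card_fun]
    have hpow : (2:ℕ)^n = 2^(n-1) * 2 := by
      rw [← pow_succ, Nat.sub_add_cancel hn1]
    have h2 := hcard_ne i j hij
    have hh : (univ.filter (fun x : Fin n → Bool => x i ≠ x j)).card
        = (univ.filter (fun x : Fin n → Bool => ¬ x i = x j)).card := rfl
    rw [huniv] at hsum
    rw [hh] at h2
    set a := (univ.filter (fun x : Fin n → Bool => x i = x j)).card with ha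
    set b := (univ.filter (fun x : Fin n → Bool => ¬ x i = x j)).card with hb
    clear_value a b
    clear * - hsum hpow h2 a b
    omega
  have hpowR : (2:ℝ)^n = 2*2^(n-1) := by
    rw [← pow_succ', Nat.sub_add_cancel hn1]
  have hpos1 : (0:ℝ) < 2^(n-1) := by positivity
  -- extend pair numerator to full sum
  have hnum : ∀ i j : Fin n, i ≠ j →
      ∑ x ∈ univ.filter (fun x : Fin n → Bool => x i = x j),
          (chi (x i) + chi (x j)) * (maj n x - f x)
        = ∑ x : Fin n → Bool, (chi (x i) + chi (x j)) * (maj n x - f x) := by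
    intro i j hij
    apply Finset.sum_filter_of_ne
    intro x _ hx
    by_contra hne
    apply hx
    have hzero : chi (x i) + chi (x j) = 0 := by
      cases hxi : x i <;> cases hxj : x j
      · exact absurd (hxi.trans hxj.symm) hne
      · simp [chi, hxi, hxj]
      · simp [chi, hxi, hxj]
      · exact absurd (hxi.trans hxj.symm) hne
    rw [hzero, zero_mul]
  -- per ordered pair lower bound
  have hG2' : ∀ p ∈ (univ : Finset (Fin n)).offDiag,
      (c/(4*2^(n-1))) * (∑ x : Fin n → Bool, (chi (x p.1) + chi (x p.2)) * (maj n x - f x))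
        - (c/2^(n-1)) * ((univ.filter
            (fun x : Fin n → Bool => x p.1 ≠ x p.2 ∧ f x ≠ maj n x)).card : ℝ)
      ≤ G {p.1, p.2} := by
    intro p hp
    rw [Finset.mem_offDiag] at hp
    have h := hG2 p.1 p.2 hp.2.2
    rw [hcard_eq _ _ hp.2.2, hcard_ne _ _ hp.2.2, hnum _ _ hp.2.2] at h
    push_cast at h
    have heq : c * ((1:ℝ)/4 *
          ((∑ x : Fin n → Bool, (chi (x p.1) + chi (x p.2)) * (maj n x - f x)) / 2^(n-1))
        - ((univ.filter (fun x : Fin n → Bool => x p.1 ≠ x p.2 ∧ f x ≠ maj n x)).card : ℝ)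
            / 2^(n-1))
        = (c/(4*2^(n-1))) * (∑ x : Fin n → Bool, (chi (x p.1) + chi (x p.2)) * (maj n x - f x))
          - (c/2^(n-1)) * ((univ.filter
              (fun x : Fin n → Bool => x p.1 ≠ x p.2 ∧ f x ≠ maj n x)).card : ℝ) := by
      field_simp
    rw [heq] at h
    exact h
  have hpair_lhs : ∑ p ∈ (univ : Finset (Fin n)).offDiag,
      ((c/(4*2^(n-1))) * (∑ x : Fin n → Bool, (chi (x p.1) + chi (x p.2)) * (maj n x - f x))
        - (c/2^(n-1)) * ((univ.filter
            (fun x : Fin n → Bool => x p.1 ≠ x p.2 ∧ f x ≠ maj n x)).card : ℝ))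
      ≤ 2 * ∑ S ∈ univ.filter (fun S : Finset (Fin n) => S.card = 2), G S := by
    rw [← aux_sum_offDiag_pair G]
    exact Finset.sum_le_sum hG2'
  -- numerator total
  have hNum : ∑ p ∈ (univ : Finset (Fin n)).offDiag,
      (∑ x : Fin n → Bool, (chi (x p.1) + chi (x p.2)) * (maj n x - f x))
      = (2*m - 2) * (2*A) := by
    rw [Finset.sum_comm]
    have hx1 : ∀ x : Fin n → Bool,
        ∑ p ∈ (univ : Finset (Fin n)).offDiag, (chi (x p.1) + chi (x p.2)) * (maj n x - f x)
        = ((2*m-2) * (∑ i, chi (x i))) * (maj n x - f x) := by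
      intro x
      rw [← Finset.sum_mul, aux_sum_offDiag_chi]
    rw [Finset.sum_congr rfl (fun x _ => hx1 x)]
    have hx2 : ∑ x : Fin n → Bool, ((2*m-2) * (∑ i, chi (x i))) * (maj n x - f x)
        = (2*m-2) * ∑ x : Fin n → Bool, (∑ i, chi (x i)) * (maj n x - f x) := by
      rw [Finset.mul_sum]; exact Finset.sum_congr rfl (fun x _ => by ring)
    rw [hx2, hT1]
  -- error count total
  have hVE : ∑ p ∈ (univ : Finset (Fin n)).offDiag,
      ((univ.filter (fun x : Fin n → Bool => x p.1 ≠ x p.2 ∧ f x ≠ maj n x)).card : ℝ)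
      ≤ M * ((m^2-1)/2) := by
    have hcard : ∀ p : Fin n × Fin n,
        ((univ.filter (fun x : Fin n → Bool => x p.1 ≠ x p.2 ∧ f x ≠ maj n x)).card : ℝ)
        = ∑ x : Fin n → Bool, (if x p.1 ≠ x p.2 ∧ f x ≠ maj n x then (1:ℝ) else 0) := by
      intro p; rw [Finset.sum_boole]
    rw [Finset.sum_congr rfl (fun p _ => hcard p), Finset.sum_comm]
    have hsplit := Finset.sum_filter_add_sum_filter_not (univ : Finset (Fin n → Bool))
      (fun x => f x ≠ maj n x)
      (fun x => ∑ p ∈ (univ : Finset (Fin n)).offDiag,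
        (if x p.1 ≠ x p.2 ∧ f x ≠ maj n x then (1:ℝ) else 0))
    have hz : ∑ x ∈ univ.filter (fun x : Fin n → Bool => ¬ f x ≠ maj n x),
        (∑ p ∈ (univ : Finset (Fin n)).offDiag,
          (if x p.1 ≠ x p.2 ∧ f x ≠ maj n x then (1:ℝ) else 0)) = 0 := by
      apply Finset.sum_eq_zero; intro x hx
      simp only [Finset.mem_filter, not_not] at hx
      apply Finset.sum_eq_zero; intro p _
      simp [hx.2]
    have hbound : ∑ x ∈ E, (∑ p ∈ (univ : Finset (Fin n)).offDiag,
        (if x p.1 ≠ x p.2 ∧ f x ≠ maj n x then (1:ℝ) else 0)) ≤ M * ((m^2-1)/2) := by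
      have hone : ∀ x ∈ E, (∑ p ∈ (univ : Finset (Fin n)).offDiag,
          (if x p.1 ≠ x p.2 ∧ f x ≠ maj n x then (1:ℝ) else 0)) ≤ (m^2-1)/2 := by
        intro x hx
        rw [hmemE] at hx
        have hiff : ∀ p : Fin n × Fin n,
            (if x p.1 ≠ x p.2 ∧ f x ≠ maj n x then (1:ℝ) else 0)
            = (if x p.1 ≠ x p.2 then (1:ℝ) else 0) := by
          intro p; simp [hx]
        rw [Finset.sum_congr rfl (fun p _ => hiff p)]
        exact aux_cnt_le x (habs x)
      calc ∑ x ∈ E, (∑ p ∈ (univ : Finset (Fin n)).offDiag,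
            (if x p.1 ≠ x p.2 ∧ f x ≠ maj n x then (1:ℝ) else 0))
          ≤ ∑ _x ∈ E, (m^2-1)/2 := Finset.sum_le_sum hone
        _ = M * ((m^2-1)/2) := by rw [Finset.sum_const, hMdef]; simp [nsmul_eq_mul]
    calc ∑ x : Fin n → Bool, (∑ p ∈ (univ : Finset (Fin n)).offDiag,
          (if x p.1 ≠ x p.2 ∧ f x ≠ maj n x then (1:ℝ) else 0))
        = ∑ x ∈ E, (∑ p ∈ (univ : Finset (Fin n)).offDiag,
            (if x p.1 ≠ x p.2 ∧ f x ≠ maj n x then (1:ℝ) else 0)) := by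
          rw [← hsplit, hz, add_zero]
      _ ≤ M * ((m^2-1)/2) := hbound
  -- degree-2 sum bound
  have hS2 : (c/2^n) * ((m-1)*A - M*((m^2-1)/2))
      ≤ ∑ S ∈ univ.filter (fun S : Finset (Fin n) => S.card = 2), G S := by
    have hsum_eq : ∑ p ∈ (univ : Finset (Fin n)).offDiag,
        ((c/(4*2^(n-1))) * (∑ x : Fin n → Bool, (chi (x p.1) + chi (x p.2)) * (maj n x - f x))
          - (c/2^(n-1)) * ((univ.filter
              (fun x : Fin n → Bool => x p.1 ≠ x p.2 ∧ f x ≠ maj n x)).card : ℝ))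
        = (c/(4*2^(n-1))) * ((2*m-2)*(2*A))
          - (c/2^(n-1)) * (∑ p ∈ (univ : Finset (Fin n)).offDiag,
              ((univ.filter (fun x : Fin n → Bool => x p.1 ≠ x p.2 ∧ f x ≠ maj n x)).card : ℝ)) := by
      rw [Finset.sum_sub_distrib, ← Finset.mul_sum, ← Finset.mul_sum, hNum]
    have hVEmul : (c/2^(n-1)) * (∑ p ∈ (univ : Finset (Fin n)).offDiag,
          ((univ.filter (fun x : Fin n → Bool => x p.1 ≠ x p.2 ∧ f x ≠ maj n x)).card : ℝ))
        ≤ (c/2^(n-1)) * (M * ((m^2-1)/2)) :=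
      mul_le_mul_of_nonneg_left hVE (by positivity)
    have hkey : (c/(4*2^(n-1))) * ((2*m-2)*(2*A)) - (c/2^(n-1)) * (M*((m^2-1)/2))
        = 2 * ((c/2^n) * ((m-1)*A - M*((m^2-1)/2))) := by
      rw [hpowR]; field_simp; ring
    nlinarith [hpair_lhs, hsum_eq, hVEmul, hkey]
  -- k ≥ 3 part
  have hchoosecard : ∀ k : ℕ,
      (univ.filter (fun S : Finset (Fin n) => S.card = k)).card = n.choose k := by
    intro k
    have hpc : univ.filter (fun S : Finset (Fin n) => S.card = k)
        = Finset.powersetCard k univ := by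
      ext S; simp [Finset.mem_powersetCard]
    rw [hpc, Finset.card_powersetCard, Finset.card_univ, Fintype.card_fin]
  have hSk : ∀ k ∈ Finset.Icc 3 n,
      (n.choose k : ℝ) * (-2 * c * (M / 2^n))
        ≤ ∑ S ∈ univ.filter (fun S : Finset (Fin n) => S.card = k), G S := by
    intro k hk
    rw [Finset.mem_Icc] at hk
    have hb := Finset.card_nsmul_le_sum
      (univ.filter (fun S : Finset (Fin n) => S.card = k)) G (-2 * c * (M / 2^n))
      (fun S hS => by
        refine hG3 S ?_
        simp only [Finset.mem_filter] at hS
        exact hS.2 ▸ hk.1)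
    rwa [hchoosecard, nsmul_eq_mul] at hb
  have hneg : -(2*c*(M/2^n)) ≤ 0 := by
    have : (0:ℝ) ≤ 2*c*(M/2^n) := by positivity
    linarith
  have htail : (-(2*c*(M/2^n))) * ((n.choose 3 : ℝ) * q^3)
      ≤ ∑ k ∈ Finset.Icc 3 n, q^k * (1-q)^(n-k) *
          ∑ S ∈ univ.filter (fun S : Finset (Fin n) => S.card = k), G S := by
    have hstep1 : ∀ k ∈ Finset.Icc 3 n,
        q^k*(1-q)^(n-k) * ((n.choose k : ℝ) * (-2 * c * (M / 2^n)))
        ≤ q^k*(1-q)^(n-k) *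
            ∑ S ∈ univ.filter (fun S : Finset (Fin n) => S.card = k), G S :=
      fun k hk => mul_le_mul_of_nonneg_left (hSk k hk)
        (mul_nonneg (pow_nonneg hq0.le _) (pow_nonneg h1q.le _))
    calc (-(2*c*(M/2^n))) * ((n.choose 3 : ℝ) * q^3)
        ≤ (-(2*c*(M/2^n))) * (∑ k ∈ Finset.Icc 3 n,
            (n.choose k : ℝ) * (q^k * (1-q)^(n-k))) :=
          mul_le_mul_of_nonpos_left (aux_binom_tail n q hq0.le hql.le (by omega)) hneg
      _ = ∑ k ∈ Finset.Icc 3 n, q^k*(1-q)^(n-k) * ((n.choose k : ℝ) * (-2 * c * (M / 2^n))) := by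
          rw [Finset.mul_sum]; exact Finset.sum_congr rfl (fun k _ => by ring)
      _ ≤ _ := Finset.sum_le_sum hstep1
  -- split the sum
  have hIcc : Finset.Icc 1 n = insert 1 (insert 2 (Finset.Icc 3 n)) := by
    ext r; simp only [Finset.mem_Icc, Finset.mem_insert]; omega
  have hmem1 : (1:ℕ) ∉ insert 2 (Finset.Icc 3 n) := by
    simp only [Finset.mem_insert, Finset.mem_Icc]
    push_neg
    exact ⟨by norm_num, fun h => by omega⟩
  have hmem2 : (2:ℕ) ∉ Finset.Icc 3 n := by
    simp only [Finset.mem_Icc]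
    push_neg
    intro h; omega
  rw [hIcc, Finset.sum_insert hmem1, Finset.sum_insert hmem2]
  -- casts and analytic bounds
  have hc1 : ((n-1 : ℕ) : ℝ) = m - 1 := by rw [hmdef, Nat.cast_sub hn1, Nat.cast_one]
  have hBern : 1 - (m-1)*q ≤ (1-q)^(n-1) := by
    have hb := one_add_mul_le_pow (a := -q) (by linarith) (n-1)
    calc 1 - (m-1)*q = 1 + ((n-1:ℕ):ℝ)*(-q) := by rw [hc1]; ring
      _ ≤ (1 + -q)^(n-1) := hb
      _ = (1-q)^(n-1) := by rw [← sub_eq_add_neg]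
  have hW2le1 : (1-q)^(n-2) ≤ 1 := pow_le_one₀ h1q.le (by linarith)
  have hch3 : (n.choose 3 : ℝ) ≤ m^3/6 := by
    have hcp := Nat.choose_le_pow_div 3 n (α := ℝ)
    have h6 : ((Nat.factorial 3 : ℕ) : ℝ) = 6 := by norm_num [Nat.factorial]
    rw [hmdef]
    calc ((n.choose 3 : ℕ) : ℝ) ≤ (n:ℝ)^3 / ((Nat.factorial 3 : ℕ) : ℝ) := hcp
      _ = (n:ℝ)^3/6 := by rw [h6]
  have hcP : (0:ℝ) < c/2^n := div_pos hc hP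
  have hcore := aux_core_ineq m q A M ((1-q)^(n-1)) ((1-q)^(n-2)) hmR hq0 hM1 hMA hBern
    (pow_nonneg h1q.le _) (pow_nonneg h1q.le _) hW2le1
  have hfp := aux_final_poly m q hmR hq0 hqD
  -- three pieces
  have t1 : q^1*(1-q)^(n-1) * (∑ S ∈ univ.filter (fun S : Finset (Fin n) => S.card = 1), G S)
      = (c/2^n)*(2*q*(1-q)^(n-1)*A) := by rw [hS1]; ring
  have t2 : (c/2^n)*(q^2*(1-q)^(n-2)*((m-1)*A - M*((m^2-1)/2)))
      ≤ q^2*(1-q)^(n-2) * (∑ S ∈ univ.filter (fun S : Finset (Fin n) => S.card = 2), G S) := by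
    calc (c/2^n)*(q^2*(1-q)^(n-2)*((m-1)*A - M*((m^2-1)/2)))
        = q^2*(1-q)^(n-2) * ((c/2^n)*((m-1)*A - M*((m^2-1)/2))) := by ring
      _ ≤ _ := mul_le_mul_of_nonneg_left hS2
          (mul_nonneg (pow_nonneg hq0.le _) (pow_nonneg h1q.le _))
  have t3 : (c/2^n) * (-(M*m^3*q^3/3))
      ≤ ∑ k ∈ Finset.Icc 3 n, q^k * (1-q)^(n-k) *
          ∑ S ∈ univ.filter (fun S : Finset (Fin n) => S.card = k), G S := by
    calc (c/2^n) * (-(M*m^3*q^3/3))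
        = (-(2*c*(M/2^n))) * ((m^3/6) * q^3) := by ring
      _ ≤ (-(2*c*(M/2^n))) * ((n.choose 3:ℝ) * q^3) :=
          mul_le_mul_of_nonpos_left
            (mul_le_mul_of_nonneg_right hch3 (pow_nonneg hq0.le 3)) hneg
      _ ≤ _ := htail
  -- final combination
  have hring : (c/2^n)*(2*q*(1-q)^(n-1)*A)
      + (c/2^n)*(q^2*(1-q)^(n-2)*((m-1)*A - M*((m^2-1)/2)))
      + (c/2^n)*(-(M*m^3*q^3/3))
      = (c/2^n) * (2*q*((1-q)^(n-1))*A
          + q^2*((1-q)^(n-2))*((m-1)*A - M*(m^2-1)/2) - M*m^3*q^3/3) := by ring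
  have hlow := mul_le_mul_of_nonneg_left hcore hcP.le
  have hMpos : (0:ℝ) < M := lt_of_lt_of_le one_pos hM1
  have hposfinal : (0:ℝ) < (c/2^n) * (M * (q * (2 - 2*(m-1)*q - q*(m-1)^2/2 - m^3*q^2/3))) :=
    mul_pos hcP (mul_pos hMpos (mul_pos hq0 hfp))
  linarith [t1, t2, t3, hring, hlow, hposfinal]
end
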